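/- arXiv:math/9201305 — 5 statements merged into one kernel-verified Lean document; each statement's English description precedes it below -/
import Mathlib

section
/- In any domino tiling of the Aztec diamond of order n, the number of vertical dominoes is even (and likewise the number of horizontal dominoes is even). -/
/-- The lattice unit square `[a,a+1] × [b,b+1]` with lower-left corner `c = (a,b)`
lies inside the region `{(x,y) : |x|+|y| ≤ n+1}`, i.e. it is a cell of the
Aztec diamond of order `n`. -/
def AztecCell (n : ℕ) (c : ℤ × ℤ) : Prop :=
  max |c.1| |c.1 + 1| + max |c.2| |c.2 + 1| ≤ (n : ℤ) + 1

/-- A domino, encoded by its lower-left cell together with its orientation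
(`true` = horizontal `2×1`, `false` = vertical `1×2`). -/
abbrev Domino := (ℤ × ℤ) × Bool

/-- The two cells covered by a domino. -/
def dominoCells (d : Domino) : Set (ℤ × ℤ) :=
  if d.2 then {d.1, (d.1.1 + 1, d.1.2)} else {d.1, (d.1.1, d.1.2 + 1)}

/-- `T` is a domino tiling of the Aztec diamond of order `n`: every domino of `T`
lies inside the diamond and every cell of the diamond is covered by exactly one
domino of `T`. -/
def IsTiling (n : ℕ) (T : Set Domino) : Prop :=
  (∀ d ∈ T, ∀ c ∈ dominoCells d, AztecCell n c) ∧
  (∀ c, AztecCell n c → ∃! d, d ∈ T ∧ c ∈ dominoCells d)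

open Finset

instance (n : ℕ) (c : ℤ × ℤ) : Decidable (AztecCell n c) := by
  unfold AztecCell; infer_instance

lemma aztec_bound {n : ℕ} {c : ℤ × ℤ} (h : AztecCell n c) :
    |c.1| ≤ (n : ℤ) + 1 ∧ |c.2| ≤ (n : ℤ) + 1 := by
  unfold AztecCell at h
  have h1 : |c.1| ≤ max |c.1| |c.1 + 1| := le_max_left _ _
  have h2 : |c.2| ≤ max |c.2| |c.2 + 1| := le_max_left _ _
  have h3 : (0:ℤ) ≤ max |c.1| |c.1 + 1| := le_trans (abs_nonneg _) h1
  have h4 : (0:ℤ) ≤ max |c.2| |c.2 + 1| := le_trans (abs_nonneg _) h2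
  constructor <;> linarith

lemma aztec_swap {n : ℕ} {c : ℤ × ℤ} (h : AztecCell n c) : AztecCell n (c.2, c.1) := by
  unfold AztecCell at *; dsimp only; linarith

lemma aztec_reflect {n : ℕ} {a b : ℤ} (h : AztecCell n (a, b)) : AztecCell n (a, -1 - b) := by
  unfold AztecCell at *
  have e1 : |(-1 : ℤ) - b| = |b + 1| := by rw [show (-1:ℤ) - b = -(b+1) by ring, abs_neg]
  have e2 : |(-1 : ℤ) - b + 1| = |b| := by rw [show (-1:ℤ) - b + 1 = -b by ring, abs_neg]
  dsimp only at *
  rw [e1, e2, max_comm |b + 1| |b|]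
  exact h

lemma lowerleft_mem (d : Domino) : d.1 ∈ dominoCells d := by
  unfold dominoCells; split <;> exact Set.mem_insert _ _

lemma cells_eq (d : Domino) :
    dominoCells d = if d.2 then ({d.1, (d.1.1 + 1, d.1.2)} : Set (ℤ × ℤ))
      else {d.1, (d.1.1, d.1.2 + 1)} := rfl

lemma tiling_finite {n : ℕ} {T : Set Domino} (hT : IsTiling n T) : T.Finite := by
  have hfin : {c : ℤ × ℤ | AztecCell n c}.Finite := by
    apply Set.Finite.subset
      ((Finset.Icc (-(n:ℤ)-1) ((n:ℤ)+1) ×ˢ Finset.Icc (-(n:ℤ)-1) ((n:ℤ)+1)).finite_toSet)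
    intro c hc
    obtain ⟨h1, h2⟩ := aztec_bound hc
    simp only [Finset.coe_product, Set.mem_prod, Finset.mem_coe, Finset.mem_Icc]
    rw [abs_le] at h1 h2
    constructor <;> omega
  apply Set.Finite.of_finite_image (f := fun d => d.1)
  · apply hfin.subset
    rintro _ ⟨d, hd, rfl⟩
    exact hT.1 d hd _ (lowerleft_mem d)
  · intro d hd d' hd' he
    have h1 : d.1 ∈ dominoCells d := lowerleft_mem d
    have he' : d.1 = d'.1 := he
    have h2 : d.1 ∈ dominoCells d' := by rw [he']; exact lowerleft_mem d'
    have := hT.2 d.1 (hT.1 d hd _ h1)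
    exact this.unique ⟨hd, h1⟩ ⟨hd', h2⟩

lemma horiz_even {n : ℕ} {T : Set Domino} (hT : IsTiling n T) :
    Even {d | d ∈ T ∧ d.2 = true}.ncard := by
  classical
  have hTfin := tiling_finite hT
  set Tf : Finset Domino := hTfin.toFinset with hTf
  -- the finset of aztec cells with even first coordinate
  set box : Finset (ℤ × ℤ) :=
    Finset.Icc (-(n:ℤ)-1) ((n:ℤ)+1) ×ˢ Finset.Icc (-(n:ℤ)-1) ((n:ℤ)+1) with hbox
  set C : Finset (ℤ × ℤ) := box.filter (fun c => AztecCell n c ∧ Even c.1) with hC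
  have memC : ∀ c : ℤ × ℤ, c ∈ C ↔ AztecCell n c ∧ Even c.1 := by
    intro c
    simp only [hC, Finset.mem_filter, and_iff_right_iff_imp]
    rintro ⟨h1, h2⟩
    obtain ⟨b1, b2⟩ := aztec_bound h1
    rw [abs_le] at b1 b2
    simp only [hbox, Finset.mem_product, Finset.mem_Icc]
    constructor <;> omega
  -- C has even cardinality via reflection (a,b) ↦ (a, -1-b)
  have hCeven : Even C.card := by
    have hsplit := Finset.card_filter_add_card_filter_not
      (s := C) (p := fun c => 0 ≤ c.2)
    have hbij : (C.filter (fun c => 0 ≤ c.2)).card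
        = (C.filter (fun c => ¬ 0 ≤ c.2)).card := by
      apply Finset.card_nbij' (i := fun c => (c.1, -1 - c.2)) (j := fun c => (c.1, -1 - c.2))
      · intro c hc
        simp only [Finset.mem_coe, Finset.mem_filter] at hc ⊢
        obtain ⟨hc1, hc2⟩ := hc
        rw [memC] at hc1
        have := aztec_reflect (a := c.1) (b := c.2) (by exact hc1.1)
        exact ⟨(memC _).2 ⟨this, hc1.2⟩, by omega⟩
      · intro c hc
        simp only [Finset.mem_coe, Finset.mem_filter] at hc ⊢
        obtain ⟨hc1, hc2⟩ := hc
        rw [memC] at hc1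
        have := aztec_reflect (a := c.1) (b := c.2) (by exact hc1.1)
        exact ⟨(memC _).2 ⟨this, hc1.2⟩, by omega⟩
      · intro c _; simp
      · intro c _; simp
    rw [← hsplit, hbij]
    exact ⟨_, rfl⟩
  -- the covering function
  have hcov : ∀ c : ℤ × ℤ, AztecCell n c → ∃ d, d ∈ T ∧ c ∈ dominoCells d :=
    fun c h => (hT.2 c h).exists
  set f : ℤ × ℤ → Domino := fun c =>
    if h : AztecCell n c then (hcov c h).choose else default with hf
  have hf1 : ∀ c, AztecCell n c → f c ∈ T ∧ c ∈ dominoCells (f c) := by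
    intro c h
    simp only [hf, dif_pos h]
    exact (hcov c h).choose_spec
  have hf2 : ∀ c, AztecCell n c → ∀ d ∈ T, (f c = d ↔ c ∈ dominoCells d) := by
    intro c h d hd
    constructor
    · rintro rfl; exact (hf1 c h).2
    · intro hcd
      exact (hT.2 c h).unique ⟨(hf1 c h).1, (hf1 c h).2⟩ ⟨hd, hcd⟩
  have hmap : ∀ c ∈ C, f c ∈ Tf := by
    intro c hc
    rw [memC] at hc
    simp only [hTf, Set.Finite.mem_toFinset]
    exact (hf1 c hc.1).1
  have hcount := Finset.card_eq_sum_card_fiberwise hmap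
  -- fiber parity
  have hfiber : ∀ d ∈ Tf, ((C.filter (fun c => f c = d)).card : ZMod 2)
      = if d.2 then 1 else 0 := by
    intro d hd
    simp only [hTf, Set.Finite.mem_toFinset] at hd
    have hp : AztecCell n d.1 := hT.1 d hd _ (lowerleft_mem d)
    have hmem : ∀ c, c ∈ C.filter (fun c => f c = d) ↔
        (AztecCell n c ∧ Even c.1) ∧ c ∈ dominoCells d := by
      intro c
      simp only [Finset.mem_filter, memC]
      constructor
      · rintro ⟨hc, hfc⟩
        exact ⟨hc, (hf2 c hc.1 d hd).1 hfc⟩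
      · rintro ⟨hc, hcd⟩
        exact ⟨hc, (hf2 c hc.1 d hd).2 hcd⟩
    obtain ⟨⟨a, b⟩, o⟩ := d
    cases o with
    | true =>
      -- horizontal: cells (a,b), (a+1,b); exactly one has even first coord
      have hq : AztecCell n (a + 1, b) := hT.1 _ hd _ (by
        simp [dominoCells])
      have hcells : dominoCells ((a, b), true) = {((a:ℤ), b), (a+1, b)} := by
        simp [dominoCells]
      simp only [if_pos rfl] -- goal: card = 1
      rw [show ((1 : ZMod 2)) = ((1 : ℕ) : ZMod 2) by norm_num]
      congr 1
      rw [Finset.card_eq_one]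
      by_cases he : Even a
      · refine ⟨(a, b), ?_⟩
        ext c
        rw [hmem, Finset.mem_singleton, hcells]
        constructor
        · rintro ⟨⟨_, hev⟩, hc⟩
          rcases hc with h | h
          · exact h
          · exfalso
            rw [h] at hev
            simp only at hev
            rw [Int.even_add_one] at hev
            exact hev he
        · rintro rfl
          exact ⟨⟨hp, he⟩, Or.inl rfl⟩
      · refine ⟨(a + 1, b), ?_⟩
        ext c
        rw [hmem, Finset.mem_singleton, hcells]
        constructor
        · rintro ⟨⟨_, hev⟩, hc⟩
          rcases hc with h | h
          · exfalso
            rw [h] at hev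
            simp only at hev
            exact he hev
          · exact h
        · rintro rfl
          refine ⟨⟨hq, ?_⟩, Or.inr rfl⟩
          rw [Int.even_add_one]; simpa using he
    | false =>
      -- vertical: cells (a,b), (a,b+1): fiber is {both} or ∅
      have hq : AztecCell n (a, b + 1) := hT.1 _ hd _ (by
        simp [dominoCells])
      have hcells : dominoCells ((a, b), false) = {((a:ℤ), b), (a, b+1)} := by
        simp [dominoCells]
      simp only [Bool.false_eq_true, if_false]
      have : Even (C.filter (fun c => f c = ((a, b), false))).card := by
        by_cases he : Even a
        · have : C.filter (fun c => f c = ((a, b), false)) = {((a:ℤ), b), (a, b+1)} := by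
            ext c
            rw [hmem, hcells]
            simp only [Finset.mem_insert, Finset.mem_singleton]
            constructor
            · rintro ⟨_, hc⟩; exact hc
            · rintro (rfl | rfl)
              · exact ⟨⟨hp, he⟩, Or.inl rfl⟩
              · exact ⟨⟨hq, he⟩, Or.inr rfl⟩
          rw [this, Finset.card_insert_of_notMem (by simp), Finset.card_singleton]
          exact ⟨1, rfl⟩
        · have : C.filter (fun c => f c = ((a, b), false)) = ∅ := by
            ext c
            rw [hmem, hcells]
            simp only [Finset.notMem_empty, iff_false]
            rintro ⟨⟨_, hev⟩, (rfl | rfl)⟩ <;> exact he hev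
          rw [this, Finset.card_empty]
          exact Even.zero
      rw [ZMod.natCast_eq_zero_iff]
      exact this.two_dvd
  -- put it together in ZMod 2
  have key : ((Tf.filter (fun d => d.2 = true)).card : ZMod 2) = 0 := by
    have h1 : ((C.card : ZMod 2)) = 0 := by
      rw [ZMod.natCast_eq_zero_iff]
      exact hCeven.two_dvd
    calc ((Tf.filter (fun d => d.2 = true)).card : ZMod 2)
        = ∑ d ∈ Tf, if d.2 = true then (1 : ZMod 2) else 0 := by
          rw [Finset.sum_boole]
      _ = ∑ d ∈ Tf, ((C.filter (fun c => f c = d)).card : ZMod 2) := by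
          apply Finset.sum_congr rfl
          intro d hd
          rw [hfiber d hd]
      _ = ((C.card : ZMod 2)) := by rw [hcount]; push_cast; rfl
      _ = 0 := h1
  have : {d | d ∈ T ∧ d.2 = true} = ↑(Tf.filter (fun d => d.2 = true)) := by
    ext d
    simp [hTf]
  rw [this, Set.ncard_coe_finset]
  rw [ZMod.natCast_eq_zero_iff] at key
  exact even_iff_two_dvd.2 key

def flipD (d : Domino) : Domino := ((d.1.2, d.1.1), !d.2)

lemma flipD_invol : Function.Involutive flipD := by
  intro d; simp [flipD]

lemma cells_flip (d : Domino) (c : ℤ × ℤ) :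
    c ∈ dominoCells (flipD d) ↔ (c.2, c.1) ∈ dominoCells d := by
  obtain ⟨⟨a, b⟩, o⟩ := d
  obtain ⟨x, y⟩ := c
  cases o <;> simp [dominoCells, flipD, Prod.ext_iff] <;> tauto

lemma isTiling_flip {n : ℕ} {T : Set Domino} (hT : IsTiling n T) :
    IsTiling n (flipD '' T) := by
  constructor
  · rintro d ⟨e, he, rfl⟩ ⟨x, y⟩ hc
    rw [cells_flip] at hc
    dsimp only at hc
    have h1 : AztecCell n (y, x) := hT.1 e he _ hc
    have h2 := aztec_swap h1
    exact h2
  · intro c hc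
    have hc' : AztecCell n (c.2, c.1) := aztec_swap hc
    obtain ⟨d, ⟨hdT, hdc⟩, huniq⟩ := hT.2 _ hc'
    refine ⟨flipD d, ⟨⟨d, hdT, rfl⟩, ?_⟩, ?_⟩
    · rw [cells_flip]; exact hdc
    · rintro d' ⟨⟨e, heT, rfl⟩, hce⟩
      rw [cells_flip] at hce
      rw [huniq e ⟨heT, hce⟩]


/-- In any domino tiling of the Aztec diamond of order `n`, the number of vertical
dominoes is even, and likewise the number of horizontal dominoes is even. -/
theorem aztec_vertical_even (n : ℕ) (T : Set Domino) (hT : IsTiling n T) :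
    Even {d | d ∈ T ∧ d.2 = false}.ncard ∧ Even {d | d ∈ T ∧ d.2 = true}.ncard := by
  refine ⟨?_, horiz_even hT⟩
  have h2 := horiz_even (isTiling_flip hT)
  have hset : {d | d ∈ flipD '' T ∧ d.2 = true} = flipD '' {d | d ∈ T ∧ d.2 = false} := by
    ext d
    constructor
    · rintro ⟨⟨e, he, rfl⟩, hh⟩
      exact ⟨e, ⟨he, by simpa [flipD] using hh⟩, rfl⟩
    · rintro ⟨e, ⟨he, hv⟩, rfl⟩
      exact ⟨⟨e, he, rfl⟩, by simp [flipD, hv]⟩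
  rw [hset, Set.ncard_image_of_injective _ flipD_invol.injective] at h2
  exact h2
end

section
/- For any tiling T of the Aztec diamond of order n, there is a unique height function H_T on the vertex set G = {(a,b) ∈ ℤ² : |a|+|b| ≤ n+1} such that H_T((-n-1,0)) = 0 and whenever an edge uv (with standard orientation u → v) lies on the boundary of a tile of the extended tiling T⁺, then H_T(v) = H_T(u) + 1. -/
/-- Vertices of the grid graph `G` of the order-`n` Aztec diamond:
`{(a,b) ∈ ℤ² : |a|+|b| ≤ n+1}`. -/
def AztecVertex (n : ℕ) (v : ℤ × ℤ) : Prop :=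
  |v.1| + |v.2| ≤ (n : ℤ) + 1

/-- The standard orientation of the unit edges of the grid, determined by the
standard (even) checkerboard coloring in which the cell `[a,a+1]×[b,b+1]` is
white exactly when `a + b ≡ n (mod 2)`: each edge is oriented so that a black
cell lies to its left.  Concretely, a vertex `u` with `u.1 + u.2 + n` odd has
both horizontal edges outgoing, and a vertex with `u.1 + u.2 + n` even has both
vertical edges outgoing. -/
def StdArrow (n : ℕ) (u v : ℤ × ℤ) : Prop :=
  ((u.1 + u.2 + n) % 2 = 1 ∧ v.2 = u.2 ∧ (v.1 = u.1 + 1 ∨ v.1 = u.1 - 1)) ∨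
  ((u.1 + u.2 + n) % 2 = 0 ∧ v.1 = u.1 ∧ (v.2 = u.2 + 1 ∨ v.2 = u.2 - 1))

/-- The extension `T⁺` of a tiling `T` of the order-`n` Aztec diamond to the whole
plane: the complement of the diamond is tiled by horizontal dominoes in the fixed
standard brick pattern (continuing the pattern of the all-horizontals tiling). -/
def extTiling (n : ℕ) (T : Set Domino) : Set Domino :=
  T ∪ {d | d.2 = true ∧ ¬ AztecCell n d.1 ∧ ¬ AztecCell n (d.1.1 + 1, d.1.2) ∧
        (d.1.1 + d.1.2 + n) % 2 = (if 0 ≤ d.1.2 then 0 else 1)}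

/-- The lattice points lying on (the closed rectangle of) a domino `d`. -/
def dominoVertices (d : Domino) : Set (ℤ × ℤ) :=
  {v | d.1.1 ≤ v.1 ∧ v.1 ≤ d.1.1 + (if d.2 then 2 else 1) ∧
       d.1.2 ≤ v.2 ∧ v.2 ≤ d.1.2 + (if d.2 then 1 else 2)}

/-- The unit edge `{u,v}` lies on the boundary of the domino `d` (it joins two
lattice points of `d` and is not the middle edge bisecting `d`). -/
def EdgeOnBoundary (d : Domino) (u v : ℤ × ℤ) : Prop :=
  |u.1 - v.1| + |u.2 - v.2| = 1 ∧ u ∈ dominoVertices d ∧ v ∈ dominoVertices d ∧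
  (d.2 = true → ¬(u.1 = d.1.1 + 1 ∧ v.1 = d.1.1 + 1)) ∧
  (d.2 = false → ¬(u.2 = d.1.2 + 1 ∧ v.2 = d.1.2 + 1))

/-- `H` is the height function of the tiling `T` of the order-`n` Aztec diamond:
`H` is supported on the vertex set `G`, takes the value `0` at the leftmost
vertex `(-n-1, 0)`, and increases by `1` along every standardly oriented edge
`u → v` of `G` lying on the boundary of a tile of the extended tiling `T⁺`. -/
def IsHeightOf (n : ℕ) (T : Set Domino) (H : ℤ × ℤ → ℤ) : Prop :=
  (∀ v, ¬ AztecVertex n v → H v = 0) ∧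
  H (-(n : ℤ) - 1, 0) = 0 ∧
  ∀ u v, AztecVertex n u → AztecVertex n v → StdArrow n u v →
    (∃ d ∈ extTiling n T, EdgeOnBoundary d u v) → H v = H u + 1

-- basic iff lemmas
lemma abs_ite_int (x : ℤ) : |x| = if 0 ≤ x then x else -x := by
  split_ifs with h
  · exact abs_of_nonneg h
  · exact abs_of_neg (by omega)

lemma aztec_iff (n : ℕ) (x y : ℤ) :
    AztecCell n (x, y) ↔ (if 0 ≤ x then x + 1 else -x) + (if 0 ≤ y then y + 1 else -y) ≤ (n : ℤ) + 1 := by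
  unfold AztecCell
  have hx : max |x| |x + 1| = if 0 ≤ x then x + 1 else -x := by
    rcases le_or_gt 0 x with h | h
    · rw [abs_of_nonneg h, abs_of_nonneg (by omega), if_pos h]; omega
    · rw [abs_of_neg h, if_neg (by omega)]
      rcases le_or_gt 0 (x+1) with h2 | h2
      · rw [abs_of_nonneg h2]; omega
      · rw [abs_of_neg h2]; omega
  have hy : max |y| |y + 1| = if 0 ≤ y then y + 1 else -y := by
    rcases le_or_gt 0 y with h | h
    · rw [abs_of_nonneg h, abs_of_nonneg (by omega), if_pos h]; omega
    · rw [abs_of_neg h, if_neg (by omega)]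
      rcases le_or_gt 0 (y+1) with h2 | h2
      · rw [abs_of_nonneg h2]; omega
      · rw [abs_of_neg h2]; omega
  rw [hx, hy]

lemma vertex_iff (n : ℕ) (x y : ℤ) :
    AztecVertex n (x, y) ↔ (if 0 ≤ x then x else -x) + (if 0 ≤ y then y else -y) ≤ (n : ℤ) + 1 := by
  unfold AztecVertex
  rw [abs_ite_int, abs_ite_int]

-- complement claims
lemma claimP (n : ℕ) (x y : ℤ) (h : ¬ AztecCell n (x, y))
    (hp : (x + y + n) % 2 = (if 0 ≤ y then 0 else 1)) : ¬ AztecCell n (x + 1, y) := by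
  rw [aztec_iff] at h ⊢
  split_ifs at h hp ⊢ <;> omega

lemma claimQ (n : ℕ) (x y : ℤ) (h : ¬ AztecCell n (x, y))
    (hp : ¬ (x + y + n) % 2 = (if 0 ≤ y then 0 else 1)) : ¬ AztecCell n (x - 1, y) := by
  rw [aztec_iff] at h ⊢
  split_ifs at h hp ⊢ <;> omega

lemma cells_iff (d : Domino) (c : ℤ × ℤ) :
    c ∈ dominoCells d ↔ (c = d.1 ∨ (d.2 = true ∧ c = (d.1.1 + 1, d.1.2)) ∨ (d.2 = false ∧ c = (d.1.1, d.1.2 + 1))) := by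
  unfold dominoCells
  cases hb : d.2 <;> simp [Set.mem_insert_iff] <;> tauto

lemma brick_parity (n : ℕ) (d : Domino)
    (hd : d ∈ extTiling n T) (hdT : d ∉ T) :
    d.2 = true ∧ ¬ AztecCell n d.1 ∧ ¬ AztecCell n (d.1.1 + 1, d.1.2) ∧
      (d.1.1 + d.1.2 + n) % 2 = (if 0 ≤ d.1.2 then 0 else 1) := by
  rcases hd with h | h
  · exact absurd h hdT
  · exact h

lemma cell_of_brickset (n : ℕ) (d : Domino)
    (h : d.2 = true ∧ ¬ AztecCell n d.1 ∧ ¬ AztecCell n (d.1.1 + 1, d.1.2) ∧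
      (d.1.1 + d.1.2 + (n:ℤ)) % 2 = (if 0 ≤ d.1.2 then 0 else 1))
    (c : ℤ × ℤ) (hc : c ∈ dominoCells d) : ¬ AztecCell n c := by
  obtain ⟨hb, h1, h2, _⟩ := h
  rw [cells_iff] at hc
  rcases hc with rfl | ⟨_, rfl⟩ | ⟨hf, _⟩
  · exact h1
  · exact h2
  · rw [hb] at hf; exact absurd hf (by simp)

lemma cover_unique (n : ℕ) (T : Set Domino) (hT : IsTiling n T) (d d' : Domino)
    (hd : d ∈ extTiling n T) (hd' : d' ∈ extTiling n T) (c : ℤ × ℤ)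
    (hc : c ∈ dominoCells d) (hc' : c ∈ dominoCells d') : d = d' := by
  by_cases hcA : AztecCell n c
  · have hdT : d ∈ T := hd.resolve_right (fun h => cell_of_brickset n d h c hc hcA)
    have hdT' : d' ∈ T := hd'.resolve_right (fun h => cell_of_brickset n d' h c hc' hcA)
    exact ExistsUnique.unique (hT.2 c hcA) ⟨hdT, hc⟩ ⟨hdT', hc'⟩
  · have hdB : d ∈ _ := hd.resolve_left (fun h => hcA (hT.1 d h c hc))
    have hdB' : d' ∈ _ := hd'.resolve_left (fun h => hcA (hT.1 d' h c hc'))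
    obtain ⟨hb, _, _, hp⟩ := hdB
    obtain ⟨hb', _, _, hp'⟩ := hdB'
    rw [cells_iff] at hc hc'
    obtain ⟨⟨p, q⟩, s⟩ := d
    obtain ⟨⟨p', q'⟩, s'⟩ := d'
    simp only at hb hb' hp hp' hc hc'
    subst hb hb'
    simp only [true_and, false_and, or_false, Prod.mk.injEq] at hc hc'
    have hq : q = c.2 ∧ (p = c.1 ∨ p = c.1 - 1) := by
      rcases hc with rfl | ⟨h1, h2⟩ <;> simp_all <;> omega
    have hq' : q' = c.2 ∧ (p' = c.1 ∨ p' = c.1 - 1) := by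
      rcases hc' with rfl | ⟨h1, h2⟩ <;> simp_all <;> omega
    have : p = p' ∧ q = q' := by
      obtain ⟨e1, e2⟩ := hq; obtain ⟨e1', e2'⟩ := hq'
      subst e1; subst e1'
      split_ifs at hp hp' <;> omega
    simp [this.1, this.2]

lemma cover_exists (n : ℕ) (T : Set Domino) (hT : IsTiling n T) (c : ℤ × ℤ) :
    ∃ d ∈ extTiling n T, c ∈ dominoCells d := by
  obtain ⟨x, y⟩ := c
  by_cases hc : AztecCell n (x, y)
  · obtain ⟨d, ⟨hdT, hdc⟩, _⟩ := hT.2 _ hc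
    exact ⟨d, Or.inl hdT, hdc⟩
  · by_cases hp : (x + y + n) % 2 = (if 0 ≤ y then 0 else 1)
    · refine ⟨((x, y), true), Or.inr ⟨rfl, hc, claimP n x y hc hp, hp⟩, ?_⟩
      rw [cells_iff]; simp
    · refine ⟨((x - 1, y), true), Or.inr ⟨rfl, claimQ n x y hc hp, ?_, ?_⟩, ?_⟩
      · simpa using hc
      · simp only
        split_ifs at hp ⊢ <;> omega
      · rw [cells_iff]; simp


/-- The edge `u v` is on the boundary of some tile of the extended tiling. -/
def Ebd (n : ℕ) (T : Set Domino) (u v : ℤ × ℤ) : Prop :=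
  ∃ d ∈ extTiling n T, EdgeOnBoundary d u v

lemma EdgeOnBoundary_symm {d : Domino} {u v : ℤ × ℤ} (h : EdgeOnBoundary d u v) :
    EdgeOnBoundary d v u := by
  obtain ⟨h1, h2, h3, h4, h5⟩ := h
  refine ⟨by rw [abs_sub_comm v.1 u.1, abs_sub_comm v.2 u.2]; exact h1, h3, h2, ?_, ?_⟩
  · intro hb hc; exact h4 hb ⟨hc.2, hc.1⟩
  · intro hb hc; exact h5 hb ⟨hc.2, hc.1⟩

lemma Ebd_symm {n : ℕ} {T : Set Domino} {u v : ℤ × ℤ} (h : Ebd n T u v) : Ebd n T v u := by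
  obtain ⟨d, hd, he⟩ := h
  exact ⟨d, hd, EdgeOnBoundary_symm he⟩

lemma stdBot (n : ℕ) (a b : ℤ) : StdArrow n (a, b) (a + 1, b) ↔ (a + b + n) % 2 = 1 := by
  dsimp only [StdArrow]; constructor <;> intro h <;> [skip; left] <;> omega

lemma stdTop (n : ℕ) (a b : ℤ) : StdArrow n (a, b + 1) (a + 1, b + 1) ↔ (a + b + n) % 2 = 0 := by
  dsimp only [StdArrow]; constructor <;> intro h <;> [skip; left] <;> omega

lemma stdLeft (n : ℕ) (a b : ℤ) : StdArrow n (a, b) (a, b + 1) ↔ (a + b + n) % 2 = 0 := by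
  dsimp only [StdArrow]; constructor <;> intro h <;> [skip; right] <;> omega

lemma stdRight (n : ℕ) (a b : ℤ) : StdArrow n (a + 1, b) (a + 1, b + 1) ↔ (a + b + n) % 2 = 1 := by
  dsimp only [StdArrow]; constructor <;> intro h <;> [skip; right] <;> omega

lemma mem_vert_iff (r s : ℤ) (t : Bool) (x y : ℤ) :
    (x, y) ∈ dominoVertices ((r, s), t) ↔
      r ≤ x ∧ x ≤ r + (if t then 2 else 1) ∧ s ≤ y ∧ y ≤ s + (if t then 1 else 2) := by
  rfl

lemma nonmidH (n : ℕ) (T : Set Domino) (hT : IsTiling n T) (p q : ℤ)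
    (hd : ((p, q), true) ∈ extTiling n T) : ¬ Ebd n T (p + 1, q) (p + 1, q + 1) := by
  rintro ⟨⟨⟨r, s⟩, t⟩, hd', h1, h2, h3, h4, h5⟩
  rw [mem_vert_iff] at h2 h3
  cases t with
  | true =>
    simp only [if_true] at h2 h3
    have hs : s = q := by omega
    have hr : r = p - 1 ∨ r = p ∨ r = p + 1 := by omega
    have key : ((r, s), true) = (((p, q), true) : Domino) := by
      rcases hr with hr | hr | hr
      · refine cover_unique n T hT _ _ hd' hd (p, q) ?_ ?_ <;>
          (rw [cells_iff]; simp [Prod.ext_iff] <;> omega)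
      · refine cover_unique n T hT _ _ hd' hd (p, q) ?_ ?_ <;>
          (rw [cells_iff]; simp [Prod.ext_iff] <;> omega)
      · refine cover_unique n T hT _ _ hd' hd (p + 1, q) ?_ ?_ <;>
          (rw [cells_iff]; simp [Prod.ext_iff] <;> omega)
    have hrp : r = p := by simpa using congrArg (fun d : Domino => d.1.1) key
    exact h4 rfl ⟨show (p+1:ℤ) = r + 1 by omega, show (p+1:ℤ) = r + 1 by omega⟩
  | false =>
    simp only [Bool.false_eq_true, if_false] at h2 h3
    have hr : r = p ∨ r = p + 1 := by omega
    have hs : s = q - 1 ∨ s = q := by omega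
    have key : ((r, s), false) = (((p, q), true) : Domino) := by
      refine cover_unique n T hT _ _ hd' hd (r, q) ?_ ?_
      · rw [cells_iff]; simp [Prod.ext_iff] <;> omega
      · rw [cells_iff]; simp [Prod.ext_iff] <;> omega
    exact Bool.noConfusion (congrArg Prod.snd key)

lemma nonmidV (n : ℕ) (T : Set Domino) (hT : IsTiling n T) (p q : ℤ)
    (hd : ((p, q), false) ∈ extTiling n T) : ¬ Ebd n T (p, q + 1) (p + 1, q + 1) := by
  rintro ⟨⟨⟨r, s⟩, t⟩, hd', h1, h2, h3, h4, h5⟩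
  rw [mem_vert_iff] at h2 h3
  cases t with
  | true =>
    simp only [if_true] at h2 h3
    have hr : r = p - 1 ∨ r = p := by omega
    have hs : s = q ∨ s = q + 1 := by omega
    have key : ((r, s), true) = (((p, q), false) : Domino) := by
      refine cover_unique n T hT _ _ hd' hd (p, s) ?_ ?_
      · rw [cells_iff]; simp [Prod.ext_iff] <;> omega
      · rw [cells_iff]; simp [Prod.ext_iff] <;> omega
    exact Bool.noConfusion (congrArg Prod.snd key)
  | false =>
    simp only [Bool.false_eq_true, if_false] at h2 h3
    have hr : r = p := by omega
    have hs : s = q - 1 ∨ s = q ∨ s = q + 1 := by omega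
    have key : ((r, s), false) = (((p, q), false) : Domino) := by
      rcases hs with hs | hs | hs
      · refine cover_unique n T hT _ _ hd' hd (p, q) ?_ ?_ <;>
          (rw [cells_iff]; simp [Prod.ext_iff] <;> omega)
      · refine cover_unique n T hT _ _ hd' hd (p, q) ?_ ?_ <;>
          (rw [cells_iff]; simp [Prod.ext_iff] <;> omega)
      · refine cover_unique n T hT _ _ hd' hd (p, q + 1) ?_ ?_ <;>
          (rw [cells_iff]; simp [Prod.ext_iff] <;> omega)
    have hsq : s = q := by simpa using congrArg (fun d : Domino => d.1.2) key
    exact h5 rfl ⟨show (q+1:ℤ) = s + 1 by omega, show (q+1:ℤ) = s + 1 by omega⟩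

open Classical in
noncomputable def wgt (P : Prop) : ℤ := if P then 1 else -3

lemma wgt_pos {P : Prop} (h : P) : wgt P = 1 := by unfold wgt; rw [if_pos h]
lemma wgt_neg {P : Prop} (h : ¬ P) : wgt P = -3 := by unfold wgt; rw [if_neg h]

open Classical in
/-- Signed increment along the directed edge from `u` to `v`. -/
noncomputable def val (n : ℕ) (T : Set Domino) (u v : ℤ × ℤ) : ℤ :=
  (if StdArrow n u v then 1 else -1) * wgt (Ebd n T u v)

lemma val_std {n : ℕ} {T : Set Domino} {u v : ℤ × ℤ} (h : StdArrow n u v) :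
    val n T u v = wgt (Ebd n T u v) := by unfold val; rw [if_pos h]; ring

lemma val_nstd {n : ℕ} {T : Set Domino} {u v : ℤ × ℤ} (h : ¬ StdArrow n u v) :
    val n T u v = - wgt (Ebd n T u v) := by unfold val; rw [if_neg h]; ring

lemma eobH (p q ux uy vx vy : ℤ)
    (h1 : |ux - vx| + |uy - vy| = 1)
    (h2 : p ≤ ux ∧ ux ≤ p + 2 ∧ q ≤ uy ∧ uy ≤ q + 1)
    (h3 : p ≤ vx ∧ vx ≤ p + 2 ∧ q ≤ vy ∧ vy ≤ q + 1)
    (h4 : ¬(ux = p + 1 ∧ vx = p + 1)) :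
    EdgeOnBoundary ((p, q), true) (ux, uy) (vx, vy) := by
  refine ⟨h1, ?_, ?_, fun _ => h4, fun hf => Bool.noConfusion hf⟩
  · rw [mem_vert_iff]; simpa using h2
  · rw [mem_vert_iff]; simpa using h3

lemma eobV (p q ux uy vx vy : ℤ)
    (h1 : |ux - vx| + |uy - vy| = 1)
    (h2 : p ≤ ux ∧ ux ≤ p + 1 ∧ q ≤ uy ∧ uy ≤ q + 2)
    (h3 : p ≤ vx ∧ vx ≤ p + 1 ∧ q ≤ vy ∧ vy ≤ q + 2)
    (h4 : ¬(uy = q + 1 ∧ vy = q + 1)) :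
    EdgeOnBoundary ((p, q), false) (ux, uy) (vx, vy) := by
  refine ⟨h1, ?_, ?_, fun hf => Bool.noConfusion hf, fun _ => h4⟩
  · rw [mem_vert_iff]; simpa using h2
  · rw [mem_vert_iff]; simpa using h3

lemma len_one {x y : ℤ} (h : (x = 1 ∧ y = 0) ∨ (x = -1 ∧ y = 0) ∨ (x = 0 ∧ y = 1) ∨ (x = 0 ∧ y = -1)) :
    |x| + |y| = 1 := by
  rw [abs_ite_int, abs_ite_int]; split_ifs <;> omega

lemma cell_wgt_sum (n : ℕ) (T : Set Domino) (hT : IsTiling n T) (a b : ℤ) :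
    wgt (Ebd n T (a, b) (a + 1, b)) + wgt (Ebd n T (a + 1, b) (a + 1, b + 1)) +
      wgt (Ebd n T (a, b) (a, b + 1)) + wgt (Ebd n T (a, b + 1) (a + 1, b + 1)) = 0 := by
  obtain ⟨d, hd, hc⟩ := cover_exists n T hT (a, b)
  rw [cells_iff] at hc
  obtain ⟨⟨p, q⟩, s⟩ := d
  simp only [Prod.mk.injEq] at hc
  rcases hc with ⟨hp, hq⟩ | ⟨hs, hp, hq⟩ | ⟨hs, hp, hq⟩
  · -- (a,b) = (p,q)
    cases s with
    | true =>  -- horizontal, cell is left cell; middle is the right side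
      subst hp; subst hq
      have e1 : Ebd n T (a, b) (a + 1, b) :=
        ⟨_, hd, eobH a b a b (a+1) b (len_one (by omega)) (by omega) (by omega) (by omega)⟩
      have e3 : Ebd n T (a, b) (a, b + 1) :=
        ⟨_, hd, eobH a b a b a (b+1) (len_one (by omega)) (by omega) (by omega) (by omega)⟩
      have e4 : Ebd n T (a, b + 1) (a + 1, b + 1) :=
        ⟨_, hd, eobH a b a (b+1) (a+1) (b+1) (len_one (by omega)) (by omega) (by omega) (by omega)⟩
      have n2 : ¬ Ebd n T (a + 1, b) (a + 1, b + 1) := nonmidH n T hT a b hd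
      rw [wgt_pos e1, wgt_pos e3, wgt_pos e4, wgt_neg n2]; ring
    | false =>  -- vertical, cell is bottom cell; middle is the top side
      subst hp; subst hq
      have e1 : Ebd n T (a, b) (a + 1, b) :=
        ⟨_, hd, eobV a b a b (a+1) b (len_one (by omega)) (by omega) (by omega) (by omega)⟩
      have e2 : Ebd n T (a + 1, b) (a + 1, b + 1) :=
        ⟨_, hd, eobV a b (a+1) b (a+1) (b+1) (len_one (by omega)) (by omega) (by omega) (by omega)⟩
      have e3 : Ebd n T (a, b) (a, b + 1) :=
        ⟨_, hd, eobV a b a b a (b+1) (len_one (by omega)) (by omega) (by omega) (by omega)⟩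
      have n4 : ¬ Ebd n T (a, b + 1) (a + 1, b + 1) := nonmidV n T hT a b hd
      rw [wgt_pos e1, wgt_pos e2, wgt_pos e3, wgt_neg n4]; ring
  · -- horizontal, cell is right cell: p = a - 1, q = b; middle is the left side
    subst hs
    have hpa : p = a - 1 := by omega
    subst hpa; subst hq
    have e1 : Ebd n T (a, b) (a + 1, b) :=
      ⟨_, hd, eobH (a-1) b a b (a+1) b (len_one (by omega)) (by omega) (by omega) (by omega)⟩
    have e2 : Ebd n T (a + 1, b) (a + 1, b + 1) :=
      ⟨_, hd, eobH (a-1) b (a+1) b (a+1) (b+1) (len_one (by omega)) (by omega) (by omega) (by omega)⟩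
    have e4 : Ebd n T (a, b + 1) (a + 1, b + 1) :=
      ⟨_, hd, eobH (a-1) b a (b+1) (a+1) (b+1) (len_one (by omega)) (by omega) (by omega) (by omega)⟩
    have n3 : ¬ Ebd n T (a, b) (a, b + 1) := by
      have h := nonmidH n T hT (a-1) b hd
      rwa [show a - 1 + 1 = a by ring] at h
    rw [wgt_pos e1, wgt_pos e2, wgt_pos e4, wgt_neg n3]; ring
  · -- vertical, cell is top cell: p = a, q = b - 1; middle is the bottom side
    subst hs
    have hqb : q = b - 1 := by omega
    subst hqb; subst hp
    have e2 : Ebd n T (a + 1, b) (a + 1, b + 1) :=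
      ⟨_, hd, eobV a (b-1) (a+1) b (a+1) (b+1) (len_one (by omega)) (by omega) (by omega) (by omega)⟩
    have e3 : Ebd n T (a, b) (a, b + 1) :=
      ⟨_, hd, eobV a (b-1) a b a (b+1) (len_one (by omega)) (by omega) (by omega) (by omega)⟩
    have e4 : Ebd n T (a, b + 1) (a + 1, b + 1) :=
      ⟨_, hd, eobV a (b-1) a (b+1) (a+1) (b+1) (len_one (by omega)) (by omega) (by omega) (by omega)⟩
    have n1 : ¬ Ebd n T (a, b) (a + 1, b) := by
      have h := nonmidV n T hT a (b-1) hd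
      rwa [show b - 1 + 1 = b by ring] at h
    rw [wgt_pos e2, wgt_pos e3, wgt_pos e4, wgt_neg n1]; ring

lemma cellCons (n : ℕ) (T : Set Domino) (hT : IsTiling n T) (a b : ℤ) :
    val n T (a, b) (a + 1, b) + val n T (a + 1, b) (a + 1, b + 1) =
      val n T (a, b) (a, b + 1) + val n T (a, b + 1) (a + 1, b + 1) := by
  have key := cell_wgt_sum n T hT a b
  rcases Int.emod_two_eq_zero_or_one (a + b + n) with h | h
  · rw [val_nstd (by rw [stdBot]; omega), val_nstd (by rw [stdRight]; omega),
      val_std ((stdLeft n a b).mpr h), val_std ((stdTop n a b).mpr h)]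
    linarith
  · rw [val_std ((stdBot n a b).mpr h), val_std ((stdRight n a b).mpr h),
      val_nstd (by rw [stdLeft]; omega), val_nstd (by rw [stdTop]; omega)]
    linarith

noncomputable def isum (f : ℤ → ℤ) (k : ℤ) : ℤ :=
  (Finset.Ico 0 k).sum f - (Finset.Ico k 0).sum f

lemma isum_zero (f : ℤ → ℤ) : isum f 0 = 0 := by simp [isum]

lemma isum_succ (f : ℤ → ℤ) (k : ℤ) : isum f (k + 1) = isum f k + f k := by
  unfold isum
  rcases le_or_gt 0 k with h | h
  · have h1 : Finset.Ico 0 (k + 1) = insert k (Finset.Ico 0 k) := by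
      ext x; simp [Finset.mem_Ico]; omega
    have h2 : Finset.Ico (k + 1) 0 = (∅ : Finset ℤ) := by
      ext x; simp [Finset.mem_Ico]; omega
    have h3 : Finset.Ico k 0 = (∅ : Finset ℤ) := by
      ext x; simp [Finset.mem_Ico]; omega
    rw [h1, h2, h3, Finset.sum_insert (by simp [Finset.mem_Ico])]
    ring
  · have h1 : Finset.Ico k 0 = insert k (Finset.Ico (k + 1) 0) := by
      ext x; simp [Finset.mem_Ico]; omega
    have h2 : Finset.Ico 0 (k + 1) = (∅ : Finset ℤ) := by
      ext x; simp [Finset.mem_Ico]; omega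
    have h3 : Finset.Ico 0 k = (∅ : Finset ℤ) := by
      ext x; simp [Finset.mem_Ico]; omega
    rw [h1, h2, h3, Finset.sum_insert (by simp [Finset.mem_Ico])]
    ring

/-- The potential: sum of `val` along the path `(-n-1,0) → (a,0) → (a,b)`. -/
noncomputable def phi (n : ℕ) (T : Set Domino) (a b : ℤ) : ℤ :=
  (isum (fun t => val n T (t, 0) (t + 1, 0)) a - isum (fun t => val n T (t, 0) (t + 1, 0)) (-(n : ℤ) - 1))
    + isum (fun t => val n T (a, t) (a, t + 1)) b

lemma phi_base (n : ℕ) (T : Set Domino) : phi n T (-(n : ℤ) - 1) 0 = 0 := by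
  simp [phi, isum_zero]

lemma phi_up (n : ℕ) (T : Set Domino) (a b : ℤ) :
    phi n T a (b + 1) = phi n T a b + val n T (a, b) (a, b + 1) := by
  unfold phi; rw [isum_succ]; ring

lemma phi_right (n : ℕ) (T : Set Domino) (hT : IsTiling n T) (a b : ℤ) :
    phi n T (a + 1) b = phi n T a b + val n T (a, b) (a + 1, b) := by
  induction b using Int.induction_on with
  | zero => unfold phi; rw [isum_succ]; simp [isum_zero]; ring
  | succ k ih =>
    have h1 := phi_up n T (a + 1) k
    have h2 := phi_up n T a k
    have h3 := cellCons n T hT a k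
    omega
  | pred k ih =>
    have h1 := phi_up n T (a + 1) (-(k:ℤ) - 1)
    have h2 := phi_up n T a (-(k:ℤ) - 1)
    have h3 := cellCons n T hT a (-(k:ℤ) - 1)
    have e : (-(k:ℤ) - 1) + 1 = -(k:ℤ) := by ring
    rw [e] at h1 h2 h3
    omega

lemma phi_step (n : ℕ) (T : Set Domino) (hT : IsTiling n T) (u v : ℤ × ℤ)
    (hstd : StdArrow n u v) (he : Ebd n T u v) :
    phi n T v.1 v.2 = phi n T u.1 u.2 + 1 := by
  obtain ⟨x, y⟩ := u
  obtain ⟨p, q⟩ := v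
  dsimp only
  rcases hstd with ⟨h1, h2, h3 | h3⟩ | ⟨h1, h2, h3 | h3⟩ <;> dsimp only at h1 h2 h3
  · -- right step
    subst h2; subst h3
    have hr := phi_right n T hT x q
    rw [val_std (by dsimp only [StdArrow]; omega), wgt_pos he] at hr
    omega
  · -- left step
    subst h2; subst h3
    have hr := phi_right n T hT (x - 1) q
    rw [show (x:ℤ) - 1 + 1 = x by ring] at hr
    rw [val_nstd (fun h => by dsimp only [StdArrow] at h; omega),
      wgt_pos (Ebd_symm he)] at hr
    omega
  · -- up step
    subst h2; subst h3
    have hr := phi_up n T p y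
    rw [val_std (by dsimp only [StdArrow]; omega), wgt_pos he] at hr
    omega
  · -- down step
    subst h2; subst h3
    have hr := phi_up n T p (y - 1)
    rw [show (y:ℤ) - 1 + 1 = y by ring] at hr
    rw [val_nstd (fun h => by dsimp only [StdArrow] at h; omega),
      wgt_pos (Ebd_symm he)] at hr
    omega

open Classical in
noncomputable def Hfun (n : ℕ) (T : Set Domino) : ℤ × ℤ → ℤ :=
  fun v => if AztecVertex n v then phi n T v.1 v.2 else 0


lemma stdBotRev (n : ℕ) (a b : ℤ) : StdArrow n (a + 1, b) (a, b) ↔ (a + b + n) % 2 = 0 := by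
  dsimp only [StdArrow]; constructor <;> intro h <;> [skip; left] <;> omega

lemma stdLeftRev (n : ℕ) (a b : ℤ) : StdArrow n (a, b + 1) (a, b) ↔ (a + b + n) % 2 = 1 := by
  dsimp only [StdArrow]; constructor <;> intro h <;> [skip; right] <;> omega

/-- Adjacency through a constrained edge, both endpoints in `G`. -/
def Grel (n : ℕ) (T : Set Domino) (u v : ℤ × ℤ) : Prop :=
  AztecVertex n u ∧ AztecVertex n v ∧
    ((StdArrow n u v ∧ Ebd n T u v) ∨ (StdArrow n v u ∧ Ebd n T v u))

lemma grel_symm {n : ℕ} {T : Set Domino} : Symmetric (Grel n T) := by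
  rintro u v ⟨h1, h2, h3⟩
  exact ⟨h2, h1, h3.symm⟩

lemma relH {n : ℕ} {T : Set Domino} {x y : ℤ} (he : Ebd n T (x, y) (x + 1, y))
    (h1 : AztecVertex n (x, y)) (h2 : AztecVertex n (x + 1, y)) :
    Grel n T (x, y) (x + 1, y) := by
  refine ⟨h1, h2, ?_⟩
  rcases Int.emod_two_eq_zero_or_one (x + y + n) with h | h
  · exact Or.inr ⟨(stdBotRev n x y).mpr h, Ebd_symm he⟩
  · exact Or.inl ⟨(stdBot n x y).mpr h, he⟩

lemma relV {n : ℕ} {T : Set Domino} {x y : ℤ} (he : Ebd n T (x, y) (x, y + 1))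
    (h1 : AztecVertex n (x, y)) (h2 : AztecVertex n (x, y + 1)) :
    Grel n T (x, y) (x, y + 1) := by
  refine ⟨h1, h2, ?_⟩
  rcases Int.emod_two_eq_zero_or_one (x + y + n) with h | h
  · exact Or.inl ⟨(stdLeft n x y).mpr h, he⟩
  · exact Or.inr ⟨(stdLeftRev n x y).mpr h, Ebd_symm he⟩

/-- Any cell has at least three of its four sides on tile boundaries:
all but the middle edge of its own tile. -/
lemma cell_sides (n : ℕ) (T : Set Domino) (hT : IsTiling n T) (a b : ℤ) :
    (Ebd n T (a, b) (a + 1, b) ∧ Ebd n T (a, b) (a, b + 1) ∧ Ebd n T (a, b + 1) (a + 1, b + 1)) ∨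
    (Ebd n T (a, b) (a + 1, b) ∧ Ebd n T (a + 1, b) (a + 1, b + 1) ∧ Ebd n T (a, b) (a, b + 1)) ∨
    (Ebd n T (a, b) (a + 1, b) ∧ Ebd n T (a + 1, b) (a + 1, b + 1) ∧ Ebd n T (a, b + 1) (a + 1, b + 1)) ∨
    (Ebd n T (a, b) (a, b + 1) ∧ Ebd n T (a, b + 1) (a + 1, b + 1) ∧ Ebd n T (a + 1, b) (a + 1, b + 1)) := by
  obtain ⟨d, hd, hc⟩ := cover_exists n T hT (a, b)
  rw [cells_iff] at hc
  obtain ⟨⟨p, q⟩, s⟩ := d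
  simp only [Prod.mk.injEq] at hc
  rcases hc with ⟨hp, hq⟩ | ⟨hs, hp, hq⟩ | ⟨hs, hp, hq⟩
  · cases s with
    | true =>
      subst hp; subst hq
      refine Or.inl ⟨?_, ?_, ?_⟩
      · exact ⟨_, hd, eobH a b a b (a+1) b (len_one (by omega)) (by omega) (by omega) (by omega)⟩
      · exact ⟨_, hd, eobH a b a b a (b+1) (len_one (by omega)) (by omega) (by omega) (by omega)⟩
      · exact ⟨_, hd, eobH a b a (b+1) (a+1) (b+1) (len_one (by omega)) (by omega) (by omega) (by omega)⟩
    | false =>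
      subst hp; subst hq
      refine Or.inr (Or.inl ⟨?_, ?_, ?_⟩)
      · exact ⟨_, hd, eobV a b a b (a+1) b (len_one (by omega)) (by omega) (by omega) (by omega)⟩
      · exact ⟨_, hd, eobV a b (a+1) b (a+1) (b+1) (len_one (by omega)) (by omega) (by omega) (by omega)⟩
      · exact ⟨_, hd, eobV a b a b a (b+1) (len_one (by omega)) (by omega) (by omega) (by omega)⟩
  · subst hs
    have hpa : p = a - 1 := by omega
    subst hpa; subst hq
    refine Or.inr (Or.inr (Or.inl ⟨?_, ?_, ?_⟩))
    · exact ⟨_, hd, eobH (a-1) b a b (a+1) b (len_one (by omega)) (by omega) (by omega) (by omega)⟩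
    · exact ⟨_, hd, eobH (a-1) b (a+1) b (a+1) (b+1) (len_one (by omega)) (by omega) (by omega) (by omega)⟩
    · exact ⟨_, hd, eobH (a-1) b a (b+1) (a+1) (b+1) (len_one (by omega)) (by omega) (by omega) (by omega)⟩
  · subst hs
    have hqb : q = b - 1 := by omega
    subst hqb; subst hp
    refine Or.inr (Or.inr (Or.inr ⟨?_, ?_, ?_⟩))
    · exact ⟨_, hd, eobV a (b-1) a b a (b+1) (len_one (by omega)) (by omega) (by omega) (by omega)⟩
    · exact ⟨_, hd, eobV a (b-1) a (b+1) (a+1) (b+1) (len_one (by omega)) (by omega) (by omega) (by omega)⟩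
    · exact ⟨_, hd, eobV a (b-1) (a+1) b (a+1) (b+1) (len_one (by omega)) (by omega) (by omega) (by omega)⟩

lemma corners_G {n : ℕ} {a b : ℤ} (h : AztecCell n (a, b)) :
    AztecVertex n (a, b) ∧ AztecVertex n (a + 1, b) ∧
      AztecVertex n (a, b + 1) ∧ AztecVertex n (a + 1, b + 1) := by
  rw [aztec_iff] at h
  refine ⟨(vertex_iff n a b).mpr ?_, (vertex_iff n (a+1) b).mpr ?_,
    (vertex_iff n a (b+1)).mpr ?_, (vertex_iff n (a+1) (b+1)).mpr ?_⟩ <;>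
    (split_ifs at h ⊢ <;> omega)

/-- All corners of a cell of the diamond are connected to its lower-left corner. -/
lemma cellConn (n : ℕ) (T : Set Domino) (hT : IsTiling n T) (a b : ℤ)
    (hc : AztecCell n (a, b)) :
    Relation.ReflTransGen (Grel n T) (a, b) (a + 1, b) ∧
    Relation.ReflTransGen (Grel n T) (a, b) (a, b + 1) ∧
    Relation.ReflTransGen (Grel n T) (a, b) (a + 1, b + 1) := by
  obtain ⟨g1, g2, g3, g4⟩ := corners_G hc
  have symm : ∀ {x y : ℤ × ℤ}, Relation.ReflTransGen (Grel n T) x y → Relation.ReflTransGen (Grel n T) y x := by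
    haveI : Std.Symm (Grel n T) := ⟨fun _ _ h => grel_symm h⟩
    intro x y h
    exact Std.Symm.symm _ _ h
  rcases cell_sides n T hT a b with ⟨e1, e2, e3⟩ | ⟨e1, e2, e3⟩ | ⟨e1, e2, e3⟩ | ⟨e1, e2, e3⟩
  · -- bot, left, top present
    have r1 : Relation.ReflTransGen (Grel n T) (a, b) (a + 1, b) :=
      Relation.ReflTransGen.single (relH e1 g1 g2)
    have r2 : Relation.ReflTransGen (Grel n T) (a, b) (a, b + 1) :=
      Relation.ReflTransGen.single (relV e2 g1 g3)
    exact ⟨r1, r2, r2.trans (Relation.ReflTransGen.single (relH e3 g3 g4))⟩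
  · -- bot, right, left present
    have r1 : Relation.ReflTransGen (Grel n T) (a, b) (a + 1, b) :=
      Relation.ReflTransGen.single (relH e1 g1 g2)
    exact ⟨r1, Relation.ReflTransGen.single (relV e3 g1 g3),
      r1.trans (Relation.ReflTransGen.single (relV e2 g2 g4))⟩
  · -- bot, right, top present
    have r1 : Relation.ReflTransGen (Grel n T) (a, b) (a + 1, b) :=
      Relation.ReflTransGen.single (relH e1 g1 g2)
    have r3 : Relation.ReflTransGen (Grel n T) (a, b) (a + 1, b + 1) :=
      r1.trans (Relation.ReflTransGen.single (relV e2 g2 g4))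
    exact ⟨r1, r3.trans (symm (Relation.ReflTransGen.single (relH e3 g3 g4))), r3⟩
  · -- left, top, right present
    have r2 : Relation.ReflTransGen (Grel n T) (a, b) (a, b + 1) :=
      Relation.ReflTransGen.single (relV e1 g1 g3)
    have r3 : Relation.ReflTransGen (Grel n T) (a, b) (a + 1, b + 1) :=
      r2.trans (Relation.ReflTransGen.single (relH e2 g3 g4))
    exact ⟨r3.trans (symm (Relation.ReflTransGen.single (relV e3 g2 g4))), r2, r3⟩

abbrev RT (n : ℕ) (T : Set Domino) := Relation.ReflTransGen (Grel n T)

lemma rt_symm {n : ℕ} {T : Set Domino} {u v : ℤ × ℤ} (h : RT n T u v) : RT n T v u :=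
  by
    haveI : Std.Symm (Grel n T) := ⟨fun _ _ h => grel_symm h⟩
    exact Std.Symm.symm _ _ h

lemma rowReachLeft (n : ℕ) (T : Set Domino) (hT : IsTiling n T) :
    ∀ k : ℕ, ∀ a b : ℤ, a = -1 - (k : ℤ) → AztecCell n (a, b) → RT n T (a, b) (-1, b) := by
  intro k
  induction k with
  | zero => intro a b ha _; rw [show a = (-1 : ℤ) by omega]
  | succ m ih =>
    intro a b ha hc
    have hnext : AztecCell n (a + 1, b) := by
      rw [aztec_iff] at hc ⊢; split_ifs at hc ⊢ <;> omega
    exact ((cellConn n T hT a b hc).1).trans (ih (a + 1) b (by omega) hnext)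

lemma rowReachRight (n : ℕ) (T : Set Domino) (hT : IsTiling n T) :
    ∀ k : ℕ, ∀ a b : ℤ, a = -1 + (k : ℤ) → AztecCell n (a, b) → RT n T (a, b) (-1, b) := by
  intro k
  induction k with
  | zero => intro a b ha _; rw [show a = (-1 : ℤ) by omega]
  | succ m ih =>
    intro a b ha hc
    have hprev : AztecCell n (a - 1, b) := by
      rw [aztec_iff] at hc ⊢; split_ifs at hc ⊢ <;> omega
    have step : RT n T (a - 1, b) (a, b) := by
      have h := (cellConn n T hT (a - 1) b hprev).1
      rwa [show (a : ℤ) - 1 + 1 = a by ring] at h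
    exact (rt_symm step).trans (ih (a - 1) b (by omega) hprev)

lemma rowReach (n : ℕ) (T : Set Domino) (hT : IsTiling n T) (a b : ℤ)
    (hc : AztecCell n (a, b)) : RT n T (a, b) (-1, b) := by
  rcases le_or_gt a (-1) with h | h
  · exact rowReachLeft n T hT (-1 - a).toNat a b (by omega) hc
  · exact rowReachRight n T hT (a + 1).toNat a b (by omega) hc

lemma colReachUp (n : ℕ) (T : Set Domino) (hT : IsTiling n T) :
    ∀ k : ℕ, ∀ b : ℤ, b = (k : ℤ) → AztecCell n (-1, b) → RT n T (-1, b) (-1, 0) := by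
  intro k
  induction k with
  | zero => intro b hb _; rw [show b = (0 : ℤ) by omega]
  | succ m ih =>
    intro b hb hc
    have hprev : AztecCell n (-1, b - 1) := by
      rw [aztec_iff] at hc ⊢; split_ifs at hc ⊢ <;> omega
    have step : RT n T (-1, b - 1) (-1, b) := by
      have h := (cellConn n T hT (-1) (b - 1) hprev).2.1
      rwa [show (b : ℤ) - 1 + 1 = b by ring] at h
    exact (rt_symm step).trans (ih (b - 1) (by omega) hprev)

lemma colReachDown (n : ℕ) (T : Set Domino) (hT : IsTiling n T) :
    ∀ k : ℕ, ∀ b : ℤ, b = -(k : ℤ) → AztecCell n (-1, b) → RT n T (-1, b) (-1, 0) := by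
  intro k
  induction k with
  | zero => intro b hb _; rw [show b = (0 : ℤ) by omega]
  | succ m ih =>
    intro b hb hc
    have hnext : AztecCell n (-1, b + 1) := by
      rw [aztec_iff] at hc ⊢; split_ifs at hc ⊢ <;> omega
    exact ((cellConn n T hT (-1) b hc).2.1).trans (ih (b + 1) (by omega) hnext)

lemma colReach (n : ℕ) (T : Set Domino) (hT : IsTiling n T) (b : ℤ)
    (hc : AztecCell n (-1, b)) : RT n T (-1, b) (-1, 0) := by
  rcases le_or_gt 0 b with h | h
  · exact colReachUp n T hT b.toNat b (by omega) hc
  · exact colReachDown n T hT (-b).toNat b (by omega) hc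

lemma vertexG {n : ℕ} {x y : ℤ} (h : (if 0 ≤ x then x else -x) + (if 0 ≤ y then y else -y) ≤ (n:ℤ) + 1) :
    AztecVertex n (x, y) := (vertex_iff n x y).mpr h

lemma notCell {n : ℕ} {x y : ℤ} (h : ¬ ((if 0 ≤ x then x + 1 else -x) + (if 0 ≤ y then y + 1 else -y) ≤ (n:ℤ) + 1)) :
    ¬ AztecCell n (x, y) := fun hc => h ((aztec_iff n x y).mp hc)

lemma baseEdge (n : ℕ) (T : Set Domino) : Grel n T (-(n:ℤ) - 1, 0) (-(n:ℤ), 0) := by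
  have he : Ebd n T (-(n:ℤ) - 1, 0) (-(n:ℤ) - 1 + 1, 0) := by
    refine ⟨((-(n:ℤ) - 2, 0), true), Or.inr ⟨rfl, ?_, ?_, ?_⟩,
      eobH (-(n:ℤ)-2) 0 (-(n:ℤ)-1) 0 (-(n:ℤ)-1+1) 0 (len_one (by omega)) (by omega) (by omega) (by omega)⟩
    · exact notCell (x := -(n:ℤ) - 2) (y := 0) (by split_ifs <;> omega)
    · exact notCell (x := -(n:ℤ) - 2 + 1) (y := 0) (by split_ifs <;> omega)
    · dsimp only; split_ifs <;> omega
  have h := relH he (vertexG (by split_ifs <;> omega)) (vertexG (by split_ifs <;> omega))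
  rwa [show -(n:ℤ) - 1 + 1 = -(n:ℤ) by ring] at h

lemma rightEdge (n : ℕ) (T : Set Domino) : Grel n T ((n:ℤ), 0) ((n:ℤ) + 1, 0) := by
  have he : Ebd n T ((n:ℤ), 0) ((n:ℤ) + 1, 0) := by
    refine ⟨(((n:ℤ), 0), true), Or.inr ⟨rfl, ?_, ?_, ?_⟩,
      eobH (n:ℤ) 0 (n:ℤ) 0 ((n:ℤ)+1) 0 (len_one (by omega)) (by omega) (by omega) (by omega)⟩
    · exact notCell (x := (n:ℤ)) (y := 0) (by split_ifs <;> omega)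
    · exact notCell (x := (n:ℤ) + 1) (y := 0) (by split_ifs <;> omega)
    · dsimp only; split_ifs <;> omega
  exact relH he (vertexG (by split_ifs <;> omega)) (vertexG (by split_ifs <;> omega))

lemma topEdge (n : ℕ) (T : Set Domino) : Grel n T (0, (n:ℤ)) (0, (n:ℤ) + 1) := by
  have he : Ebd n T (0, (n:ℤ)) (0, (n:ℤ) + 1) := by
    refine ⟨((0, (n:ℤ)), true), Or.inr ⟨rfl, ?_, ?_, ?_⟩,
      eobH 0 (n:ℤ) 0 (n:ℤ) 0 ((n:ℤ)+1) (len_one (by omega)) (by omega) (by omega) (by omega)⟩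
    · exact notCell (x := 0) (y := (n:ℤ)) (by split_ifs <;> omega)
    · exact notCell (x := 0 + 1) (y := (n:ℤ)) (by split_ifs <;> omega)
    · dsimp only; split_ifs <;> omega
  exact relV he (vertexG (by split_ifs <;> omega)) (vertexG (by split_ifs <;> omega))

lemma botEdge (n : ℕ) (T : Set Domino) : Grel n T (0, -(n:ℤ) - 1) (0, -(n:ℤ)) := by
  have he : Ebd n T (0, -(n:ℤ) - 1) (0, -(n:ℤ) - 1 + 1) := by
    refine ⟨((0, -(n:ℤ) - 1), true), Or.inr ⟨rfl, ?_, ?_, ?_⟩,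
      eobH 0 (-(n:ℤ)-1) 0 (-(n:ℤ)-1) 0 (-(n:ℤ)-1+1) (len_one (by omega)) (by omega) (by omega) (by omega)⟩
    · exact notCell (x := 0) (y := -(n:ℤ) - 1) (by split_ifs <;> omega)
    · exact notCell (x := 0 + 1) (y := -(n:ℤ) - 1) (by split_ifs <;> omega)
    · dsimp only; split_ifs <;> omega
  have h := relV he (vertexG (by split_ifs <;> omega)) (vertexG (by split_ifs <;> omega))
  rwa [show -(n:ℤ) - 1 + 1 = -(n:ℤ) by ring] at h

lemma reachLL (n : ℕ) (T : Set Domino) (hT : IsTiling n T) (a b : ℤ)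
    (hc : AztecCell n (a, b)) : RT n T (-(n:ℤ) - 1, 0) (a, b) := by
  have hn : 1 ≤ (n:ℤ) := by rw [aztec_iff] at hc; split_ifs at hc <;> omega
  have c1 : AztecCell n (-(n:ℤ), 0) := by rw [aztec_iff]; split_ifs <;> omega
  have c2 : AztecCell n (-1, b) := by
    rw [aztec_iff] at hc ⊢; split_ifs at hc ⊢ <;> omega
  refine ((Relation.ReflTransGen.single (baseEdge n T)).trans
    (rowReach n T hT (-(n:ℤ)) 0 c1)).trans ?_
  exact ((rt_symm (colReach n T hT b c2)).trans (rt_symm (rowReach n T hT a b hc)))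

lemma reachAll (n : ℕ) (T : Set Domino) (hT : IsTiling n T) (v : ℤ × ℤ)
    (hv : AztecVertex n v) : RT n T (-(n:ℤ) - 1, 0) v := by
  obtain ⟨x, y⟩ := v
  rw [vertex_iff] at hv
  by_cases h1 : x = -(n:ℤ) - 1 ∧ y = 0
  · rw [h1.1, h1.2]
  by_cases h2 : x = -(n:ℤ) ∧ y = 0
  · rw [h2.1, h2.2]; exact Relation.ReflTransGen.single (baseEdge n T)
  by_cases h3 : x = (n:ℤ) + 1 ∧ y = 0
  · rw [h3.1, h3.2]
    have r0 : RT n T (-(n:ℤ) - 1, 0) ((n:ℤ), 0) := by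
      rcases Nat.eq_zero_or_pos n with hn | hn
      · subst hn
        have := Relation.ReflTransGen.single (baseEdge 0 T)
        simpa using this
      · have hc : AztecCell n ((n:ℤ) - 1, 0) := by rw [aztec_iff]; split_ifs <;> omega
        have step := (cellConn n T hT ((n:ℤ) - 1) 0 hc).1
        rw [show (n:ℤ) - 1 + 1 = (n:ℤ) by ring] at step
        exact (reachLL n T hT ((n:ℤ) - 1) 0 hc).trans step
    exact r0.trans (Relation.ReflTransGen.single (rightEdge n T))
  by_cases h4 : x = 0 ∧ y = (n:ℤ) + 1
  · rw [h4.1, h4.2]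
    have r0 : RT n T (-(n:ℤ) - 1, 0) (0, (n:ℤ)) := by
      rcases Nat.eq_zero_or_pos n with hn | hn
      · subst hn
        have := Relation.ReflTransGen.single (baseEdge 0 T)
        simpa using this
      · have hc : AztecCell n (-1, (n:ℤ) - 1) := by rw [aztec_iff]; split_ifs <;> omega
        have step := (cellConn n T hT (-1) ((n:ℤ) - 1) hc).2.2
        rw [show (n:ℤ) - 1 + 1 = (n:ℤ) by ring, show (-1 : ℤ) + 1 = 0 by ring] at step
        exact (reachLL n T hT (-1) ((n:ℤ) - 1) hc).trans step
    exact r0.trans (Relation.ReflTransGen.single (topEdge n T))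
  by_cases h5 : x = 0 ∧ y = -(n:ℤ) - 1
  · rw [h5.1, h5.2]
    have r0 : RT n T (-(n:ℤ) - 1, 0) (0, -(n:ℤ)) := by
      rcases Nat.eq_zero_or_pos n with hn | hn
      · subst hn
        have := Relation.ReflTransGen.single (baseEdge 0 T)
        simpa using this
      · have hc : AztecCell n (-1, -(n:ℤ)) := by rw [aztec_iff]; split_ifs <;> omega
        have step := (cellConn n T hT (-1) (-(n:ℤ)) hc).1
        rw [show (-1 : ℤ) + 1 = 0 by ring] at step
        exact (reachLL n T hT (-1) (-(n:ℤ)) hc).trans step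
    exact r0.trans (Relation.ReflTransGen.single (grel_symm (botEdge n T)))
  -- generic case: v is a corner of a cell of the diamond
  push_neg at h1 h2 h3 h4 h5
  by_cases hx : 0 < x <;> by_cases hy : 0 < y
  · have hc : AztecCell n (x - 1, y - 1) := by rw [aztec_iff]; split_ifs at hv ⊢ <;> omega
    have step := (cellConn n T hT (x - 1) (y - 1) hc).2.2
    rw [show x - 1 + 1 = x by ring, show y - 1 + 1 = y by ring] at step
    exact (reachLL n T hT (x - 1) (y - 1) hc).trans step
  · have hc : AztecCell n (x - 1, y) := by
      rw [aztec_iff]; split_ifs at hv ⊢ <;> omega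
    have step := (cellConn n T hT (x - 1) y hc).1
    rw [show x - 1 + 1 = x by ring] at step
    exact (reachLL n T hT (x - 1) y hc).trans step
  · have hc : AztecCell n (x, y - 1) := by
      rw [aztec_iff]; split_ifs at hv ⊢ <;> omega
    have step := (cellConn n T hT x (y - 1) hc).2.1
    rw [show y - 1 + 1 = y by ring] at step
    exact (reachLL n T hT x (y - 1) hc).trans step
  · have hc : AztecCell n (x, y) := by
      rw [aztec_iff]; split_ifs at hv ⊢ <;> omega
    exact reachLL n T hT x y hc


lemma Hfun_isHeight (n : ℕ) (T : Set Domino) (hT : IsTiling n T) :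
    IsHeightOf n T (Hfun n T) := by
  refine ⟨fun v hv => ?_, ?_, fun u v hu hv hstd he => ?_⟩
  · unfold Hfun; rw [if_neg hv]
  · unfold Hfun
    rw [if_pos (vertexG (x := -(n:ℤ) - 1) (y := 0) (by split_ifs <;> omega))]
    exact phi_base n T
  · unfold Hfun
    rw [if_pos hv, if_pos hu]
    exact phi_step n T hT u v hstd he

lemma height_unique (n : ℕ) (T : Set Domino) (hT : IsTiling n T) (H1 H2 : ℤ × ℤ → ℤ)
    (h1 : IsHeightOf n T H1) (h2 : IsHeightOf n T H2) : H1 = H2 := by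
  funext v
  by_cases hv : AztecVertex n v
  · have key : ∀ w, RT n T (-(n:ℤ) - 1, 0) w → H1 w = H2 w := by
      intro w hw
      induction hw with
      | refl => rw [h1.2.1, h2.2.1]
      | tail hprev hrel ih =>
        obtain ⟨ga, gb, hcase⟩ := hrel
        rcases hcase with ⟨hs, he⟩ | ⟨hs, he⟩
        · rw [h1.2.2 _ _ ga gb hs he, h2.2.2 _ _ ga gb hs he, ih]
        · have e1 := h1.2.2 _ _ gb ga hs he
          have e2 := h2.2.2 _ _ gb ga hs he
          omega
    exact key v (reachAll n T hT v hv)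
  · rw [h1.1 v hv, h2.1 v hv]

/-- For any tiling `T` of the Aztec diamond of order `n` there is a unique height
function `H_T` on the vertex set `G` (normalized to `0` off `G`) with
`H_T(-n-1,0) = 0` and `H_T(v) = H_T(u) + 1` whenever the standardly oriented edge
`u → v` lies on the boundary of a tile of the extended tiling `T⁺`. -/
theorem height_function_exists_unique (n : ℕ) (T : Set Domino) (hT : IsTiling n T) :
    ∃! H : ℤ × ℤ → ℤ, IsHeightOf n T H :=
  ⟨Hfun n T, Hfun_isHeight n T hT,
    fun H' hH' => height_unique n T hT H' (Hfun n T) hH' (Hfun_isHeight n T hT)⟩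
end

section
/- If H₁ and H₂ are legal height functions on the order-n Aztec diamond (i.e., satisfying the boundary condition and the condition that along each oriented edge the height increases by 1 or decreases by 3), then so are their pointwise maximum H₁ ∨ H₂ and pointwise minimum H₁ ∧ H₂; hence the set of tilings of the Aztec diamond forms a distributive lattice. -/
/-- A legal height function on the order-`n` Aztec diamond graph: it is supported
on the vertex set `G`, takes the prescribed boundary values
`H(a,b) = (n+1) - |a| + |b|` on the boundary cycle (the vertices with
`n ≤ |a|+|b| ≤ n+1`, along which these are the successive values
`0,1,…,2n+2,…,0,…,2n+2,…,0`), and along every standardly oriented edge `u → v`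
it satisfies `H(v) = H(u) + 1` or `H(v) = H(u) - 3`. -/
def IsHeightFn (n : ℕ) (H : ℤ × ℤ → ℤ) : Prop :=
  (∀ v, ¬ AztecVertex n v → H v = 0) ∧
  (∀ v : ℤ × ℤ, AztecVertex n v → (n : ℤ) ≤ |v.1| + |v.2| →
      H v = (n : ℤ) + 1 - |v.1| + |v.2|) ∧
  (∀ u v, AztecVertex n u → AztecVertex n v → StdArrow n u v →
      H v = H u + 1 ∨ H v = H u - 3)

/-- One step of mod-4 propagation along a standard arrow. -/
lemma height_mod4_step (n : ℕ) (H : ℤ × ℤ → ℤ) (hH : IsHeightFn n H) (u v : ℤ × ℤ)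
    (hu : AztecVertex n u) (hv : AztecVertex n v) (ha : StdArrow n u v)
    (hd : (4:ℤ) ∣ H v - (2 * v.2 + 1 - (v.1 + v.2 + n) % 2)) :
    (4:ℤ) ∣ H u - (2 * u.2 + 1 - (u.1 + u.2 + n) % 2) := by
  have hrel := hH.2.2 u v hu hv ha
  rcases ha with ⟨hp, h2, h1⟩ | ⟨hp, h1, h2⟩ <;> omega

/-- The prescribed boundary values satisfy the mod-4 congruence. -/
lemma height_mod4_boundary (n : ℕ) (H : ℤ × ℤ → ℤ) (hH : IsHeightFn n H)
    (v : ℤ × ℤ) (hv : AztecVertex n v) (hs : (n:ℤ) ≤ |v.1| + |v.2|) :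
    (4:ℤ) ∣ H v - (2 * v.2 + 1 - (v.1 + v.2 + n) % 2) := by
  have hb := hH.2.1 v hv hs
  have hv' : |v.1| + |v.2| ≤ (n:ℤ) + 1 := hv
  rcases abs_cases v.1 with ⟨e1, s1⟩ | ⟨e1, s1⟩ <;>
    rcases abs_cases v.2 with ⟨e2, s2⟩ | ⟨e2, s2⟩ <;>
    rw [e1, e2] at hb hv' hs <;> omega

/-- Every non-boundary vertex has an outgoing arrow to a vertex strictly farther
from the center. -/
lemma aztec_neighbor (n : ℕ) (v : ℤ × ℤ) (h : |v.1| + |v.2| < (n:ℤ)) :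
    ∃ u : ℤ × ℤ, AztecVertex n u ∧ StdArrow n v u ∧
      |u.1| + |u.2| = |v.1| + |v.2| + 1 := by
  rcases Int.emod_two_eq (v.1 + v.2 + n) with hp | hp
  · rcases le_or_gt 0 v.2 with h2 | h2
    · refine ⟨(v.1, v.2 + 1), ?_, Or.inr ⟨hp, rfl, Or.inl rfl⟩, ?_⟩
      · show |v.1| + |v.2 + 1| ≤ (n:ℤ) + 1
        rw [abs_of_nonneg (show (0:ℤ) ≤ v.2 + 1 by omega)]
        rw [abs_of_nonneg h2] at h; omega
      · show |v.1| + |v.2 + 1| = |v.1| + |v.2| + 1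
        rw [abs_of_nonneg (show (0:ℤ) ≤ v.2 + 1 by omega), abs_of_nonneg h2]; ring
    · refine ⟨(v.1, v.2 - 1), ?_, Or.inr ⟨hp, rfl, Or.inr rfl⟩, ?_⟩
      · show |v.1| + |v.2 - 1| ≤ (n:ℤ) + 1
        rw [abs_of_nonpos (show v.2 - 1 ≤ (0:ℤ) by omega)]
        rw [abs_of_neg h2] at h; omega
      · show |v.1| + |v.2 - 1| = |v.1| + |v.2| + 1
        rw [abs_of_nonpos (show v.2 - 1 ≤ (0:ℤ) by omega), abs_of_neg h2]; ring
  · rcases le_or_gt 0 v.1 with h1 | h1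
    · refine ⟨(v.1 + 1, v.2), ?_, Or.inl ⟨hp, rfl, Or.inl rfl⟩, ?_⟩
      · show |v.1 + 1| + |v.2| ≤ (n:ℤ) + 1
        rw [abs_of_nonneg (show (0:ℤ) ≤ v.1 + 1 by omega)]
        rw [abs_of_nonneg h1] at h; omega
      · show |v.1 + 1| + |v.2| = |v.1| + |v.2| + 1
        rw [abs_of_nonneg (show (0:ℤ) ≤ v.1 + 1 by omega), abs_of_nonneg h1]; ring
    · refine ⟨(v.1 - 1, v.2), ?_, Or.inl ⟨hp, rfl, Or.inr rfl⟩, ?_⟩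
      · show |v.1 - 1| + |v.2| ≤ (n:ℤ) + 1
        rw [abs_of_nonpos (show v.1 - 1 ≤ (0:ℤ) by omega)]
        rw [abs_of_neg h1] at h; omega
      · show |v.1 - 1| + |v.2| = |v.1| + |v.2| + 1
        rw [abs_of_nonpos (show v.1 - 1 ≤ (0:ℤ) by omega), abs_of_neg h1]; ring

/-- Every legal height function is congruent mod 4 to the fixed reference
function determined by the boundary values. -/
lemma height_mod4 (n : ℕ) (H : ℤ × ℤ → ℤ) (hH : IsHeightFn n H) :
    ∀ v : ℤ × ℤ, AztecVertex n v →
      (4:ℤ) ∣ H v - (2 * v.2 + 1 - (v.1 + v.2 + n) % 2) := by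
  suffices h : ∀ k : ℕ, ∀ v : ℤ × ℤ, AztecVertex n v →
      ((n:ℤ) - (|v.1| + |v.2|)).toNat ≤ k →
      (4:ℤ) ∣ H v - (2 * v.2 + 1 - (v.1 + v.2 + n) % 2) by
    exact fun v hv => h _ v hv le_rfl
  intro k
  induction k with
  | zero =>
    intro v hv hk
    exact height_mod4_boundary n H hH v hv (by omega)
  | succ k ih =>
    intro v hv hk
    rcases le_or_gt (n:ℤ) (|v.1| + |v.2|) with hs | hs
    · exact height_mod4_boundary n H hH v hv hs
    · obtain ⟨u, hu, ha, habs⟩ := aztec_neighbor n v hs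
      exact height_mod4_step n H hH v u hv hu ha (ih u hu (by omega))

/-- If `H₁, H₂` are legal height functions on the order-`n` Aztec diamond then so
are their pointwise maximum and minimum; hence the set of legal height functions
(equivalently, of tilings) forms a distributive lattice under pointwise sup and
inf. -/
theorem height_functions_lattice (n : ℕ) :
    (∀ H₁ H₂ : ℤ × ℤ → ℤ, IsHeightFn n H₁ → IsHeightFn n H₂ →
      IsHeightFn n (fun v => max (H₁ v) (H₂ v)) ∧
      IsHeightFn n (fun v => min (H₁ v) (H₂ v))) ∧
    ∃ L : DistribLattice {H : ℤ × ℤ → ℤ // IsHeightFn n H},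
      (∀ a b : {H : ℤ × ℤ → ℤ // IsHeightFn n H},
        (L.toLattice.sup a b).1 = fun v => max (a.1 v) (b.1 v)) ∧
      (∀ a b : {H : ℤ × ℤ → ℤ // IsHeightFn n H},
        (L.toLattice.inf a b).1 = fun v => min (a.1 v) (b.1 v)) := by
  have key : ∀ H₁ H₂ : ℤ × ℤ → ℤ, IsHeightFn n H₁ → IsHeightFn n H₂ →
      IsHeightFn n (fun v => max (H₁ v) (H₂ v)) ∧
      IsHeightFn n (fun v => min (H₁ v) (H₂ v)) := by
    intro H₁ H₂ h₁ h₂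
    have hedge : ∀ u v, AztecVertex n u → AztecVertex n v → StdArrow n u v →
        (max (H₁ v) (H₂ v) = max (H₁ u) (H₂ u) + 1 ∨
          max (H₁ v) (H₂ v) = max (H₁ u) (H₂ u) - 3) ∧
        (min (H₁ v) (H₂ v) = min (H₁ u) (H₂ u) + 1 ∨
          min (H₁ v) (H₂ v) = min (H₁ u) (H₂ u) - 3) := by
      intro u v hu hv ha
      have d₁ := height_mod4 n H₁ h₁ u hu
      have d₂ := height_mod4 n H₂ h₂ u hu
      have r₁ := h₁.2.2 u v hu hv ha
      have r₂ := h₂.2.2 u v hu hv ha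
      constructor <;> (simp only [max_def, min_def]; split_ifs <;> omega)
    refine ⟨⟨fun v hv => ?_, fun v hv hs => ?_, fun u v hu hv ha => (hedge u v hu hv ha).1⟩,
            ⟨fun v hv => ?_, fun v hv hs => ?_, fun u v hu hv ha => (hedge u v hu hv ha).2⟩⟩
    · simp [h₁.1 v hv, h₂.1 v hv]
    · simp [h₁.2.1 v hv hs, h₂.2.1 v hv hs]
    · simp [h₁.1 v hv, h₂.1 v hv]
    · simp [h₁.2.1 v hv hs, h₂.2.1 v hv hs]
  refine ⟨key, ⟨{
      sup := fun a b => ⟨fun v => max (a.1 v) (b.1 v), (key a.1 b.1 a.2 b.2).1⟩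
      inf := fun a b => ⟨fun v => min (a.1 v) (b.1 v), (key a.1 b.1 a.2 b.2).2⟩
      le := fun a b => ∀ v, a.1 v ≤ b.1 v
      le_refl := fun a v => le_refl _
      le_trans := fun a b c hab hbc v => le_trans (hab v) (hbc v)
      le_antisymm := fun a b hab hba =>
        Subtype.ext (funext fun v => le_antisymm (hab v) (hba v))
      le_sup_left := fun a b v => le_max_left _ _
      le_sup_right := fun a b v => le_max_right _ _
      sup_le := fun a b c hac hbc v => max_le (hac v) (hbc v)
      inf_le_left := fun a b v => min_le_left _ _
      inf_le_right := fun a b v => min_le_right _ _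
      le_inf := fun a b c hab hac v => le_min (hab v) (hac v)
      le_sup_inf := fun a b c v => by
        show min (max (a.1 v) (b.1 v)) (max (a.1 v) (c.1 v)) ≤
          max (a.1 v) (min (b.1 v) (c.1 v))
        rcases le_total (b.1 v) (c.1 v) with h | h <;>
          simp [min_def, max_def] <;> split_ifs <;> omega }, fun a b => rfl, fun a b => rfl⟩⟩
end

section
/- The map sending an n×n alternating sign matrix A to its skewed summation A* is a bijection from n×n alternating sign matrices onto the set of (n+1)×(n+1) integer matrices (a*_{ij})_{0≤i,j≤n} satisfying a*_{i0} = a*_{0i} = i, a*_{in} = a*_{ni} = n−i for 0 ≤ i ≤ n, and |a*_{ij} − a*_{i'j'}| = 1 whenever (i,j),(i',j') are adjacent (differ by 1 in one coordinate). -/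
/-- An alternating sign matrix: entries in `{-1,0,1}`, every row and column sums
to `1`, and the nonzero entries in each row and in each column alternate in
sign. -/
def IsASM {n : ℕ} (A : Matrix (Fin n) (Fin n) ℤ) : Prop :=
  (∀ i j, A i j = -1 ∨ A i j = 0 ∨ A i j = 1) ∧
  (∀ i, ∑ j, A i j = 1) ∧
  (∀ j, ∑ i, A i j = 1) ∧
  (∀ i j₁ j₂, j₁ < j₂ → A i j₁ ≠ 0 → A i j₂ ≠ 0 →
    (∀ k, j₁ < k → k < j₂ → A i k = 0) → A i j₂ = -A i j₁) ∧
  (∀ j i₁ i₂, i₁ < i₂ → A i₁ j ≠ 0 → A i₂ j ≠ 0 →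
    (∀ k, i₁ < k → k < i₂ → A k j = 0) → A i₂ j = -A i₁ j)

/-- The number of `+1` entries of a matrix. -/
def Nplus {n : ℕ} (A : Matrix (Fin n) (Fin n) ℤ) : ℕ :=
  (Finset.univ.filter (fun p : Fin n × Fin n => A p.1 p.2 = 1)).card

/-- The number of `-1` entries of a matrix. -/
def Nminus {n : ℕ} (A : Matrix (Fin n) (Fin n) ℤ) : ℕ :=
  (Finset.univ.filter (fun p : Fin n × Fin n => A p.1 p.2 = -1)).card

/-- The skewed summation of an `n×n` matrix `A`:
`a*_{ij} = i + j − 2·Σ_{i'<i} Σ_{j'<j} a_{i'j'}` for `0 ≤ i,j ≤ n`. -/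
def skewSum {n : ℕ} (A : Matrix (Fin n) (Fin n) ℤ) :
    Matrix (Fin (n + 1)) (Fin (n + 1)) ℤ :=
  fun i j => (i : ℤ) + (j : ℤ) -
    2 * ∑ i' : Fin n, ∑ j' : Fin n,
      (if (i' : ℕ) < (i : ℕ) ∧ (j' : ℕ) < (j : ℕ) then A i' j' else 0)

/-- The `(n+1)×(n+1)` integer matrices `M = (a*_{ij})_{0≤i,j≤n}` satisfying the
boundary conditions `a*_{i0} = a*_{0i} = i`, `a*_{in} = a*_{ni} = n − i`, and
`|a*_{ij} − a*_{i'j'}| = 1` for adjacent index pairs. -/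
def IsSkewedSummation (n : ℕ) (M : Matrix (Fin (n + 1)) (Fin (n + 1)) ℤ) : Prop :=
  (∀ i : Fin (n + 1), M i 0 = (i : ℤ) ∧ M 0 i = (i : ℤ) ∧
    M i (Fin.last n) = (n : ℤ) - (i : ℤ) ∧ M (Fin.last n) i = (n : ℤ) - (i : ℤ)) ∧
  (∀ i j k : Fin (n + 1), (j : ℕ) + 1 = (k : ℕ) →
    |M i j - M i k| = 1 ∧ |M j i - M k i| = 1)


section SkewSumHelpers
variable {n : ℕ}


lemma sum_ite_eq_nat (f : Fin n → ℤ) (m : ℕ) :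
    (∑ i : Fin n, if (i : ℕ) = m then f i else 0) = if h : m < n then f ⟨m, h⟩ else 0 := by
  by_cases h : m < n
  · rw [dif_pos h]
    have : ∀ i : Fin n, (if (i : ℕ) = m then f i else 0) = if i = ⟨m, h⟩ then f i else 0 := by
      intro i
      congr 1
      simp [Fin.ext_iff]
    rw [Finset.sum_congr rfl fun i _ => this i, Finset.sum_ite_eq' Finset.univ ⟨m, h⟩ f]
    simp
  · rw [dif_neg h]
    apply Finset.sum_eq_zero
    intro i _
    rw [if_neg]
    omega

lemma sum_ite_lt_succ (g : Fin n → ℤ) (m : ℕ) (hm : m < n) :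
    (∑ i : Fin n, if (i : ℕ) < m + 1 then g i else 0)
      = (∑ i : Fin n, if (i : ℕ) < m then g i else 0) + g ⟨m, hm⟩ := by
  have key : ∀ i : Fin n, (if (i : ℕ) < m + 1 then g i else 0)
      = (if (i : ℕ) < m then g i else 0) + (if (i : ℕ) = m then g i else 0) := by
    intro i
    by_cases h1 : (i : ℕ) = m
    · rw [if_pos (by omega), if_neg (by omega), if_pos h1]; ring
    · rw [if_neg h1]
      by_cases h2 : (i : ℕ) < m
      · rw [if_pos (by omega), if_pos h2]; ring
      · rw [if_neg (by omega), if_neg h2]; ring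
  rw [Finset.sum_congr rfl fun i _ => key i, Finset.sum_add_distrib, sum_ite_eq_nat, dif_pos hm]

lemma sum_ite_lt_eq_range (g : Fin n → ℤ) (g' : ℕ → ℤ)
    (hg : ∀ i : Fin n, g' i = g i) :
    ∀ m, m ≤ n → (∑ i : Fin n, if (i : ℕ) < m then g i else 0) = ∑ t ∈ Finset.range m, g' t := by
  intro m
  induction m with
  | zero => simp
  | succ m ih =>
    intro hm
    rw [Finset.sum_range_succ, ← ih (by omega), sum_ite_lt_succ g m (by omega)]
    congr 1
    exact (hg ⟨m, by omega⟩).symm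

lemma sum_ite_lt_stable (g : Fin n → ℤ) (m : ℕ) (hm : n ≤ m) :
    (∑ i : Fin n, if (i : ℕ) < m then g i else 0) = ∑ i : Fin n, g i := by
  apply Finset.sum_congr rfl
  intro i _
  rw [if_pos (by omega)]

lemma colPartial_mem {A : Matrix (Fin n) (Fin n) ℤ} (hA : IsASM A) (j : Fin n) (m : ℕ) :
    (∑ i : Fin n, if (i : ℕ) < m then A i j else 0) = 0 ∨
    (∑ i : Fin n, if (i : ℕ) < m then A i j else 0) = 1 := by
  obtain ⟨hE, hR, hC, hRalt, hCalt⟩ := hA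
  set P : ℕ → ℤ := fun m => ∑ i : Fin n, if (i : ℕ) < m then A i j else 0 with hP
  show P m = 0 ∨ P m = 1
  have Pstable : ∀ m, n ≤ m → P m = 1 := by
    intro m hm
    rw [hP]
    simp only
    rw [sum_ite_lt_stable]
    · exact hC j
    · exact hm
  have inv : ∀ m, ((∀ i : Fin n, (i : ℕ) < m → A i j = 0) ∧ P m = 0) ∨
      (∃ s t : Fin n, (s : ℕ) ≤ (t : ℕ) ∧ (t : ℕ) < m ∧ A s j ≠ 0 ∧ A t j ≠ 0 ∧
        (∀ i : Fin n, (i : ℕ) < (s : ℕ) → A i j = 0) ∧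
        (∀ i : Fin n, (t : ℕ) < (i : ℕ) → (i : ℕ) < m → A i j = 0) ∧
        2 * P m = A s j + A t j) := by
    intro m
    induction m with
    | zero =>
      left
      constructor
      · intro i h; omega
      · rw [hP]; simp
    | succ m ih =>
      by_cases hm : m < n
      · have hstep : P (m + 1) = P m + A ⟨m, hm⟩ j := sum_ite_lt_succ _ m hm
        by_cases ha : A ⟨m, hm⟩ j = 0
        · rcases ih with ⟨hz, h0⟩ | ⟨s, t, hst, htm, hs, ht, hzs, hzt, hsum⟩
          · left
            refine ⟨?_, by rw [hstep, h0, ha]; ring⟩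
            intro i hi
            rcases Nat.lt_or_ge (i : ℕ) m with h | h
            · exact hz i h
            · have : i = ⟨m, hm⟩ := Fin.ext (by simp only [Fin.val_mk]; omega)
              rw [this]; exact ha
          · right
            refine ⟨s, t, hst, by omega, hs, ht, hzs, ?_, by rw [hstep, ha]; omega⟩
            intro i h1 h2
            rcases Nat.lt_or_ge (i : ℕ) m with h | h
            · exact hzt i h1 h
            · have : i = ⟨m, hm⟩ := Fin.ext (by simp only [Fin.val_mk]; omega)
              rw [this]; exact ha
        · rcases ih with ⟨hz, h0⟩ | ⟨s, t, hst, htm, hs, ht, hzs, hzt, hsum⟩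
          · right
            refine ⟨⟨m, hm⟩, ⟨m, hm⟩, le_refl _, by simp, ha, ha, ?_, ?_, ?_⟩
            · intro i hi; exact hz i hi
            · intro i h1 h2; exfalso; simp at h1 h2; omega
            · rw [hstep, h0]; ring
          · have halt : A ⟨m, hm⟩ j = -A t j := by
              apply hCalt j t ⟨m, hm⟩ (by rw [Fin.lt_def]; exact htm) ht ha
              intro k h1 h2
              rw [Fin.lt_def] at h1 h2
              exact hzt k h1 (by simpa using h2)
            right
            refine ⟨s, ⟨m, hm⟩, by simp; omega, by simp, hs, ha, hzs, ?_, ?_⟩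
            · intro i h1 h2; exfalso; simp at h1; omega
            · rw [hstep]; rw [halt] at *; omega
      · have hstep : P (m + 1) = P m := by
          rw [hP]; simp only
          rw [sum_ite_lt_stable _ _ (by omega), sum_ite_lt_stable _ _ (by omega)]
        rcases ih with ⟨hz, h0⟩ | ⟨s, t, hst, htm, hs, ht, hzs, hzt, hsum⟩
        · left
          exact ⟨fun i hi => hz i (by omega), by rw [hstep]; exact h0⟩
        · right
          exact ⟨s, t, hst, by omega, hs, ht, hzs, fun i h1 h2 => hzt i h1 (by omega),
            by rw [hstep]; exact hsum⟩
  rcases inv n with ⟨hz, h0⟩ | ⟨s', t', hst', htm', hs', ht', hzs', hzt', hsum'⟩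
  · rw [Pstable n le_rfl] at h0; exact absurd h0 one_ne_zero
  · rw [Pstable n le_rfl] at hsum'
    have hsval : A s' j = 1 := by have := hE s' j; have := hE t' j; omega
    rcases inv m with ⟨hz, h0⟩ | ⟨s, t, hst, htm, hs, ht, hzs, hzt, hsum⟩
    · left; exact h0
    · have hss : s = s' := by
        rcases Nat.lt_trichotomy (s : ℕ) (s' : ℕ) with h | h | h
        · exact absurd (hzs' s h) hs
        · exact Fin.ext h
        · exact absurd (hzs s' h) hs'
      rw [hss, hsval] at hsum
      have := hE t j
      omega


lemma IsASM.transpose {A : Matrix (Fin n) (Fin n) ℤ} (h : IsASM A) : IsASM (Matrix.transpose A) := by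
  obtain ⟨hE, hR, hC, hRalt, hCalt⟩ := h
  exact ⟨fun i j => hE j i, hC, hR,
    fun i j₁ j₂ h h1 h2 hz => hCalt i j₁ j₂ h h1 h2 hz,
    fun j i₁ i₂ h h1 h2 hz => hRalt j i₁ i₂ h h1 h2 hz⟩

lemma rowPartial_mem {A : Matrix (Fin n) (Fin n) ℤ} (hA : IsASM A) (i : Fin n) (m : ℕ) :
    (∑ j : Fin n, if (j : ℕ) < m then A i j else 0) = 0 ∨
    (∑ j : Fin n, if (j : ℕ) < m then A i j else 0) = 1 :=
  colPartial_mem hA.transpose i m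

/-- The double partial sum. -/
def DS {n : ℕ} (A : Matrix (Fin n) (Fin n) ℤ) (a b : ℕ) : ℤ :=
  ∑ i' : Fin n, ∑ j' : Fin n, if (i' : ℕ) < a ∧ (j' : ℕ) < b then A i' j' else 0

lemma skewSum_eq (A : Matrix (Fin n) (Fin n) ℤ) (i j : Fin (n + 1)) :
    skewSum A i j = (i : ℤ) + (j : ℤ) - 2 * DS A i j := rfl

lemma DS_eq (A : Matrix (Fin n) (Fin n) ℤ) (a b : ℕ) :
    DS A a b = ∑ i' : Fin n,
      (if (i' : ℕ) < a then (∑ j' : Fin n, if (j' : ℕ) < b then A i' j' else 0) else 0) := by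
  apply Finset.sum_congr rfl
  intro i' _
  by_cases h : (i' : ℕ) < a
  · simp [h]
  · simp [h]

lemma DS_eq' (A : Matrix (Fin n) (Fin n) ℤ) (a b : ℕ) :
    DS A a b = ∑ j' : Fin n,
      (if (j' : ℕ) < b then (∑ i' : Fin n, if (i' : ℕ) < a then A i' j' else 0) else 0) := by
  rw [DS, Finset.sum_comm]
  apply Finset.sum_congr rfl
  intro j' _
  by_cases h : (j' : ℕ) < b
  · simp [h, and_comm]
  · simp [h]

lemma DS_zero_right (A : Matrix (Fin n) (Fin n) ℤ) (a : ℕ) : DS A a 0 = 0 := by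
  simp [DS]

lemma DS_zero_left (A : Matrix (Fin n) (Fin n) ℤ) (b : ℕ) : DS A 0 b = 0 := by
  simp [DS]

lemma DS_row_succ (A : Matrix (Fin n) (Fin n) ℤ) (a b : ℕ) (ha : a < n) :
    DS A (a + 1) b = DS A a b + ∑ j' : Fin n, (if (j' : ℕ) < b then A ⟨a, ha⟩ j' else 0) := by
  rw [DS_eq, DS_eq, sum_ite_lt_succ _ a ha]

lemma DS_col_succ (A : Matrix (Fin n) (Fin n) ℤ) (a b : ℕ) (hb : b < n) :
    DS A a (b + 1) = DS A a b + ∑ i' : Fin n, (if (i' : ℕ) < a then A i' ⟨b, hb⟩ else 0) := by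
  rw [DS_eq', DS_eq', sum_ite_lt_succ _ b hb]

lemma DS_full_right {A : Matrix (Fin n) (Fin n) ℤ} (hA : IsASM A) (a : ℕ) (ha : a ≤ n) :
    DS A a n = (a : ℤ) := by
  rw [DS_eq]
  have h1 : ∀ i' : Fin n, (∑ j' : Fin n, if (j' : ℕ) < n then A i' j' else 0) = 1 := by
    intro i'
    rw [sum_ite_lt_stable _ _ le_rfl]
    exact hA.2.1 i'
  calc (∑ i' : Fin n, if (i' : ℕ) < a then
          (∑ j' : Fin n, if (j' : ℕ) < n then A i' j' else 0) else 0)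
      = ∑ i' : Fin n, (if (i' : ℕ) < a then (1 : ℤ) else 0) := by
        apply Finset.sum_congr rfl
        intro i' _
        rcases Classical.em ((i' : ℕ) < a) with h | h
        · rw [if_pos h, if_pos h, h1 i']
        · rw [if_neg h, if_neg h]
    _ = ∑ _t ∈ Finset.range a, (1 : ℤ) := sum_ite_lt_eq_range (fun _ => (1:ℤ)) (fun _ => (1:ℤ)) (fun _ => rfl) a ha
    _ = (a : ℤ) := by simp

lemma DS_full_left {A : Matrix (Fin n) (Fin n) ℤ} (hA : IsASM A) (b : ℕ) (hb : b ≤ n) :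
    DS A n b = (b : ℤ) := by
  rw [DS_eq']
  have h1 : ∀ j' : Fin n, (∑ i' : Fin n, if (i' : ℕ) < n then A i' j' else 0) = 1 := by
    intro j'
    rw [sum_ite_lt_stable _ _ le_rfl]
    exact hA.2.2.1 j'
  calc (∑ j' : Fin n, if (j' : ℕ) < b then
          (∑ i' : Fin n, if (i' : ℕ) < n then A i' j' else 0) else 0)
      = ∑ j' : Fin n, (if (j' : ℕ) < b then (1 : ℤ) else 0) := by
        apply Finset.sum_congr rfl
        intro j' _
        rcases Classical.em ((j' : ℕ) < b) with h | h
        · rw [if_pos h, if_pos h, h1 j']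
        · rw [if_neg h, if_neg h]
    _ = ∑ _t ∈ Finset.range b, (1 : ℤ) := sum_ite_lt_eq_range (fun _ => (1:ℤ)) (fun _ => (1:ℤ)) (fun _ => rfl) b hb
    _ = (b : ℤ) := by simp

lemma skewSum_mem {A : Matrix (Fin n) (Fin n) ℤ} (hA : IsASM A) :
    IsSkewedSummation n (skewSum A) := by
  constructor
  · intro i
    refine ⟨?_, ?_, ?_, ?_⟩
    · rw [skewSum_eq]
      have : ((0 : Fin (n + 1)) : ℕ) = 0 := rfl
      rw [this, DS_zero_right]
      simp
    · rw [skewSum_eq]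
      have : ((0 : Fin (n + 1)) : ℕ) = 0 := rfl
      rw [this, DS_zero_left]
      simp
    · rw [skewSum_eq]
      have : ((Fin.last n : Fin (n + 1)) : ℕ) = n := rfl
      rw [this, DS_full_right hA i (by omega)]
      ring
    · rw [skewSum_eq]
      have : ((Fin.last n : Fin (n + 1)) : ℕ) = n := rfl
      rw [this, DS_full_left hA i (by omega)]
      ring
  · intro i j k hjk
    have hjn : (j : ℕ) < n := by have := k.isLt; omega
    constructor
    · have hDS : DS A i k = DS A i j +
          ∑ i' : Fin n, (if (i' : ℕ) < (i : ℕ) then A i' ⟨j, hjn⟩ else 0) := by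
        rw [← hjk]
        exact DS_col_succ A i j hjn
      rw [skewSum_eq, skewSum_eq, hDS]
      rcases colPartial_mem hA ⟨j, hjn⟩ (i : ℕ) with h | h
      · rw [h]
        have : ((j : ℤ)) - (k : ℤ) = -1 := by
          have : ((k : ℕ) : ℤ) = (j : ℕ) + 1 := by rw [← hjk]; push_cast; ring
          omega
        rw [abs_eq (by norm_num)]
        right
        omega
      · rw [h]
        have : ((k : ℕ) : ℤ) = (j : ℕ) + 1 := by rw [← hjk]; push_cast; ring
        rw [abs_eq (by norm_num)]
        left
        omega
    · have hDS : DS A k i = DS A j i +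
          ∑ j' : Fin n, (if (j' : ℕ) < (i : ℕ) then A ⟨j, hjn⟩ j' else 0) := by
        rw [← hjk]
        exact DS_row_succ A j i hjn
      rw [skewSum_eq, skewSum_eq, hDS]
      have hki : ((k : ℕ) : ℤ) = (j : ℕ) + 1 := by rw [← hjk]; push_cast; ring
      rcases rowPartial_mem hA ⟨j, hjn⟩ (i : ℕ) with h | h
      · rw [h]
        rw [abs_eq (by norm_num)]
        right
        omega
      · rw [h]
        rw [abs_eq (by norm_num)]
        left
        omega


-- ### second difference

lemma skewSum_secondDiff (A : Matrix (Fin n) (Fin n) ℤ) (i j : Fin n) :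
    skewSum A i.castSucc j.succ + skewSum A i.succ j.castSucc
      - skewSum A i.castSucc j.castSucc - skewSum A i.succ j.succ = 2 * A i j := by
  have h1 := DS_col_succ A (i : ℕ) (j : ℕ) j.isLt
  have h2 := DS_col_succ A ((i : ℕ) + 1) (j : ℕ) j.isLt
  have h3 := sum_ite_lt_succ (fun i' => A i' ⟨(j : ℕ), j.isLt⟩) (i : ℕ) i.isLt
  simp only [Fin.eta] at h1 h2 h3
  simp only [skewSum_eq, Fin.coe_castSucc, Fin.val_succ]
  push_cast
  rw [h1, h2, h3]
  ring

lemma skewSum_injOn : Set.InjOn (skewSum (n := n)) {A | IsASM A} := by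
  intro A _ B _ h
  funext i j
  have hA := skewSum_secondDiff A i j
  have hB := skewSum_secondDiff B i j
  rw [h] at hA
  linarith

-- ### recovery

/-- Recover a matrix from its skewed summation by second differences. -/
def recover {n : ℕ} (M : Matrix (Fin (n + 1)) (Fin (n + 1)) ℤ) :
    Matrix (Fin n) (Fin n) ℤ :=
  fun i j => (M i.castSucc j.succ + M i.succ j.castSucc
    - M i.castSucc j.castSucc - M i.succ j.succ) / 2

variable {M : Matrix (Fin (n + 1)) (Fin (n + 1)) ℤ}

/-- horizontal differences are ±1 -/
lemma hdh (hM : IsSkewedSummation n M) (r : Fin (n + 1)) (j : Fin n) :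
    M r j.succ - M r j.castSucc = 1 ∨ M r j.succ - M r j.castSucc = -1 := by
  have h := (hM.2 r j.castSucc j.succ (by simp)).1
  rw [abs_eq (by norm_num)] at h
  omega

/-- vertical differences are ±1 -/
lemma hdv (hM : IsSkewedSummation n M) (i : Fin n) (c : Fin (n + 1)) :
    M i.succ c - M i.castSucc c = 1 ∨ M i.succ c - M i.castSucc c = -1 := by
  have h := (hM.2 c i.castSucc i.succ (by simp)).2
  rw [abs_eq (by norm_num)] at h
  omega

lemma recover_two_mul (hM : IsSkewedSummation n M) (i j : Fin n) :
    2 * recover M i j = M i.castSucc j.succ + M i.succ j.castSucc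
      - M i.castSucc j.castSucc - M i.succ j.succ := by
  have ha := hdh hM i.castSucc j
  have hb := hdh hM i.succ j
  have hnum : M i.castSucc j.succ + M i.succ j.castSucc
      - M i.castSucc j.castSucc - M i.succ j.succ
      = (M i.castSucc j.succ - M i.castSucc j.castSucc)
        - (M i.succ j.succ - M i.succ j.castSucc) := by ring
  rw [recover, hnum]
  rcases ha with ha | ha <;> rcases hb with hb | hb <;> rw [ha, hb] <;> decide

lemma recover_mem (hM : IsSkewedSummation n M) (i j : Fin n) :
    recover M i j = -1 ∨ recover M i j = 0 ∨ recover M i j = 1 := by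
  have ha := hdh hM i.castSucc j
  have hb := hdh hM i.succ j
  have h2 := recover_two_mul hM i j
  omega

/-- `2 * recover` as difference of vertical differences. -/
lemma recover_dv (hM : IsSkewedSummation n M) (i j : Fin n) :
    2 * recover M i j = (M i.succ j.castSucc - M i.castSucc j.castSucc)
      - (M i.succ j.succ - M i.castSucc j.succ) := by
  rw [recover_two_mul hM]
  ring

lemma IsSkewedSummation.transpose (hM : IsSkewedSummation n M) :
    IsSkewedSummation n (Matrix.transpose M) := by
  obtain ⟨hB, hAdj⟩ := hM
  constructor
  · intro i
    obtain ⟨h1, h2, h3, h4⟩ := hB i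
    exact ⟨h2, h1, h4, h3⟩
  · intro i j k hjk
    obtain ⟨h1, h2⟩ := hAdj i j k hjk
    exact ⟨h2, h1⟩

lemma recover_transpose :
    recover (Matrix.transpose M) = Matrix.transpose (recover M) := by
  funext i j
  show (M j.succ i.castSucc + M j.castSucc i.succ - M j.castSucc i.castSucc
    - M j.succ i.succ) / 2 = _
  show _ = (M j.castSucc i.succ + M j.succ i.castSucc - M j.castSucc i.castSucc
    - M j.succ i.succ) / 2
  congr 1
  ring

/-- telescoping along a row -/
lemma tele_row (r : Fin (n + 1)) :
    ∑ j : Fin n, (M r j.succ - M r j.castSucc) = M r (Fin.last n) - M r 0 := by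
  set f : ℕ → ℤ := fun t => M r ⟨min t n, by omega⟩ with hf
  have h1 : ∀ j : Fin n, M r j.succ - M r j.castSucc = f ((j : ℕ) + 1) - f (j : ℕ) := by
    intro j
    have e1 : (⟨min ((j : ℕ) + 1) n, by omega⟩ : Fin (n + 1)) = j.succ := by
      apply Fin.ext
      simp only [Fin.val_succ, Fin.val_mk]
      omega
    have e2 : (⟨min (j : ℕ) n, by omega⟩ : Fin (n + 1)) = j.castSucc := by
      apply Fin.ext
      simp only [Fin.coe_castSucc, Fin.val_mk]
      omega
    rw [hf]
    simp only
    rw [e1, e2]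
  rw [Finset.sum_congr rfl fun j _ => h1 j]
  rw [Fin.sum_univ_eq_sum_range (fun t => f (t + 1) - f t) n, Finset.sum_range_sub]
  have e3 : (⟨min n n, by omega⟩ : Fin (n + 1)) = Fin.last n := by
    apply Fin.ext; simp [Fin.last]
  have e4 : (⟨min 0 n, by omega⟩ : Fin (n + 1)) = 0 := by
    apply Fin.ext; simp
  rw [hf]
  simp only
  rw [e3, e4]

lemma recover_row_sum (hM : IsSkewedSummation n M) (i : Fin n) :
    ∑ j, recover M i j = 1 := by
  have h2 : 2 * ∑ j, recover M i j
      = (∑ j : Fin n, (M i.castSucc j.succ - M i.castSucc j.castSucc))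
        - (∑ j : Fin n, (M i.succ j.succ - M i.succ j.castSucc)) := by
    rw [Finset.mul_sum, ← Finset.sum_sub_distrib]
    apply Finset.sum_congr rfl
    intro j _
    have := recover_two_mul hM i j
    linarith
  rw [tele_row i.castSucc, tele_row i.succ] at h2
  obtain ⟨hc1, _, hc3, _⟩ := hM.1 i.castSucc
  obtain ⟨hs1, _, hs3, _⟩ := hM.1 i.succ
  rw [hc1, hc3, hs1, hs3] at h2
  have hcv : ((i.castSucc : ℕ) : ℤ) = (i : ℕ) := by simp
  have hsv : ((i.succ : ℕ) : ℤ) = (i : ℕ) + 1 := by simp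
  rw [hcv, hsv] at h2
  linarith

lemma recover_row_alt (hM : IsSkewedSummation n M) (i : Fin n) (j₁ j₂ : Fin n)
    (hlt : j₁ < j₂) (h1 : recover M i j₁ ≠ 0) (h2 : recover M i j₂ ≠ 0)
    (hz : ∀ k, j₁ < k → k < j₂ → recover M i k = 0) :
    recover M i j₂ = -recover M i j₁ := by
  set dvf : Fin (n + 1) → ℤ := fun c => M i.succ c - M i.castSucc c with hdvf
  have hpm : ∀ c, dvf c = 1 ∨ dvf c = -1 := fun c => hdv hM i c
  have hrec : ∀ j : Fin n, 2 * recover M i j = dvf j.castSucc - dvf j.succ := by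
    intro j
    rw [recover_dv hM]
  -- nonzero entries
  have key : ∀ j : Fin n, recover M i j ≠ 0 →
      recover M i j = dvf j.castSucc ∧ dvf j.succ = -dvf j.castSucc := by
    intro j hj
    have h2j := hrec j
    rcases hpm j.castSucc with h | h <;> rcases hpm j.succ with h' | h' <;>
      rw [h, h'] at h2j <;> rw [h, h'] <;> constructor <;> omega
  -- zero entries propagate dvf
  have hzero : ∀ j : Fin n, recover M i j = 0 → dvf j.castSucc = dvf j.succ := by
    intro j hj
    have := hrec j
    omega
  have hlt' : (j₁ : ℕ) < (j₂ : ℕ) := hlt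
  have chain : ∀ m, (j₁ : ℕ) < m → ∀ hm : m ≤ (j₂ : ℕ),
      dvf ⟨m, by have := j₂.isLt; omega⟩ = dvf j₁.succ := by
    intro m
    induction m with
    | zero => intro h; exact absurd h (by omega)
    | succ m ih =>
      intro h1' h2'
      by_cases hm : (j₁ : ℕ) < m
      · have hmn : m < n := by have := j₂.isLt; omega
        have hk : recover M i ⟨m, hmn⟩ = 0 := by
          apply hz ⟨m, hmn⟩
          · show (j₁ : ℕ) < m
            exact hm
          · show m < (j₂ : ℕ)
            omega
        have hstep := hzero ⟨m, hmn⟩ hk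
        have e1 : (⟨m, hmn⟩ : Fin n).castSucc = ⟨m, by omega⟩ := by
          apply Fin.ext; simp
        have e2 : (⟨m, hmn⟩ : Fin n).succ = ⟨m + 1, by omega⟩ := by
          apply Fin.ext; simp
        rw [e1, e2] at hstep
        rw [← hstep]
        exact ih hm (by omega)
      · have hm' : m = (j₁ : ℕ) := by omega
        have e : (⟨m + 1, by have := j₂.isLt; omega⟩ : Fin (n + 1)) = j₁.succ := by
          apply Fin.ext; simp only [Fin.val_succ, Fin.val_mk]; omega
        rw [e]
  obtain ⟨k1, k1'⟩ := key j₁ h1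
  obtain ⟨k2, _⟩ := key j₂ h2
  have e : j₂.castSucc = (⟨(j₂ : ℕ), by have := j₂.isLt; omega⟩ : Fin (n + 1)) := by
    apply Fin.ext; simp
  rw [k2, e, chain (j₂ : ℕ) hlt' le_rfl, k1', k1]


lemma recover_isASM (hM : IsSkewedSummation n M) : IsASM (recover M) := by
  have hT := hM.transpose
  refine ⟨recover_mem hM, recover_row_sum hM, ?_, recover_row_alt hM, ?_⟩
  · intro j
    have h := recover_row_sum hT j
    rw [recover_transpose] at h
    simpa using h
  · intro j i₁ i₂ hlt h1 h2 hz
    have key := recover_row_alt hT j i₁ i₂ hlt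
    rw [recover_transpose] at key
    simp only [Matrix.transpose_apply] at key
    exact key h1 h2 hz

lemma skewSum_recover (hM : IsSkewedSummation n M) : skewSum (recover M) = M := by
  funext i j
  rw [skewSum_eq]
  set A := recover M with hA
  set G : ℕ → ℕ → ℤ := fun t u => if h : t < n ∧ u < n then A ⟨t, h.1⟩ ⟨u, h.2⟩ else 0
    with hG
  have hin : (i : ℕ) ≤ n := by have := i.isLt; omega
  have hjn : (j : ℕ) ≤ n := by have := j.isLt; omega
  have hDS : DS A (i : ℕ) (j : ℕ)
      = ∑ t ∈ Finset.range (i : ℕ), ∑ u ∈ Finset.range (j : ℕ), G t u := by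
    rw [DS_eq]
    apply sum_ite_lt_eq_range _ _ ?_ _ hin
    intro i'
    refine (sum_ite_lt_eq_range (fun j' => A i' j') (fun u => G (i' : ℕ) u) ?_
      (j : ℕ) hjn).symm
    intro j'
    show G (i' : ℕ) (j' : ℕ) = A i' j'
    rw [hG]
    simp only
    rw [dif_pos ⟨i'.isLt, j'.isLt⟩]
  set F : ℕ → ℕ → ℤ := fun t u => M ⟨min t n, by omega⟩ ⟨min u n, by omega⟩ with hF
  have h2G : ∀ t u, t < n → u < n →
      2 * G t u = F t (u + 1) + F (t + 1) u - F t u - F (t + 1) (u + 1) := by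
    intro t u ht hu
    rw [hG]
    simp only
    rw [dif_pos ⟨ht, hu⟩]
    have hrec := recover_two_mul hM ⟨t, ht⟩ ⟨u, hu⟩
    have eA : F t (u + 1) = M (⟨t, ht⟩ : Fin n).castSucc (⟨u, hu⟩ : Fin n).succ := by
      rw [hF]
      simp only
      rw [show (⟨min t n, by omega⟩ : Fin (n + 1)) = (⟨t, ht⟩ : Fin n).castSucc from
        Fin.ext (by simp only [Fin.coe_castSucc, Fin.val_mk]; omega)]
      rw [show (⟨min (u + 1) n, by omega⟩ : Fin (n + 1)) = (⟨u, hu⟩ : Fin n).succ from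
        Fin.ext (by simp only [Fin.val_succ, Fin.val_mk]; omega)]
    have eB : F (t + 1) u = M (⟨t, ht⟩ : Fin n).succ (⟨u, hu⟩ : Fin n).castSucc := by
      rw [hF]
      simp only
      rw [show (⟨min (t + 1) n, by omega⟩ : Fin (n + 1)) = (⟨t, ht⟩ : Fin n).succ from
        Fin.ext (by simp only [Fin.val_succ, Fin.val_mk]; omega)]
      rw [show (⟨min u n, by omega⟩ : Fin (n + 1)) = (⟨u, hu⟩ : Fin n).castSucc from
        Fin.ext (by simp only [Fin.coe_castSucc, Fin.val_mk]; omega)]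
    have eC : F t u = M (⟨t, ht⟩ : Fin n).castSucc (⟨u, hu⟩ : Fin n).castSucc := by
      rw [hF]
      simp only
      rw [show (⟨min t n, by omega⟩ : Fin (n + 1)) = (⟨t, ht⟩ : Fin n).castSucc from
        Fin.ext (by simp only [Fin.coe_castSucc, Fin.val_mk]; omega)]
      rw [show (⟨min u n, by omega⟩ : Fin (n + 1)) = (⟨u, hu⟩ : Fin n).castSucc from
        Fin.ext (by simp only [Fin.coe_castSucc, Fin.val_mk]; omega)]
    have eD : F (t + 1) (u + 1) = M (⟨t, ht⟩ : Fin n).succ (⟨u, hu⟩ : Fin n).succ := by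
      rw [hF]
      simp only
      rw [show (⟨min (t + 1) n, by omega⟩ : Fin (n + 1)) = (⟨t, ht⟩ : Fin n).succ from
        Fin.ext (by simp only [Fin.val_succ, Fin.val_mk]; omega)]
      rw [show (⟨min (u + 1) n, by omega⟩ : Fin (n + 1)) = (⟨u, hu⟩ : Fin n).succ from
        Fin.ext (by simp only [Fin.val_succ, Fin.val_mk]; omega)]
    rw [eA, eB, eC, eD]
    exact hrec
  have hinner : ∀ t, t < n → ∑ u ∈ Finset.range (j : ℕ), 2 * G t u
      = (F t (j : ℕ) - F (t + 1) (j : ℕ)) - (F t 0 - F (t + 1) 0) := by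
    intro t ht'
    have hcg : ∀ u ∈ Finset.range (j : ℕ), 2 * G t u
        = (fun u => F t u - F (t + 1) u) (u + 1) - (fun u => F t u - F (t + 1) u) u := by
      intro u hu
      rw [Finset.mem_range] at hu
      have hu' : u < n := by omega
      have := h2G t u ht' hu'
      simp only
      linarith
    rw [Finset.sum_congr rfl hcg, Finset.sum_range_sub (fun u => F t u - F (t + 1) u) (j : ℕ)]
  have h2DS : 2 * DS A (i : ℕ) (j : ℕ)
      = (F 0 (j : ℕ) - F 0 0) - (F (i : ℕ) (j : ℕ) - F (i : ℕ) 0) := by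
    rw [hDS, Finset.mul_sum]
    have hcg : ∀ t ∈ Finset.range (i : ℕ), 2 * ∑ u ∈ Finset.range (j : ℕ), G t u
        = (fun t => F t (j : ℕ) - F t 0) t - (fun t => F t (j : ℕ) - F t 0) (t + 1) := by
      intro t ht
      rw [Finset.mem_range] at ht
      rw [Finset.mul_sum, hinner t (by omega)]
      simp only
      ring
    rw [Finset.sum_congr rfl hcg, Finset.sum_range_sub' (fun t => F t (j : ℕ) - F t 0) (i : ℕ)]
  have hF0j : F 0 (j : ℕ) = (j : ℤ) := by
    rw [hF]
    simp only
    rw [show (⟨min 0 n, by omega⟩ : Fin (n + 1)) = 0 from Fin.ext (by simp)]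
    rw [show (⟨min (j : ℕ) n, by omega⟩ : Fin (n + 1)) = j from Fin.ext (by simp; omega)]
    exact (hM.1 j).2.1
  have hF00 : F 0 0 = 0 := by
    rw [hF]
    simp only
    rw [show (⟨min 0 n, by omega⟩ : Fin (n + 1)) = 0 from Fin.ext (by simp)]
    have := (hM.1 0).1
    simpa using this
  have hFij : F (i : ℕ) (j : ℕ) = M i j := by
    rw [hF]
    simp only
    rw [show (⟨min (i : ℕ) n, by omega⟩ : Fin (n + 1)) = i from Fin.ext (by simp; omega)]
    rw [show (⟨min (j : ℕ) n, by omega⟩ : Fin (n + 1)) = j from Fin.ext (by simp; omega)]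
  have hFi0 : F (i : ℕ) 0 = (i : ℤ) := by
    rw [hF]
    simp only
    rw [show (⟨min (i : ℕ) n, by omega⟩ : Fin (n + 1)) = i from Fin.ext (by simp; omega)]
    rw [show (⟨min 0 n, by omega⟩ : Fin (n + 1)) = 0 from Fin.ext (by simp)]
    exact (hM.1 i).1
  rw [hF0j, hF00, hFij, hFi0] at h2DS
  linarith
end SkewSumHelpers

/-- Skewed summation is a bijection from `n×n` alternating sign matrices onto the
set of `(n+1)×(n+1)` integer matrices with the prescribed boundary values and
with adjacent entries differing by exactly `1`. -/
theorem skewSum_bijOn (n : ℕ) :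
    Set.BijOn (skewSum (n := n)) {A | IsASM A} {M | IsSkewedSummation n M} := by
  refine ⟨fun A hA => skewSum_mem hA, skewSum_injOn,
    fun M hM => ⟨recover M, recover_isASM hM, skewSum_recover hM⟩⟩
end

section
/- The number of domino tilings of the Aztec diamond of order n equals the sum over all (n+1)×(n+1) alternating sign matrices B of 2^{N₋(B)}, where N₋(B) is the number of −1 entries of B. -/
open Classical

noncomputable def ind (P : Prop) : ℤ := if P then 1 else 0

lemma ind_pos {P : Prop} (h : P) : ind P = 1 := if_pos h
lemma ind_neg {P : Prop} (h : ¬ P) : ind P = 0 := if_neg h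
lemma ind_cases (P : Prop) : (ind P = 0 ∧ ¬ P) ∨ (ind P = 1 ∧ P) := by
  by_cases h : P
  · exact Or.inr ⟨ind_pos h, h⟩
  · exact Or.inl ⟨ind_neg h, h⟩

lemma aztec_iff_s11 (n : ℕ) (a b : ℤ) :
    AztecCell n (a, b) ↔ (a + 1) + (b + 1) ≤ (n:ℤ) + 1 ∧ (a + 1) + (-b) ≤ (n:ℤ) + 1 ∧
      (-a) + (b + 1) ≤ (n:ℤ) + 1 ∧ (-a) + (-b) ≤ (n:ℤ) + 1 := by
  have h1 : max |a| |a+1| = max (a+1) (-a) := by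
    rcases le_total 0 a with h | h
    · rw [abs_of_nonneg h, abs_of_nonneg (by omega)]
      omega
    · rw [abs_of_nonpos h]
      rcases le_total 0 (a+1) with h2 | h2
      · rw [abs_of_nonneg h2]; omega
      · rw [abs_of_nonpos h2]; omega
  have h2 : max |b| |b+1| = max (b+1) (-b) := by
    rcases le_total 0 b with h | h
    · rw [abs_of_nonneg h, abs_of_nonneg (by omega)]
      omega
    · rw [abs_of_nonpos h]
      rcases le_total 0 (b+1) with h2 | h2
      · rw [abs_of_nonneg h2]; omega
      · rw [abs_of_nonpos h2]; omega
  unfold AztecCell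
  simp only [h1, h2]
  constructor
  · intro h; omega
  · intro h; omega

lemma mem_cells_true (p q : ℤ) (c : ℤ × ℤ) :
    c ∈ dominoCells ((p,q), true) ↔ c = (p,q) ∨ c = (p+1,q) := by
  simp [dominoCells]

lemma mem_cells_false (p q : ℤ) (c : ℤ × ℤ) :
    c ∈ dominoCells ((p,q), false) ↔ c = (p,q) ∨ c = (p,q+1) := by
  simp [dominoCells]

section
variable {n : ℕ} {T : Set Domino}

/-- any two dominoes of a tiling sharing a cell are equal -/
lemma uniq_of_shared (hT : IsTiling n T) {d d' : Domino} {c : ℤ × ℤ}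
    (hd : d ∈ T) (hd' : d' ∈ T) (hc : c ∈ dominoCells d) (hc' : c ∈ dominoCells d') :
    d = d' := by
  have hcell : AztecCell n c := hT.1 d hd c hc
  obtain ⟨e, _, hu⟩ := hT.2 c hcell
  have h1 := hu d ⟨hd, hc⟩
  have h2 := hu d' ⟨hd', hc'⟩
  rw [h1, h2]

lemma not_mem_of_outside (hT : IsTiling n T) {d : Domino} {c : ℤ × ℤ}
    (hc : c ∈ dominoCells d) (hout : ¬ AztecCell n c) : d ∉ T :=
  fun h => hout (hT.1 d h c hc)

/-- the four dominoes containing a given cell: exactly one is in the tiling -/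
lemma four_dominoes (hT : IsTiling n T) {a b : ℤ} (h : AztecCell n (a,b)) :
    ind (((a,b), true) ∈ T) + ind (((a-1,b), true) ∈ T)
      + ind (((a,b), false) ∈ T) + ind (((a,b-1), false) ∈ T) = 1 := by
  obtain ⟨d, ⟨hdT, hdc⟩, hu⟩ := hT.2 (a,b) h
  have key : ∀ e : Domino, e ∈ T → (a,b) ∈ dominoCells e → e = d := fun e he hce =>
    hu e ⟨he, hce⟩
  have m1 : (a,b) ∈ dominoCells ((a,b), true) := by rw [mem_cells_true]; left; rfl
  have m2 : (a,b) ∈ dominoCells ((a-1,b), true) := by rw [mem_cells_true]; right; simp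
  have m3 : (a,b) ∈ dominoCells ((a,b), false) := by rw [mem_cells_false]; left; rfl
  have m4 : (a,b) ∈ dominoCells ((a,b-1), false) := by rw [mem_cells_false]; right; simp
  have hd4 : d = ((a,b), true) ∨ d = ((a-1,b), true) ∨ d = ((a,b), false) ∨ d = ((a,b-1), false) := by
    obtain ⟨⟨p, q⟩, o⟩ := d
    cases o <;>
      [rw [mem_cells_false] at hdc; rw [mem_cells_true] at hdc] <;>
      rcases hdc with h' | h' <;>
      simp only [Prod.mk.injEq] at h' ⊢ <;>
      simp <;> omega
  have dom_ne : ∀ (x y z w : ℤ) (u v : Bool), (x ≠ z ∨ y ≠ w ∨ u ≠ v) → (((x,y),u) : Domino) ≠ ((z,w),v) := by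
    intro x y z w u v hne heq
    simp only [Prod.mk.injEq] at heq
    rcases hne with h | h | h <;> [exact h heq.1.1; exact h heq.1.2; exact h heq.2]
  rcases hd4 with rfl | rfl | rfl | rfl
  · rw [ind_pos hdT, ind_neg (fun hm => dom_ne _ _ _ _ _ _ (by left; omega) (key _ hm m2)),
      ind_neg (fun hm => dom_ne _ _ _ _ _ _ (by right; right; simp) (key _ hm m3)),
      ind_neg (fun hm => dom_ne _ _ _ _ _ _ (by right; left; omega) (key _ hm m4))]
    norm_num
  · rw [ind_neg (fun hm => dom_ne _ _ _ _ _ _ (by left; omega) (key _ hm m1)), ind_pos hdT,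
      ind_neg (fun hm => dom_ne _ _ _ _ _ _ (by right; right; simp) (key _ hm m3)),
      ind_neg (fun hm => dom_ne _ _ _ _ _ _ (by left; omega) (key _ hm m4))]
    norm_num
  · rw [ind_neg (fun hm => dom_ne _ _ _ _ _ _ (by right; right; simp) (key _ hm m1)),
      ind_neg (fun hm => dom_ne _ _ _ _ _ _ (by right; right; simp) (key _ hm m2)), ind_pos hdT,
      ind_neg (fun hm => dom_ne _ _ _ _ _ _ (by right; left; omega) (key _ hm m4))]
    norm_num
  · rw [ind_neg (fun hm => dom_ne _ _ _ _ _ _ (by right; left; omega) (key _ hm m1)),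
      ind_neg (fun hm => dom_ne _ _ _ _ _ _ (by right; right; simp) (key _ hm m2)),
      ind_neg (fun hm => dom_ne _ _ _ _ _ _ (by right; left; omega) (key _ hm m3)), ind_pos hdT]
    norm_num

end



/-- the edge from `(x,y)` to `(x,y+1)` is interior to a (horizontal) domino of `T` -/
def covN (T : Set Domino) (x y : ℤ) : Prop := ((x-1, y), true) ∈ T
/-- the edge from `(x,y-1)` to `(x,y)` is interior to a domino of `T` -/
def covS (T : Set Domino) (x y : ℤ) : Prop := ((x-1, y-1), true) ∈ T
/-- the edge from `(x,y)` to `(x+1,y)` is interior to a (vertical) domino of `T` -/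
def covE (T : Set Domino) (x y : ℤ) : Prop := ((x, y-1), false) ∈ T
/-- the edge from `(x-1,y)` to `(x,y)` is interior to a domino of `T` -/
def covW (T : Set Domino) (x y : ℤ) : Prop := ((x-1, y-1), false) ∈ T

/-- the ASM entry read off at lattice vertex (x,y) -/
noncomputable def ent (T : Set Domino) (x y : ℤ) : ℤ :=
  1 - ind (covN T x y) - ind (covS T x y) - ind (covE T x y) - ind (covW T x y)

section
variable {n : ℕ} {T : Set Domino}

lemma conflictNE (hT : IsTiling n T) (x y : ℤ) : ¬ (covN T x y ∧ covE T x y) := by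
  rintro ⟨h1, h2⟩
  have := uniq_of_shared (c := (x,y)) hT h1 h2
    (by rw [mem_cells_true]; right; simp [Prod.ext_iff])
    (by rw [mem_cells_false]; right; simp [Prod.ext_iff])
  simp only [Prod.mk.injEq] at this
  exact Bool.noConfusion this.2

lemma conflictSW (hT : IsTiling n T) (x y : ℤ) : ¬ (covS T x y ∧ covW T x y) := by
  rintro ⟨h1, h2⟩
  have := uniq_of_shared (c := (x-1,y-1)) hT h1 h2
    (by rw [mem_cells_true]; left; rfl)
    (by rw [mem_cells_false]; left; rfl)
  simp only [Prod.mk.injEq] at this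
  exact Bool.noConfusion this.2

lemma conflictNW (hT : IsTiling n T) (x y : ℤ) : ¬ (covN T x y ∧ covW T x y) := by
  rintro ⟨h1, h2⟩
  have := uniq_of_shared (c := (x-1,y)) hT h1 h2
    (by rw [mem_cells_true]; left; rfl)
    (by rw [mem_cells_false]; right; simp [Prod.ext_iff])
  simp only [Prod.mk.injEq] at this
  exact Bool.noConfusion this.2

lemma conflictSE (hT : IsTiling n T) (x y : ℤ) : ¬ (covS T x y ∧ covE T x y) := by
  rintro ⟨h1, h2⟩
  have := uniq_of_shared (c := (x,y-1)) hT h1 h2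
    (by rw [mem_cells_true]; right; simp [Prod.ext_iff])
    (by rw [mem_cells_false]; left; rfl)
  simp only [Prod.mk.injEq] at this
  exact Bool.noConfusion this.2

/-- the cell identity in cov-form, at cell (a,b):
covE at (a, b+1) + covS at (a, b+1)  ... we state it exactly as needed. -/
lemma cell_identity (hT : IsTiling n T) {a b : ℤ} (h : AztecCell n (a,b)) :
    ind (covN T (a+1) b) + ind (covS T a (b+1)) + ind (covE T a (b+1)) + ind (covW T (a+1) b) = 1 := by
  have h4 := four_dominoes hT h
  unfold covN covS covE covW
  have e1 : a + 1 - 1 = a := by ring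
  have e2 : b + 1 - 1 = b := by ring
  rw [e1, e2]
  linarith [h4]

end

section
variable {n : ℕ} {T : Set Domino}

lemma cell_step (hT : IsTiling n T) {x y : ℤ} (h : AztecCell n (x, y-1)) :
    ind (covN T (x+1) (y-1)) + ind (covW T (x+1) (y-1))
      + ind (covS T x y) + ind (covE T x y) = 1 := by
  have h4 := four_dominoes hT h
  unfold covN covW covS covE
  rw [show x+1-1 = x from by ring]
  linarith [h4]

lemma col_step (hT : IsTiling n T) {x y : ℤ} (h : AztecCell n (x, y)) :
    ind (covS T (x+1) (y+1)) + ind (covW T (x+1) (y+1))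
      + ind (covN T x y) + ind (covE T x y) = 1 := by
  have h4 := four_dominoes hT h
  unfold covN covW covS covE
  rw [show x+1-1 = x from by ring, show y+1-1 = y from by ring]
  linarith [h4]

lemma rowA (hT : IsTiling n T) {i : ℤ} (hi0 : 0 ≤ i) (hin : i ≤ (n:ℤ)) :
    ∀ j : ℕ, (j:ℤ) ≤ (n:ℤ) →
    ind (covN T (i+(j:ℤ)-(n:ℤ)) (i-(j:ℤ))) + ind (covW T (i+(j:ℤ)-(n:ℤ)) (i-(j:ℤ)))
      = ∑ k ∈ Finset.Ico (0:ℤ) (j:ℤ), ent T (i+k-(n:ℤ)) (i-k) := by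
  intro j
  induction j with
  | zero =>
    intro _
    simp only [Nat.cast_zero, add_zero, sub_zero, Finset.Ico_self, Finset.sum_empty]
    have hN : ¬ covN T (i-(n:ℤ)) i :=
      not_mem_of_outside hT (d := ((i-(n:ℤ)-1, i), true)) (c := (i-(n:ℤ)-1, i))
        (by rw [mem_cells_true]; left; rfl)
        (by rw [aztec_iff_s11]; omega)
    have hW : ¬ covW T (i-(n:ℤ)) i :=
      not_mem_of_outside hT (d := ((i-(n:ℤ)-1, i-1), false)) (c := (i-(n:ℤ)-1, i-1+1))
        (by rw [mem_cells_false]; right; rfl)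
        (by rw [aztec_iff_s11]; omega)
    rw [ind_neg hN, ind_neg hW]
    norm_num
  | succ j ih =>
    intro hjn
    push_cast at hjn ⊢
    have ih' := ih (by omega)
    have hins : Finset.Ico (0:ℤ) ((j:ℤ)+1) = insert (j:ℤ) (Finset.Ico 0 (j:ℤ)) := by
      ext k; simp
    rw [hins, Finset.sum_insert (by simp)]
    rw [show i+((j:ℤ)+1)-(n:ℤ) = (i+(j:ℤ)-(n:ℤ))+1 from by ring,
        show i-((j:ℤ)+1) = (i-(j:ℤ))-1 from by ring, ← ih']
    have hcell : AztecCell n (i+(j:ℤ)-(n:ℤ), (i-(j:ℤ))-1) := by rw [aztec_iff_s11]; omega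
    have hstep := cell_step hT (x := i+(j:ℤ)-(n:ℤ)) (y := i-(j:ℤ)) hcell
    unfold ent
    linarith [hstep]

lemma colA (hT : IsTiling n T) {j : ℤ} (hj0 : 0 ≤ j) (hjn : j ≤ (n:ℤ)) :
    ∀ i : ℕ, (i:ℤ) ≤ (n:ℤ) →
    ind (covS T ((i:ℤ)+j-(n:ℤ)) ((i:ℤ)-j)) + ind (covW T ((i:ℤ)+j-(n:ℤ)) ((i:ℤ)-j))
      = ∑ k ∈ Finset.Ico (0:ℤ) (i:ℤ), ent T (k+j-(n:ℤ)) (k-j) := by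
  intro i
  induction i with
  | zero =>
    intro _
    simp only [Nat.cast_zero, zero_add, zero_sub, Finset.Ico_self, Finset.sum_empty]
    have hS : ¬ covS T (j-(n:ℤ)) (-j) :=
      not_mem_of_outside hT (d := ((j-(n:ℤ)-1, -j-1), true)) (c := (j-(n:ℤ)-1, -j-1))
        (by rw [mem_cells_true]; left; rfl)
        (by rw [aztec_iff_s11]; omega)
    have hW : ¬ covW T (j-(n:ℤ)) (-j) :=
      not_mem_of_outside hT (d := ((j-(n:ℤ)-1, -j-1), false)) (c := (j-(n:ℤ)-1, -j-1))
        (by rw [mem_cells_false]; left; rfl)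
        (by rw [aztec_iff_s11]; omega)
    rw [ind_neg hS, ind_neg hW]
    norm_num
  | succ i ih =>
    intro hin
    push_cast at hin ⊢
    have ih' := ih (by omega)
    have hins : Finset.Ico (0:ℤ) ((i:ℤ)+1) = insert (i:ℤ) (Finset.Ico 0 (i:ℤ)) := by
      ext k; simp
    rw [hins, Finset.sum_insert (by simp)]
    rw [show ((i:ℤ)+1)+j-(n:ℤ) = ((i:ℤ)+j-(n:ℤ))+1 from by ring,
        show ((i:ℤ)+1)-j = ((i:ℤ)-j)+1 from by ring, ← ih']
    have hcell : AztecCell n ((i:ℤ)+j-(n:ℤ), (i:ℤ)-j) := by rw [aztec_iff_s11]; omega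
    have hstep := col_step hT (x := (i:ℤ)+j-(n:ℤ)) (y := (i:ℤ)-j) hcell
    unfold ent
    linarith [hstep]

lemma row_total (hT : IsTiling n T) {i : ℤ} (hi0 : 0 ≤ i) (hin : i ≤ (n:ℤ)) :
    ∑ k ∈ Finset.Ico (0:ℤ) ((n:ℤ)+1), ent T (i+k-(n:ℤ)) (i-k) = 1 := by
  have hins : Finset.Ico (0:ℤ) ((n:ℤ)+1) = insert (n:ℤ) (Finset.Ico 0 (n:ℤ)) := by
    ext k; simp
  rw [hins, Finset.sum_insert (by simp)]
  rw [← rowA hT hi0 hin n le_rfl]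
  have hS : ¬ covS T (i+(n:ℤ)-(n:ℤ)) (i-(n:ℤ)) :=
    not_mem_of_outside hT (d := ((i+(n:ℤ)-(n:ℤ)-1, i-(n:ℤ)-1), true))
      (c := (i+(n:ℤ)-(n:ℤ)-1+1, i-(n:ℤ)-1))
      (by rw [mem_cells_true]; right; rfl)
      (by rw [aztec_iff_s11]; omega)
  have hE : ¬ covE T (i+(n:ℤ)-(n:ℤ)) (i-(n:ℤ)) :=
    not_mem_of_outside hT (d := ((i+(n:ℤ)-(n:ℤ), i-(n:ℤ)-1), false))
      (c := (i+(n:ℤ)-(n:ℤ), i-(n:ℤ)-1))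
      (by rw [mem_cells_false]; left; rfl)
      (by rw [aztec_iff_s11]; omega)
  unfold ent
  rw [ind_neg hS, ind_neg hE]
  ring

lemma col_total (hT : IsTiling n T) {j : ℤ} (hj0 : 0 ≤ j) (hjn : j ≤ (n:ℤ)) :
    ∑ k ∈ Finset.Ico (0:ℤ) ((n:ℤ)+1), ent T (k+j-(n:ℤ)) (k-j) = 1 := by
  have hins : Finset.Ico (0:ℤ) ((n:ℤ)+1) = insert (n:ℤ) (Finset.Ico 0 (n:ℤ)) := by
    ext k; simp
  rw [hins, Finset.sum_insert (by simp)]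
  rw [← colA hT hj0 hjn n le_rfl]
  have hN : ¬ covN T ((n:ℤ)+j-(n:ℤ)) ((n:ℤ)-j) :=
    not_mem_of_outside hT (d := (((n:ℤ)+j-(n:ℤ)-1, (n:ℤ)-j), true))
      (c := ((n:ℤ)+j-(n:ℤ)-1+1, (n:ℤ)-j))
      (by rw [mem_cells_true]; right; rfl)
      (by rw [aztec_iff_s11]; omega)
  have hE : ¬ covE T ((n:ℤ)+j-(n:ℤ)) ((n:ℤ)-j) :=
    not_mem_of_outside hT (d := (((n:ℤ)+j-(n:ℤ), (n:ℤ)-j-1), false))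
      (c := ((n:ℤ)+j-(n:ℤ), (n:ℤ)-j-1+1))
      (by rw [mem_cells_false]; right; rfl)
      (by rw [aztec_iff_s11]; omega)
  unfold ent
  rw [ind_neg hN, ind_neg hE]
  ring

end


section
variable {m : ℕ} {v : ℕ → ℤ}

/-- main invariant: prefix sums of an "alternating" sequence -/
lemma alt_main (halt : ∀ a b : ℕ, a < b → b < m → v a ≠ 0 → v b ≠ 0 →
      (∀ k, a < k → k < b → v k = 0) → v b = -v a) :
    ∀ j : ℕ, j ≤ m →
      ((∀ k < j, v k = 0) ∧ ∑ k ∈ Finset.range j, v k = 0) ∨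
      (∃ f l : ℕ, f ≤ l ∧ l < j ∧ v f ≠ 0 ∧ v l ≠ 0 ∧ (∀ k < f, v k = 0) ∧
        (∀ k, l < k → k < j → v k = 0) ∧ 2 * ∑ k ∈ Finset.range j, v k = v f + v l) := by
  intro j
  induction j with
  | zero => intro _; left; exact ⟨fun k hk => absurd hk (Nat.not_lt_zero k), by simp⟩
  | succ j ih =>
    intro hj
    rcases ih (by omega) with ⟨hz, hs⟩ | ⟨f, l, hfl, hlj, hvf, hvl, hbf, haf, hs⟩
    · by_cases hvj : v j = 0
      · left
        refine ⟨fun k hk => ?_, ?_⟩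
        · rcases Nat.lt_succ_iff_lt_or_eq.mp hk with h | rfl
          · exact hz k h
          · exact hvj
        · rw [Finset.sum_range_succ, hs, hvj]
          norm_num
      · right
        exact ⟨j, j, le_rfl, Nat.lt_succ_self j, hvj, hvj, hz,
          fun k hk1 hk2 => by omega, by rw [Finset.sum_range_succ, hs]; ring⟩
    · by_cases hvj : v j = 0
      · right
        refine ⟨f, l, hfl, by omega, hvf, hvl, hbf, fun k hk1 hk2 => ?_, ?_⟩
        · rcases Nat.lt_succ_iff_lt_or_eq.mp hk2 with h | rfl
          · exact haf k hk1 h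
          · exact hvj
        · rw [Finset.sum_range_succ, hvj, add_zero, hs]
      · right
        have hlj' : l < j := hlj
        have halt' : v j = -v l := halt l j hlj' (by omega) hvl hvj (fun k h1 h2 => haf k h1 h2)
        refine ⟨f, j, by omega, Nat.lt_succ_self j, hvf, hvj, hbf,
          fun k hk1 hk2 => by omega, ?_⟩
        rw [Finset.sum_range_succ, mul_add, hs, halt']
        ring

/-- structure facts for a row/column of an ASM -/
lemma alt_facts (hent : ∀ k, k < m → v k = -1 ∨ v k = 0 ∨ v k = 1)
    (halt : ∀ a b : ℕ, a < b → b < m → v a ≠ 0 → v b ≠ 0 →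
      (∀ k, a < k → k < b → v k = 0) → v b = -v a)
    (hsum : ∑ k ∈ Finset.range m, v k = 1) :
    (∀ j ≤ m, ∑ k ∈ Finset.range j, v k = 0 ∨ ∑ k ∈ Finset.range j, v k = 1) ∧
    (∀ j < m, v j = 1 → ∑ k ∈ Finset.range j, v k = 0) ∧
    (∀ j < m, v j = -1 → ∑ k ∈ Finset.range j, v k = 1) ∧
    (∀ j < m, v j = -1 → ∑ k ∈ Finset.range (j+1), v k = 0) := by
  -- the global first nonzero has value 1
  have hm : 0 < m := by
    by_contra h
    rw [show m = 0 from by omega] at hsum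
    simp at hsum
  obtain hmain := alt_main halt m le_rfl
  rcases hmain with ⟨_, hs⟩ | ⟨f, l, hfl, hlm, hvf, hvl, hbf, haf, hs⟩
  · rw [hsum] at hs; exact absurd hs one_ne_zero
  have hf1 : v f = 1 ∧ v l = 1 := by
    rw [hsum] at hs
    have h1 := hent f (by omega)
    have h2 := hent l (by omega)
    constructor <;> omega
  -- first nonzero is unique
  have hfirst : ∀ g : ℕ, g < m → v g ≠ 0 → (∀ k < g, v k = 0) → v g = 1 := by
    intro g hgm hvg hbg
    have : g = f := by
      by_contra hne
      rcases Nat.lt_or_ge g f with h | h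
      · exact hvg (hbf g h)
      · exact hvf (hbg f (by omega))
    rw [this]; exact hf1.1
  have key : ∀ j ≤ m, (∀ k < j, v k = 0) ∨
      ∃ l', l' < j ∧ v l' ≠ 0 ∧ (∀ k, l' < k → k < j → v k = 0) ∧
        (v l' = 1 ∧ ∑ k ∈ Finset.range j, v k = 1 ∨ v l' = -1 ∧ ∑ k ∈ Finset.range j, v k = 0) := by
    intro j hj
    rcases alt_main halt j hj with ⟨hz, hs'⟩ | ⟨f', l', hfl', hlj', hvf', hvl', hbf', haf', hs'⟩
    · left; exact hz
    · right
      have hvf'1 : v f' = 1 := hfirst f' (by omega) hvf' hbf'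
      refine ⟨l', hlj', hvl', haf', ?_⟩
      have := hent l' (by omega)
      rw [hvf'1] at hs'
      omega
  refine ⟨?_, ?_, ?_, ?_⟩
  · intro j hj
    rcases key j hj with hz | ⟨l', _, _, _, hc⟩
    · left; exact Finset.sum_eq_zero (fun k hk => hz k (Finset.mem_range.mp hk))
    · rcases hc with ⟨_, h⟩ | ⟨_, h⟩
      · right; exact h
      · left; exact h
  · intro j hj hvj
    rcases key j (by omega) with hz | ⟨l', hl'j, hvl', haf', hc⟩
    · exact Finset.sum_eq_zero (fun k hk => hz k (Finset.mem_range.mp hk))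
    · have : v j = -v l' := halt l' j hl'j hj hvl' (by omega) haf'
      rcases hc with ⟨h1, h⟩ | ⟨h1, h⟩
      · rw [h1] at this; omega
      · exact h
  · intro j hj hvj
    rcases key j (by omega) with hz | ⟨l', hl'j, hvl', haf', hc⟩
    · have : v j = 1 := hfirst j hj (by omega) hz
      omega
    · have : v j = -v l' := halt l' j hl'j hj hvl' (by omega) haf'
      rcases hc with ⟨h1, h⟩ | ⟨h1, h⟩
      · exact h
      · rw [h1] at this; omega
  · intro j hj hvj
    rcases key j (by omega) with hz | ⟨l', hl'j, hvl', haf', hc⟩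
    · have : v j = 1 := hfirst j hj (by omega) hz
      omega
    · have : v j = -v l' := halt l' j hl'j hj hvl' (by omega) haf'
      rcases hc with ⟨h1, h⟩ | ⟨h1, h⟩
      · rw [Finset.sum_range_succ, h, hvj]; ring
      · rw [h1] at this; omega

/-- converse: entries in {-1,0,1} with all prefix sums in {0,1} satisfy alternation -/
lemma alt_of_prefix (hent : ∀ k, k < m → v k = -1 ∨ v k = 0 ∨ v k = 1)
    (hpre : ∀ j ≤ m, ∑ k ∈ Finset.range j, v k = 0 ∨ ∑ k ∈ Finset.range j, v k = 1) :
    ∀ a b : ℕ, a < b → b < m → v a ≠ 0 → v b ≠ 0 →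
      (∀ k, a < k → k < b → v k = 0) → v b = -v a := by
  intro a b hab hbm hva hvb hmid
  have hsplit : ∑ k ∈ Finset.range b, v k = ∑ k ∈ Finset.range (a+1), v k := by
    have h1 : Finset.range b = Finset.range (a+1) ∪ Finset.Ico (a+1) b := by
      ext k; simp; omega
    have hdisj : Disjoint (Finset.range (a+1)) (Finset.Ico (a+1) b) := by
      rw [Finset.disjoint_left]
      intro k hk1 hk2
      rw [Finset.mem_range] at hk1
      rw [Finset.mem_Ico] at hk2
      omega
    have h0 : ∑ k ∈ Finset.Ico (a+1) b, v k = 0 :=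
      Finset.sum_eq_zero (fun k hk => by
        rw [Finset.mem_Ico] at hk; exact hmid k (by omega) (by omega))
    rw [h1, Finset.sum_union hdisj, h0, add_zero]
  have h1 := hpre a (by omega)
  have h2 := hpre (a+1) (by omega)
  have h3 := hpre b (by omega)
  have h4 := hpre (b+1) (by omega)
  have e1 : ∑ k ∈ Finset.range (a+1), v k = ∑ k ∈ Finset.range a, v k + v a :=
    Finset.sum_range_succ v a
  have e2 : ∑ k ∈ Finset.range (b+1), v k = ∑ k ∈ Finset.range b, v k + v b :=
    Finset.sum_range_succ v b
  have hva' := hent a (by omega)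
  have hvb' := hent b (by omega)
  omega

end

-- ===================== Part 4: the ASM associated to a tiling ==============

noncomputable def asmF (n : ℕ) (T : Set Domino) : Matrix (Fin (n+1)) (Fin (n+1)) ℤ :=
  fun i j => ent T (((i:ℕ):ℤ) + ((j:ℕ):ℤ) - (n:ℤ)) (((i:ℕ):ℤ) - ((j:ℕ):ℤ))

lemma sum_range_int (m : ℕ) (g : ℤ → ℤ) :
    ∑ k ∈ Finset.range m, g (k:ℤ) = ∑ k ∈ Finset.Ico (0:ℤ) (m:ℤ), g k := by
  induction m with
  | zero => simp
  | succ m ih =>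
    rw [Finset.sum_range_succ, ih]
    have hins : Finset.Ico (0:ℤ) ((m:ℤ)+1) = insert (m:ℤ) (Finset.Ico 0 (m:ℤ)) := by
      ext k; simp
    push_cast
    rw [hins, Finset.sum_insert (by simp)]
    ring

lemma fin_sum_int (m : ℕ) (g : ℤ → ℤ) :
    ∑ j : Fin m, g ((j:ℕ):ℤ) = ∑ k ∈ Finset.Ico (0:ℤ) (m:ℤ), g k := by
  rw [← sum_range_int]
  exact Fin.sum_univ_eq_sum_range (fun k => g (k:ℤ)) m

section
variable {n : ℕ} {T : Set Domino}

lemma ent_range (hT : IsTiling n T) (x y : ℤ) :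
    ent T x y = -1 ∨ ent T x y = 0 ∨ ent T x y = 1 := by
  have cNE := conflictNE hT x y
  have cSW := conflictSW hT x y
  rcases ind_cases (covN T x y) with ⟨e1, p1⟩ | ⟨e1, p1⟩ <;>
  rcases ind_cases (covS T x y) with ⟨e2, p2⟩ | ⟨e2, p2⟩ <;>
  rcases ind_cases (covE T x y) with ⟨e3, p3⟩ | ⟨e3, p3⟩ <;>
  rcases ind_cases (covW T x y) with ⟨e4, p4⟩ | ⟨e4, p4⟩ <;>
  unfold ent <;> rw [e1, e2, e3, e4] <;>
  first
    | (exfalso; exact cNE ⟨p1, p3⟩)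
    | (exfalso; exact cSW ⟨p2, p4⟩)
    | omega

/-- row prefix sums are 0 or 1 -/
lemma row_prefix (hT : IsTiling n T) {i : Fin (n+1)} :
    ∀ j : ℕ, j ≤ n+1 →
      ∑ k ∈ Finset.range j, ent T (((i:ℕ):ℤ) + (k:ℤ) - (n:ℤ)) (((i:ℕ):ℤ) - (k:ℤ)) = 0 ∨
      ∑ k ∈ Finset.range j, ent T (((i:ℕ):ℤ) + (k:ℤ) - (n:ℤ)) (((i:ℕ):ℤ) - (k:ℤ)) = 1 := by
  intro j hj
  have hi0 : (0:ℤ) ≤ ((i:ℕ):ℤ) := by positivity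
  have hin : ((i:ℕ):ℤ) ≤ (n:ℤ) := by exact_mod_cast Nat.lt_succ_iff.mp i.isLt
  rw [sum_range_int j (fun k => ent T (((i:ℕ):ℤ) + k - (n:ℤ)) (((i:ℕ):ℤ) - k))]
  rcases Nat.lt_or_ge j (n+1) with hlt | hge
  · rw [← rowA hT hi0 hin j (by exact_mod_cast Nat.lt_succ_iff.mp hlt)]
    have cNW := conflictNW hT (((i:ℕ):ℤ)+(j:ℤ)-(n:ℤ)) (((i:ℕ):ℤ)-(j:ℤ))
    rcases ind_cases (covN T (((i:ℕ):ℤ)+(j:ℤ)-(n:ℤ)) (((i:ℕ):ℤ)-(j:ℤ))) with ⟨e1, p1⟩ | ⟨e1, p1⟩ <;>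
    rcases ind_cases (covW T (((i:ℕ):ℤ)+(j:ℤ)-(n:ℤ)) (((i:ℕ):ℤ)-(j:ℤ))) with ⟨e2, p2⟩ | ⟨e2, p2⟩ <;>
    rw [e1, e2] <;> first | (exfalso; exact cNW ⟨p1, p2⟩) | omega
  · have hj' : j = n+1 := by omega
    subst hj'
    right
    have := row_total hT hi0 hin
    rw [← this]
    congr 1
    all_goals push_cast
    all_goals try ring_nf

/-- column prefix sums are 0 or 1 -/
lemma col_prefix (hT : IsTiling n T) {j : Fin (n+1)} :
    ∀ i : ℕ, i ≤ n+1 →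
      ∑ k ∈ Finset.range i, ent T ((k:ℤ) + ((j:ℕ):ℤ) - (n:ℤ)) ((k:ℤ) - ((j:ℕ):ℤ)) = 0 ∨
      ∑ k ∈ Finset.range i, ent T ((k:ℤ) + ((j:ℕ):ℤ) - (n:ℤ)) ((k:ℤ) - ((j:ℕ):ℤ)) = 1 := by
  intro i hi
  have hj0 : (0:ℤ) ≤ ((j:ℕ):ℤ) := by positivity
  have hjn : ((j:ℕ):ℤ) ≤ (n:ℤ) := by exact_mod_cast Nat.lt_succ_iff.mp j.isLt
  rw [sum_range_int i (fun k => ent T (k + ((j:ℕ):ℤ) - (n:ℤ)) (k - ((j:ℕ):ℤ)))]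
  rcases Nat.lt_or_ge i (n+1) with hlt | hge
  · rw [← colA hT hj0 hjn i (by exact_mod_cast Nat.lt_succ_iff.mp hlt)]
    have cSW := conflictSW hT ((i:ℤ)+((j:ℕ):ℤ)-(n:ℤ)) ((i:ℤ)-((j:ℕ):ℤ))
    rcases ind_cases (covS T ((i:ℤ)+((j:ℕ):ℤ)-(n:ℤ)) ((i:ℤ)-((j:ℕ):ℤ))) with ⟨e1, p1⟩ | ⟨e1, p1⟩ <;>
    rcases ind_cases (covW T ((i:ℤ)+((j:ℕ):ℤ)-(n:ℤ)) ((i:ℤ)-((j:ℕ):ℤ))) with ⟨e2, p2⟩ | ⟨e2, p2⟩ <;>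
    rw [e1, e2] <;> first | (exfalso; exact cSW ⟨p1, p2⟩) | omega
  · have hi' : i = n+1 := by omega
    subst hi'
    right
    have := col_total hT hj0 hjn
    rw [← this]
    congr 1
    all_goals push_cast
    all_goals try ring_nf

theorem asmF_isASM (hT : IsTiling n T) : IsASM (asmF n T) := by
  refine ⟨?_, ?_, ?_, ?_, ?_⟩
  · intro i j; exact ent_range hT _ _
  · intro i
    have hi0 : (0:ℤ) ≤ ((i:ℕ):ℤ) := by positivity
    have hin : ((i:ℕ):ℤ) ≤ (n:ℤ) := by exact_mod_cast Nat.lt_succ_iff.mp i.isLt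
    calc ∑ j, asmF n T i j
        = ∑ k ∈ Finset.Ico (0:ℤ) (((n+1):ℕ):ℤ),
            ent T (((i:ℕ):ℤ) + k - (n:ℤ)) (((i:ℕ):ℤ) - k) :=
          fin_sum_int (n+1) (fun t => ent T (((i:ℕ):ℤ) + t - (n:ℤ)) (((i:ℕ):ℤ) - t))
      _ = 1 := by
          rw [show (((n+1):ℕ):ℤ) = (n:ℤ)+1 from by push_cast; ring]
          exact row_total hT hi0 hin
  · intro j
    have hj0 : (0:ℤ) ≤ ((j:ℕ):ℤ) := by positivity
    have hjn : ((j:ℕ):ℤ) ≤ (n:ℤ) := by exact_mod_cast Nat.lt_succ_iff.mp j.isLt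
    calc ∑ i, asmF n T i j
        = ∑ k ∈ Finset.Ico (0:ℤ) (((n+1):ℕ):ℤ),
            ent T (k + ((j:ℕ):ℤ) - (n:ℤ)) (k - ((j:ℕ):ℤ)) :=
          fin_sum_int (n+1) (fun t => ent T (t + ((j:ℕ):ℤ) - (n:ℤ)) (t - ((j:ℕ):ℤ)))
      _ = 1 := by
          rw [show (((n+1):ℕ):ℤ) = (n:ℤ)+1 from by push_cast; ring]
          exact col_total hT hj0 hjn
  · intro i j₁ j₂ hlt h1 h2 hmid
    have halt := alt_of_prefix (m := n+1)
      (v := fun k => ent T (((i:ℕ):ℤ) + (k:ℤ) - (n:ℤ)) (((i:ℕ):ℤ) - (k:ℤ)))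
      (fun k hk => ent_range hT _ _)
      (fun j hj => row_prefix hT j hj)
    have := halt j₁.val j₂.val hlt j₂.isLt h1 h2 (fun k hk1 hk2 => by
      have hkn : k < n+1 := lt_trans hk2 j₂.isLt
      have := hmid ⟨k, hkn⟩ hk1 hk2
      exact this)
    exact this
  · intro j i₁ i₂ hlt h1 h2 hmid
    have halt := alt_of_prefix (m := n+1)
      (v := fun k => ent T ((k:ℤ) + ((j:ℕ):ℤ) - (n:ℤ)) ((k:ℤ) - ((j:ℕ):ℤ)))
      (fun k hk => ent_range hT _ _)
      (fun i hi => col_prefix hT i hi)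
    have := halt i₁.val i₂.val hlt i₂.isLt h1 h2 (fun k hk1 hk2 => by
      have hkn : k < n+1 := lt_trans hk2 i₂.isLt
      have := hmid ⟨k, hkn⟩ hk1 hk2
      exact this)
    exact this

end



-- =============== Part 5: reconstruction of tilings from an ASM =============

def Bx (n : ℕ) (B : Matrix (Fin (n+1)) (Fin (n+1)) ℤ) (i j : ℕ) : ℤ :=
  if h : i < n+1 ∧ j < n+1 then B ⟨i, h.1⟩ ⟨j, h.2⟩ else 0

def Rp (n : ℕ) (B : Matrix (Fin (n+1)) (Fin (n+1)) ℤ) (i j : ℕ) : ℤ :=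
  ∑ k ∈ Finset.range j, Bx n B i k

def Qp (n : ℕ) (B : Matrix (Fin (n+1)) (Fin (n+1)) ℤ) (j i : ℕ) : ℤ :=
  ∑ k ∈ Finset.range i, Bx n B k j

section
variable {n : ℕ} {B : Matrix (Fin (n+1)) (Fin (n+1)) ℤ}

lemma Bx_fin (i j : Fin (n+1)) : Bx n B i.val j.val = B i j := dif_pos ⟨i.isLt, j.isLt⟩

lemma Bx_eq {i j : ℕ} (hi : i ≤ n) (hj : j ≤ n) :
    Bx n B i j = B ⟨i, by omega⟩ ⟨j, by omega⟩ := dif_pos ⟨by omega, by omega⟩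

lemma row_sum_Bx (hB : IsASM B) {i : ℕ} (hi : i ≤ n) :
    ∑ k ∈ Finset.range (n+1), Bx n B i k = 1 := by
  rw [← Fin.sum_univ_eq_sum_range (fun k => Bx n B i k) (n+1)]
  rw [show (∑ j : Fin (n+1), Bx n B i j.val) = ∑ j : Fin (n+1), B ⟨i, by omega⟩ j from
    Finset.sum_congr rfl (fun j _ => by rw [Bx_eq hi (by omega)])]
  exact hB.2.1 _

lemma col_sum_Bx (hB : IsASM B) {j : ℕ} (hj : j ≤ n) :
    ∑ k ∈ Finset.range (n+1), Bx n B k j = 1 := by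
  rw [← Fin.sum_univ_eq_sum_range (fun k => Bx n B k j) (n+1)]
  rw [show (∑ i : Fin (n+1), Bx n B i.val j) = ∑ i : Fin (n+1), B i ⟨j, by omega⟩ from
    Finset.sum_congr rfl (fun i _ => by rw [Bx_eq (by omega) hj])]
  exact hB.2.2.1 _

lemma row_facts (hB : IsASM B) {i : ℕ} (hi : i ≤ n) :
    (∀ j ≤ n+1, Rp n B i j = 0 ∨ Rp n B i j = 1) ∧
    (∀ j ≤ n, Bx n B i j = 1 → Rp n B i j = 0) ∧
    (∀ j ≤ n, Bx n B i j = -1 → Rp n B i j = 1) ∧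
    (∀ j ≤ n, Bx n B i j = -1 → Rp n B i (j+1) = 0) := by
  have hent : ∀ k, k < n+1 → Bx n B i k = -1 ∨ Bx n B i k = 0 ∨ Bx n B i k = 1 := by
    intro k hk
    rw [Bx_eq hi (by omega)]
    exact hB.1 _ _
  have halt : ∀ a b : ℕ, a < b → b < n+1 → Bx n B i a ≠ 0 → Bx n B i b ≠ 0 →
      (∀ k, a < k → k < b → Bx n B i k = 0) → Bx n B i b = -Bx n B i a := by
    intro a b hab hbm hva hvb hmid
    rw [Bx_eq hi (by omega)] at hva ⊢
    rw [Bx_eq hi (by omega)] at hvb ⊢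
    exact hB.2.2.2.1 ⟨i, by omega⟩ ⟨a, by omega⟩ ⟨b, by omega⟩ hab hva hvb
      (fun k hk1 hk2 => by
        have := hmid k.val hk1 hk2
        rwa [Bx_eq hi (by omega)] at this)
  obtain ⟨o1, o2, o3, o4⟩ := alt_facts hent halt (row_sum_Bx hB hi)
  exact ⟨fun j hj => o1 j hj, fun j hj h => o2 j (by omega) h,
    fun j hj h => o3 j (by omega) h, fun j hj h => o4 j (by omega) h⟩

lemma col_facts (hB : IsASM B) {j : ℕ} (hj : j ≤ n) :
    (∀ i ≤ n+1, Qp n B j i = 0 ∨ Qp n B j i = 1) ∧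
    (∀ i ≤ n, Bx n B i j = 1 → Qp n B j i = 0) ∧
    (∀ i ≤ n, Bx n B i j = -1 → Qp n B j i = 1) ∧
    (∀ i ≤ n, Bx n B i j = -1 → Qp n B j (i+1) = 0) := by
  have hent : ∀ k, k < n+1 → Bx n B k j = -1 ∨ Bx n B k j = 0 ∨ Bx n B k j = 1 := by
    intro k hk
    rw [Bx_eq (by omega) hj]
    exact hB.1 _ _
  have halt : ∀ a b : ℕ, a < b → b < n+1 → Bx n B a j ≠ 0 → Bx n B b j ≠ 0 →
      (∀ k, a < k → k < b → Bx n B k j = 0) → Bx n B b j = -Bx n B a j := by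
    intro a b hab hbm hva hvb hmid
    rw [Bx_eq (by omega) hj] at hva ⊢
    rw [Bx_eq (by omega) hj] at hvb ⊢
    exact hB.2.2.2.2 ⟨j, by omega⟩ ⟨a, by omega⟩ ⟨b, by omega⟩ hab hva hvb
      (fun k hk1 hk2 => by
        have := hmid k.val hk1 hk2
        rwa [Bx_eq (by omega) hj] at this)
  obtain ⟨o1, o2, o3, o4⟩ := alt_facts hent halt (col_sum_Bx hB hj)
  exact ⟨fun i hi => o1 i hi, fun i hi h => o2 i (by omega) h,
    fun i hi h => o3 i (by omega) h, fun i hi h => o4 i (by omega) h⟩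

end

/-- table predicates: which of the four edges at grid vertex (i,j) are covered -/
def tN (n : ℕ) (B : Matrix (Fin (n+1)) (Fin (n+1)) ℤ) (s : ℕ → ℕ → Bool) (i j : ℕ) : Prop :=
  (Bx n B i j = -1 ∧ s i j = true) ∨ (Bx n B i j = 0 ∧ Rp n B i j = 1 ∧ Qp n B j i = 0)
def tS (n : ℕ) (B : Matrix (Fin (n+1)) (Fin (n+1)) ℤ) (s : ℕ → ℕ → Bool) (i j : ℕ) : Prop :=
  (Bx n B i j = -1 ∧ s i j = true) ∨ (Bx n B i j = 0 ∧ Rp n B i j = 0 ∧ Qp n B j i = 1)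
def tE (n : ℕ) (B : Matrix (Fin (n+1)) (Fin (n+1)) ℤ) (s : ℕ → ℕ → Bool) (i j : ℕ) : Prop :=
  (Bx n B i j = -1 ∧ s i j = false) ∨ (Bx n B i j = 0 ∧ Rp n B i j = 0 ∧ Qp n B j i = 0)
def tW (n : ℕ) (B : Matrix (Fin (n+1)) (Fin (n+1)) ℤ) (s : ℕ → ℕ → Bool) (i j : ℕ) : Prop :=
  (Bx n B i j = -1 ∧ s i j = false) ∨ (Bx n B i j = 0 ∧ Rp n B i j = 1 ∧ Qp n B j i = 1)

/-- the tiling constructed from an ASM `B` and a choice function `s` -/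
def Tmk (n : ℕ) (B : Matrix (Fin (n+1)) (Fin (n+1)) ℤ) (s : ℕ → ℕ → Bool) : Set Domino :=
  { d | ∃ i j : ℕ, i ≤ n ∧ j ≤ n ∧
    ((d = (((i:ℤ)+(j:ℤ)-(n:ℤ)-1, (i:ℤ)-(j:ℤ)), true) ∧ tN n B s i j) ∨
     (d = (((i:ℤ)+(j:ℤ)-(n:ℤ)-1, (i:ℤ)-(j:ℤ)-1), true) ∧ tS n B s i j) ∨
     (d = (((i:ℤ)+(j:ℤ)-(n:ℤ), (i:ℤ)-(j:ℤ)-1), false) ∧ tE n B s i j) ∨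
     (d = (((i:ℤ)+(j:ℤ)-(n:ℤ)-1, (i:ℤ)-(j:ℤ)-1), false) ∧ tW n B s i j)) }

section
variable {n : ℕ} {B : Matrix (Fin (n+1)) (Fin (n+1)) ℤ} {s : ℕ → ℕ → Bool}

lemma memN {i j : ℕ} (hi : i ≤ n) (hj : j ≤ n) :
    ((((i:ℤ)+(j:ℤ)-(n:ℤ)-1, (i:ℤ)-(j:ℤ)), true) : Domino) ∈ Tmk n B s ↔ tN n B s i j := by
  constructor
  · rintro ⟨i', j', hi', hj', (⟨hd, ht⟩ | ⟨hd, ht⟩ | ⟨hd, ht⟩ | ⟨hd, ht⟩)⟩ <;>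
      simp only [Prod.mk.injEq] at hd
    · obtain ⟨⟨h1, h2⟩, _⟩ := hd
      have : i = i' ∧ j = j' := by omega
      obtain ⟨rfl, rfl⟩ := this
      exact ht
    · obtain ⟨⟨h1, h2⟩, _⟩ := hd
      exfalso; omega
    · exact absurd hd.2 (by simp)
    · exact absurd hd.2 (by simp)
  · intro ht
    exact ⟨i, j, hi, hj, Or.inl ⟨rfl, ht⟩⟩

lemma memS {i j : ℕ} (hi : i ≤ n) (hj : j ≤ n) :
    ((((i:ℤ)+(j:ℤ)-(n:ℤ)-1, (i:ℤ)-(j:ℤ)-1), true) : Domino) ∈ Tmk n B s ↔ tS n B s i j := by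
  constructor
  · rintro ⟨i', j', hi', hj', (⟨hd, ht⟩ | ⟨hd, ht⟩ | ⟨hd, ht⟩ | ⟨hd, ht⟩)⟩ <;>
      simp only [Prod.mk.injEq] at hd
    · obtain ⟨⟨h1, h2⟩, _⟩ := hd
      exfalso; omega
    · obtain ⟨⟨h1, h2⟩, _⟩ := hd
      have : i = i' ∧ j = j' := by omega
      obtain ⟨rfl, rfl⟩ := this
      exact ht
    · exact absurd hd.2 (by simp)
    · exact absurd hd.2 (by simp)
  · intro ht
    exact ⟨i, j, hi, hj, Or.inr (Or.inl ⟨rfl, ht⟩)⟩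

lemma memE {i j : ℕ} (hi : i ≤ n) (hj : j ≤ n) :
    ((((i:ℤ)+(j:ℤ)-(n:ℤ), (i:ℤ)-(j:ℤ)-1), false) : Domino) ∈ Tmk n B s ↔ tE n B s i j := by
  constructor
  · rintro ⟨i', j', hi', hj', (⟨hd, ht⟩ | ⟨hd, ht⟩ | ⟨hd, ht⟩ | ⟨hd, ht⟩)⟩ <;>
      simp only [Prod.mk.injEq] at hd
    · exact absurd hd.2 (by simp)
    · exact absurd hd.2 (by simp)
    · obtain ⟨⟨h1, h2⟩, _⟩ := hd
      have : i = i' ∧ j = j' := by omega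
      obtain ⟨rfl, rfl⟩ := this
      exact ht
    · obtain ⟨⟨h1, h2⟩, _⟩ := hd
      exfalso; omega
  · intro ht
    exact ⟨i, j, hi, hj, Or.inr (Or.inr (Or.inl ⟨rfl, ht⟩))⟩

lemma memW {i j : ℕ} (hi : i ≤ n) (hj : j ≤ n) :
    ((((i:ℤ)+(j:ℤ)-(n:ℤ)-1, (i:ℤ)-(j:ℤ)-1), false) : Domino) ∈ Tmk n B s ↔ tW n B s i j := by
  constructor
  · rintro ⟨i', j', hi', hj', (⟨hd, ht⟩ | ⟨hd, ht⟩ | ⟨hd, ht⟩ | ⟨hd, ht⟩)⟩ <;>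
      simp only [Prod.mk.injEq] at hd
    · exact absurd hd.2 (by simp)
    · exact absurd hd.2 (by simp)
    · obtain ⟨⟨h1, h2⟩, _⟩ := hd
      exfalso; omega
    · obtain ⟨⟨h1, h2⟩, _⟩ := hd
      have : i = i' ∧ j = j' := by omega
      obtain ⟨rfl, rfl⟩ := this
      exact ht
  · intro ht
    exact ⟨i, j, hi, hj, Or.inr (Or.inr (Or.inr ⟨rfl, ht⟩))⟩

end

section
variable {n : ℕ} {B : Matrix (Fin (n+1)) (Fin (n+1)) ℤ} {s : ℕ → ℕ → Bool}

lemma Rp_succ (i j : ℕ) : Rp n B i (j+1) = Rp n B i j + Bx n B i j :=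
  Finset.sum_range_succ _ _
lemma Qp_succ (i j : ℕ) : Qp n B j (i+1) = Qp n B j i + Bx n B i j :=
  Finset.sum_range_succ _ _
lemma Rp_zero (i : ℕ) : Rp n B i 0 = 0 := by simp [Rp]
lemma Qp_zero (j : ℕ) : Qp n B j 0 = 0 := by simp [Qp]

lemma tableSums (hB : IsASM B) {i j : ℕ} (hi : i ≤ n) (hj : j ≤ n) :
    ind (tN n B s i j) + ind (tW n B s i j) = Rp n B i j ∧
    ind (tS n B s i j) + ind (tW n B s i j) = Qp n B j i ∧
    ind (tN n B s i j) + ind (tS n B s i j) + ind (tE n B s i j) + ind (tW n B s i j)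
      = 1 - Bx n B i j := by
  have hb : Bx n B i j = -1 ∨ Bx n B i j = 0 ∨ Bx n B i j = 1 := by
    rw [Bx_eq hi hj]; exact hB.1 _ _
  have rF := row_facts hB hi
  have cF := col_facts hB hj
  rcases hb with hb | hb | hb
  · have hr : Rp n B i j = 1 := rF.2.2.1 j hj hb
    have hq : Qp n B j i = 1 := cF.2.2.1 i hi hb
    cases hs : s i j
    · rw [ind_neg (show ¬ tN n B s i j by simp [tN, hb, hs]), ind_neg (show ¬ tS n B s i j by simp [tS, hb, hs]),
         ind_pos (show tE n B s i j by simp [tE, hb, hs]),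
         ind_pos (show tW n B s i j by simp [tW, hb, hs])]
      refine ⟨by omega, by omega, by omega⟩
    · rw [ind_pos (show tN n B s i j by simp [tN, hb, hs]),
         ind_pos (show tS n B s i j by simp [tS, hb, hs]),
         ind_neg (show ¬ tE n B s i j by simp [tE, hb, hs]), ind_neg (show ¬ tW n B s i j by simp [tW, hb, hs])]
      refine ⟨by omega, by omega, by omega⟩
  · rcases rF.1 j (by omega) with hr | hr <;> rcases cF.1 i (by omega) with hq | hq
    · rw [ind_neg (show ¬ tN n B s i j by simp [tN, hb, hr, hq]), ind_neg (show ¬ tS n B s i j by simp [tS, hb, hr, hq]),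
         ind_pos (show tE n B s i j by simp [tE, hb, hr, hq]),
         ind_neg (show ¬ tW n B s i j by simp [tW, hb, hr, hq])]
      refine ⟨by omega, by omega, by omega⟩
    · rw [ind_neg (show ¬ tN n B s i j by simp [tN, hb, hr, hq]),
         ind_pos (show tS n B s i j by simp [tS, hb, hr, hq]),
         ind_neg (show ¬ tE n B s i j by simp [tE, hb, hr, hq]), ind_neg (show ¬ tW n B s i j by simp [tW, hb, hr, hq])]
      refine ⟨by omega, by omega, by omega⟩
    · rw [ind_pos (show tN n B s i j by simp [tN, hb, hr, hq]),
         ind_neg (show ¬ tS n B s i j by simp [tS, hb, hr, hq]), ind_neg (show ¬ tE n B s i j by simp [tE, hb, hr, hq]),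
         ind_neg (show ¬ tW n B s i j by simp [tW, hb, hr, hq])]
      refine ⟨by omega, by omega, by omega⟩
    · rw [ind_neg (show ¬ tN n B s i j by simp [tN, hb, hr, hq]), ind_neg (show ¬ tS n B s i j by simp [tS, hb, hr, hq]),
         ind_neg (show ¬ tE n B s i j by simp [tE, hb, hr, hq]),
         ind_pos (show tW n B s i j by simp [tW, hb, hr, hq])]
      refine ⟨by omega, by omega, by omega⟩
  · have hr : Rp n B i j = 0 := rF.2.1 j hj hb
    have hq : Qp n B j i = 0 := cF.2.1 i hi hb
    rw [ind_neg (show ¬ tN n B s i j by simp [tN, hb, hr, hq]), ind_neg (show ¬ tS n B s i j by simp [tS, hb, hr, hq]),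
       ind_neg (show ¬ tE n B s i j by simp [tE, hb, hr, hq]), ind_neg (show ¬ tW n B s i j by simp [tW, hb, hr, hq])]
    refine ⟨by omega, by omega, by omega⟩

lemma tN_ne (hB : IsASM B) {i j : ℕ} (hi : i ≤ n) (hj : j ≤ n) (ht : tN n B s i j) :
    i ≠ n ∧ j ≠ 0 := by
  have rF := row_facts hB hi
  have cF := col_facts hB hj
  have htotC : Qp n B j (n+1) = 1 := col_sum_Bx hB hj
  constructor
  · intro hin
    rcases ht with ⟨hb, _⟩ | ⟨hb, _, hq⟩
    · rw [hin] at hb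
      have := cF.2.2.2 n le_rfl hb
      omega
    · rw [hin] at hb hq
      have := Qp_succ (B := B) n j
      omega
  · intro hjn
    rcases ht with ⟨hb, _⟩ | ⟨hb, hr, _⟩
    · rw [hjn] at hb
      have h1 := rF.2.2.1 0 (by omega) hb
      have h2 := Rp_zero (B := B) i
      omega
    · rw [hjn] at hr
      have h2 := Rp_zero (B := B) i
      omega

lemma tS_ne (hB : IsASM B) {i j : ℕ} (hi : i ≤ n) (hj : j ≤ n) (ht : tS n B s i j) :
    i ≠ 0 ∧ j ≠ n := by
  have rF := row_facts hB hi
  have cF := col_facts hB hj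
  have htotR : Rp n B i (n+1) = 1 := row_sum_Bx hB hi
  constructor
  · intro hin
    rcases ht with ⟨hb, _⟩ | ⟨hb, _, hq⟩
    · rw [hin] at hb
      have h1 := cF.2.2.1 0 (by omega) hb
      have h2 := Qp_zero (B := B) j
      omega
    · rw [hin] at hq
      have h2 := Qp_zero (B := B) j
      omega
  · intro hjn
    rcases ht with ⟨hb, _⟩ | ⟨hb, hr, _⟩
    · rw [hjn] at hb
      have := rF.2.2.2 n le_rfl hb
      omega
    · rw [hjn] at hb hr
      have := Rp_succ (B := B) i n
      omega

lemma tE_ne (hB : IsASM B) {i j : ℕ} (hi : i ≤ n) (hj : j ≤ n) (ht : tE n B s i j) :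
    i ≠ n ∧ j ≠ n := by
  have rF := row_facts hB hi
  have cF := col_facts hB hj
  have htotR : Rp n B i (n+1) = 1 := row_sum_Bx hB hi
  have htotC : Qp n B j (n+1) = 1 := col_sum_Bx hB hj
  constructor
  · intro hin
    rcases ht with ⟨hb, _⟩ | ⟨hb, _, hq⟩
    · rw [hin] at hb
      have := cF.2.2.2 n le_rfl hb
      omega
    · rw [hin] at hb hq
      have := Qp_succ (B := B) n j
      omega
  · intro hjn
    rcases ht with ⟨hb, _⟩ | ⟨hb, hr, _⟩
    · rw [hjn] at hb
      have := rF.2.2.2 n le_rfl hb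
      omega
    · rw [hjn] at hb hr
      have := Rp_succ (B := B) i n
      omega

lemma tW_ne (hB : IsASM B) {i j : ℕ} (hi : i ≤ n) (hj : j ≤ n) (ht : tW n B s i j) :
    i ≠ 0 ∧ j ≠ 0 := by
  have rF := row_facts hB hi
  have cF := col_facts hB hj
  constructor
  · intro hin
    rcases ht with ⟨hb, _⟩ | ⟨hb, _, hq⟩
    · rw [hin] at hb
      have h1 := cF.2.2.1 0 (by omega) hb
      have h2 := Qp_zero (B := B) j
      omega
    · rw [hin] at hq
      have h2 := Qp_zero (B := B) j
      omega
  · intro hjn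
    rcases ht with ⟨hb, _⟩ | ⟨hb, hr, _⟩
    · rw [hjn] at hb
      have h1 := rF.2.2.1 0 (by omega) hb
      have h2 := Rp_zero (B := B) i
      omega
    · rw [hjn] at hr
      have h2 := Rp_zero (B := B) i
      omega

end

lemma ind_congr {P Q : Prop} (h : P ↔ Q) : ind P = ind Q := by
  rcases ind_cases P with ⟨e, hp⟩ | ⟨e, hp⟩
  · rw [e, ind_neg (fun hq => hp (h.mpr hq))]
  · rw [e, ind_pos (h.mp hp)]

lemma dominoes_containing {d : Domino} {a b : ℤ} (hdc : (a,b) ∈ dominoCells d) :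
    d = ((a,b), true) ∨ d = ((a-1,b), true) ∨ d = ((a,b), false) ∨ d = ((a,b-1), false) := by
  obtain ⟨⟨p, q⟩, o⟩ := d
  cases o <;>
    [rw [mem_cells_false] at hdc; rw [mem_cells_true] at hdc] <;>
    rcases hdc with h' | h' <;>
    simp only [Prod.mk.injEq] at h' ⊢ <;>
    simp <;> omega

section
variable {T : Set Domino} {a b : ℤ}

lemma eu_mk1 (h1 : ((a,b), true) ∈ T) (h2 : ((a-1,b), true) ∉ T)
    (h3 : ((a,b), false) ∉ T) (h4 : ((a,b-1), false) ∉ T) :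
    ∃! d, d ∈ T ∧ (a,b) ∈ dominoCells d := by
  refine ⟨((a,b), true), ⟨h1, by rw [mem_cells_true]; left; rfl⟩, ?_⟩
  rintro y ⟨hyT, hyc⟩
  rcases dominoes_containing hyc with rfl | rfl | rfl | rfl
  · rfl
  · exact absurd hyT h2
  · exact absurd hyT h3
  · exact absurd hyT h4

lemma eu_mk2 (h1 : ((a,b), true) ∉ T) (h2 : ((a-1,b), true) ∈ T)
    (h3 : ((a,b), false) ∉ T) (h4 : ((a,b-1), false) ∉ T) :
    ∃! d, d ∈ T ∧ (a,b) ∈ dominoCells d := by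
  refine ⟨((a-1,b), true), ⟨h2, by rw [mem_cells_true]; right; simp [Prod.ext_iff]⟩, ?_⟩
  rintro y ⟨hyT, hyc⟩
  rcases dominoes_containing hyc with rfl | rfl | rfl | rfl
  · exact absurd hyT h1
  · rfl
  · exact absurd hyT h3
  · exact absurd hyT h4

lemma eu_mk3 (h1 : ((a,b), true) ∉ T) (h2 : ((a-1,b), true) ∉ T)
    (h3 : ((a,b), false) ∈ T) (h4 : ((a,b-1), false) ∉ T) :
    ∃! d, d ∈ T ∧ (a,b) ∈ dominoCells d := by
  refine ⟨((a,b), false), ⟨h3, by rw [mem_cells_false]; left; rfl⟩, ?_⟩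
  rintro y ⟨hyT, hyc⟩
  rcases dominoes_containing hyc with rfl | rfl | rfl | rfl
  · exact absurd hyT h1
  · exact absurd hyT h2
  · rfl
  · exact absurd hyT h4

lemma eu_mk4 (h1 : ((a,b), true) ∉ T) (h2 : ((a-1,b), true) ∉ T)
    (h3 : ((a,b), false) ∉ T) (h4 : ((a,b-1), false) ∈ T) :
    ∃! d, d ∈ T ∧ (a,b) ∈ dominoCells d := by
  refine ⟨((a,b-1), false), ⟨h4, by rw [mem_cells_false]; right; simp [Prod.ext_iff]⟩, ?_⟩
  rintro y ⟨hyT, hyc⟩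
  rcases dominoes_containing hyc with rfl | rfl | rfl | rfl
  · exact absurd hyT h1
  · exact absurd hyT h2
  · exact absurd hyT h3
  · rfl

lemma exists_unique_of_four
    (hsum : ind (((a,b), true) ∈ T) + ind (((a-1,b), true) ∈ T)
      + ind (((a,b), false) ∈ T) + ind (((a,b-1), false) ∈ T) = 1) :
    ∃! d, d ∈ T ∧ (a,b) ∈ dominoCells d := by
  rcases ind_cases (((a,b), true) ∈ T) with ⟨e1, p1⟩ | ⟨e1, p1⟩ <;>
  rcases ind_cases (((a-1,b), true) ∈ T) with ⟨e2, p2⟩ | ⟨e2, p2⟩ <;>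
  rcases ind_cases (((a,b), false) ∈ T) with ⟨e3, p3⟩ | ⟨e3, p3⟩ <;>
  rcases ind_cases (((a,b-1), false) ∈ T) with ⟨e4, p4⟩ | ⟨e4, p4⟩ <;>
  rw [e1, e2, e3, e4] at hsum <;>
  first
    | (exfalso; omega)
    | exact eu_mk1 p1 p2 p3 p4
    | exact eu_mk2 p1 p2 p3 p4
    | exact eu_mk3 p1 p2 p3 p4
    | exact eu_mk4 p1 p2 p3 p4

end

section
variable {n : ℕ} {B : Matrix (Fin (n+1)) (Fin (n+1)) ℤ} {s : ℕ → ℕ → Bool}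

theorem Tmk_isTiling (hB : IsASM B) : IsTiling n (Tmk n B s) := by
  constructor
  · -- all dominoes lie inside the diamond
    rintro d ⟨i, j, hi, hj, (⟨rfl, ht⟩ | ⟨rfl, ht⟩ | ⟨rfl, ht⟩ | ⟨rfl, ht⟩)⟩ <;> intro c hc
    · have hne := tN_ne hB hi hj ht
      rw [mem_cells_true] at hc
      rcases hc with rfl | rfl <;> (rw [aztec_iff_s11]; push_cast; omega)
    · have hne := tS_ne hB hi hj ht
      rw [mem_cells_true] at hc
      rcases hc with rfl | rfl <;> (rw [aztec_iff_s11]; push_cast; omega)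
    · have hne := tE_ne hB hi hj ht
      rw [mem_cells_false] at hc
      rcases hc with rfl | rfl <;> (rw [aztec_iff_s11]; push_cast; omega)
    · have hne := tW_ne hB hi hj ht
      rw [mem_cells_false] at hc
      rcases hc with rfl | rfl <;> (rw [aztec_iff_s11]; push_cast; omega)
  · -- every cell is covered exactly once
    rintro ⟨a, b⟩ hcell
    rw [aztec_iff_s11] at hcell
    rcases Int.even_or_odd (a + b + (n:ℤ)) with he | ho
    · -- even case: grid corners at (a,b) and (a+1,b+1)
      obtain ⟨r, hr⟩ := he
      obtain ⟨r2, hr2⟩ : Even (a - b + (n:ℤ)) := by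
        rcases Int.even_or_odd (a - b + (n:ℤ)) with h | h
        · exact h
        · exfalso; obtain ⟨t, ht'⟩ := h; omega
      have hiu : ∃ iu : ℕ, 2 * (iu:ℤ) = a + b + n := ⟨r.toNat, by omega⟩
      have hju : ∃ ju : ℕ, 2 * (ju:ℤ) = a - b + n := ⟨r2.toNat, by omega⟩
      obtain ⟨iu, hiu⟩ := hiu
      obtain ⟨ju, hju⟩ := hju
      have hiu1 : iu + 1 ≤ n := by omega
      have hjun : ju ≤ n := by omega
      have m1 : ind ((((a,b), true) : Domino) ∈ Tmk n B s) = ind (tS n B s (iu+1) ju) := by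
        rw [show (((a,b), true) : Domino)
            = (((((iu+1:ℕ)):ℤ)+(ju:ℤ)-(n:ℤ)-1, (((iu+1:ℕ)):ℤ)-(ju:ℤ)-1), true) from by
          simp only [Prod.mk.injEq]; refine ⟨⟨?_, ?_⟩, trivial⟩ <;> push_cast <;> omega]
        exact ind_congr (memS hiu1 hjun)
      have m2 : ind ((((a-1,b), true) : Domino) ∈ Tmk n B s) = ind (tN n B s iu ju) := by
        rw [show (((a-1,b), true) : Domino)
            = (((iu:ℤ)+(ju:ℤ)-(n:ℤ)-1, (iu:ℤ)-(ju:ℤ)), true) from by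
          simp only [Prod.mk.injEq]; refine ⟨⟨?_, ?_⟩, trivial⟩ <;> push_cast <;> omega]
        exact ind_congr (memN (by omega) hjun)
      have m3 : ind ((((a,b), false) : Domino) ∈ Tmk n B s) = ind (tW n B s (iu+1) ju) := by
        rw [show (((a,b), false) : Domino)
            = (((((iu+1:ℕ)):ℤ)+(ju:ℤ)-(n:ℤ)-1, (((iu+1:ℕ)):ℤ)-(ju:ℤ)-1), false) from by
          simp only [Prod.mk.injEq]; refine ⟨⟨?_, ?_⟩, trivial⟩ <;> push_cast <;> omega]
        exact ind_congr (memW hiu1 hjun)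
      have m4 : ind ((((a,b-1), false) : Domino) ∈ Tmk n B s) = ind (tE n B s iu ju) := by
        rw [show (((a,b-1), false) : Domino)
            = (((iu:ℤ)+(ju:ℤ)-(n:ℤ), (iu:ℤ)-(ju:ℤ)-1), false) from by
          simp only [Prod.mk.injEq]; refine ⟨⟨?_, ?_⟩, trivial⟩ <;> push_cast <;> omega]
        exact ind_congr (memE (by omega) hjun)
      apply exists_unique_of_four
      rw [m1, m2, m3, m4]
      have t1 := (tableSums (s := s) hB (i := iu+1) (j := ju) hiu1 hjun).2.1
      have t2 := (tableSums (s := s) hB (i := iu) (j := ju) (by omega) hjun).2.1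
      have t3 := (tableSums (s := s) hB (i := iu) (j := ju) (by omega) hjun).2.2
      have t4 := Qp_succ (B := B) iu ju
      omega
    · -- odd case: grid corners at (a+1,b) and (a,b+1)
      obtain ⟨r, hr⟩ := ho
      obtain ⟨r2, hr2⟩ : Odd (a - b + (n:ℤ)) := by
        rcases Int.even_or_odd (a - b + (n:ℤ)) with h | h
        · exfalso; obtain ⟨t, ht'⟩ := h; omega
        · exact h
      have hiu : ∃ iu : ℕ, 2 * (iu:ℤ) = a + b + n + 1 := ⟨(r+1).toNat, by omega⟩
      have hjv : ∃ jv : ℕ, 2 * (jv:ℤ) = a - b + n - 1 := ⟨r2.toNat, by omega⟩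
      obtain ⟨iu, hiu⟩ := hiu
      obtain ⟨jv, hjv⟩ := hjv
      have hiun : iu ≤ n := by omega
      have hjv1 : jv + 1 ≤ n := by omega
      have m1 : ind ((((a,b), true) : Domino) ∈ Tmk n B s) = ind (tN n B s iu (jv+1)) := by
        rw [show (((a,b), true) : Domino)
            = (((iu:ℤ)+(((jv+1:ℕ)):ℤ)-(n:ℤ)-1, (iu:ℤ)-(((jv+1:ℕ)):ℤ)), true) from by
          simp only [Prod.mk.injEq]; refine ⟨⟨?_, ?_⟩, trivial⟩ <;> push_cast <;> omega]
        exact ind_congr (memN hiun hjv1)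
      have m2 : ind ((((a-1,b), true) : Domino) ∈ Tmk n B s) = ind (tS n B s iu jv) := by
        rw [show (((a-1,b), true) : Domino)
            = (((iu:ℤ)+(jv:ℤ)-(n:ℤ)-1, (iu:ℤ)-(jv:ℤ)-1), true) from by
          simp only [Prod.mk.injEq]; refine ⟨⟨?_, ?_⟩, trivial⟩ <;> push_cast <;> omega]
        exact ind_congr (memS hiun (by omega))
      have m3 : ind ((((a,b), false) : Domino) ∈ Tmk n B s) = ind (tE n B s iu jv) := by
        rw [show (((a,b), false) : Domino)
            = (((iu:ℤ)+(jv:ℤ)-(n:ℤ), (iu:ℤ)-(jv:ℤ)-1), false) from by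
          simp only [Prod.mk.injEq]; refine ⟨⟨?_, ?_⟩, trivial⟩ <;> push_cast <;> omega]
        exact ind_congr (memE hiun (by omega))
      have m4 : ind ((((a,b-1), false) : Domino) ∈ Tmk n B s) = ind (tW n B s iu (jv+1)) := by
        rw [show (((a,b-1), false) : Domino)
            = (((iu:ℤ)+(((jv+1:ℕ)):ℤ)-(n:ℤ)-1, (iu:ℤ)-(((jv+1:ℕ)):ℤ)-1), false) from by
          simp only [Prod.mk.injEq]; refine ⟨⟨?_, ?_⟩, trivial⟩ <;> push_cast <;> omega]
        exact ind_congr (memW hiun hjv1)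
      apply exists_unique_of_four
      rw [m1, m2, m3, m4]
      have t1 := (tableSums (s := s) hB (i := iu) (j := jv+1) hiun hjv1).1
      have t2 := (tableSums (s := s) hB (i := iu) (j := jv) hiun (by omega)).1
      have t3 := (tableSums (s := s) hB (i := iu) (j := jv) hiun (by omega)).2.2
      have t4 := Rp_succ (B := B) iu jv
      omega

end

-- ===================== Part 6: matching tilings with reconstructions =======

noncomputable def sOf (n : ℕ) (T : Set Domino) (i j : ℕ) : Bool :=
  if covN T ((i:ℤ)+(j:ℤ)-(n:ℤ)) ((i:ℤ)-(j:ℤ)) then true else false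

section
variable {n : ℕ} {T : Set Domino} {B : Matrix (Fin (n+1)) (Fin (n+1)) ℤ} {s : ℕ → ℕ → Bool}

lemma Bx_asmF {i j : ℕ} (hi : i ≤ n) (hj : j ≤ n) :
    Bx n (asmF n T) i j = ent T ((i:ℤ)+(j:ℤ)-(n:ℤ)) ((i:ℤ)-(j:ℤ)) := by
  rw [Bx_eq hi hj]
  rfl

lemma Rp_asmF {i j : ℕ} (hi : i ≤ n) (hj : j ≤ n+1) :
    Rp n (asmF n T) i j
      = ∑ k ∈ Finset.Ico (0:ℤ) (j:ℤ), ent T ((i:ℤ)+k-(n:ℤ)) ((i:ℤ)-k) := by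
  rw [← sum_range_int j (fun t => ent T ((i:ℤ)+t-(n:ℤ)) ((i:ℤ)-t))]
  exact Finset.sum_congr rfl (fun k hk => by
    rw [Bx_asmF hi (by have := Finset.mem_range.mp hk; omega)])

lemma Qp_asmF {i j : ℕ} (hj : j ≤ n) (hi : i ≤ n+1) :
    Qp n (asmF n T) j i
      = ∑ k ∈ Finset.Ico (0:ℤ) (i:ℤ), ent T (k+(j:ℤ)-(n:ℤ)) (k-(j:ℤ)) := by
  rw [← sum_range_int i (fun t => ent T (t+(j:ℤ)-(n:ℤ)) (t-(j:ℤ)))]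
  exact Finset.sum_congr rfl (fun k hk => by
    rw [Bx_asmF (by have := Finset.mem_range.mp hk; omega) hj])

lemma ind_match (hT : IsTiling n T) {i j : ℕ} (hi : i ≤ n) (hj : j ≤ n) :
    ind (covN T ((i:ℤ)+(j:ℤ)-(n:ℤ)) ((i:ℤ)-(j:ℤ))) = ind (tN n (asmF n T) (sOf n T) i j) ∧
    ind (covS T ((i:ℤ)+(j:ℤ)-(n:ℤ)) ((i:ℤ)-(j:ℤ))) = ind (tS n (asmF n T) (sOf n T) i j) ∧
    ind (covE T ((i:ℤ)+(j:ℤ)-(n:ℤ)) ((i:ℤ)-(j:ℤ))) = ind (tE n (asmF n T) (sOf n T) i j) ∧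
    ind (covW T ((i:ℤ)+(j:ℤ)-(n:ℤ)) ((i:ℤ)-(j:ℤ))) = ind (tW n (asmF n T) (sOf n T) i j) := by
  have hi0 : (0:ℤ) ≤ (i:ℤ) := by positivity
  have hin : (i:ℤ) ≤ (n:ℤ) := by exact_mod_cast hi
  have hj0 : (0:ℤ) ≤ (j:ℤ) := by positivity
  have hjn : (j:ℤ) ≤ (n:ℤ) := by exact_mod_cast hj
  have hNW := rowA hT hi0 hin j hjn
  rw [← Rp_asmF hi (by omega)] at hNW
  have hSW := colA hT hj0 hjn i hin
  rw [← Qp_asmF hj (by omega)] at hSW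
  have hbx : Bx n (asmF n T) i j = ent T ((i:ℤ)+(j:ℤ)-(n:ℤ)) ((i:ℤ)-(j:ℤ)) := Bx_asmF hi hj
  have cNE := conflictNE hT ((i:ℤ)+(j:ℤ)-(n:ℤ)) ((i:ℤ)-(j:ℤ))
  have cSW := conflictSW hT ((i:ℤ)+(j:ℤ)-(n:ℤ)) ((i:ℤ)-(j:ℤ))
  have cNW := conflictNW hT ((i:ℤ)+(j:ℤ)-(n:ℤ)) ((i:ℤ)-(j:ℤ))
  have cSE := conflictSE hT ((i:ℤ)+(j:ℤ)-(n:ℤ)) ((i:ℤ)-(j:ℤ))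
  rcases ind_cases (covN T ((i:ℤ)+(j:ℤ)-(n:ℤ)) ((i:ℤ)-(j:ℤ))) with ⟨e1, p1⟩ | ⟨e1, p1⟩ <;>
  rcases ind_cases (covS T ((i:ℤ)+(j:ℤ)-(n:ℤ)) ((i:ℤ)-(j:ℤ))) with ⟨e2, p2⟩ | ⟨e2, p2⟩ <;>
  rcases ind_cases (covE T ((i:ℤ)+(j:ℤ)-(n:ℤ)) ((i:ℤ)-(j:ℤ))) with ⟨e3, p3⟩ | ⟨e3, p3⟩ <;>
  rcases ind_cases (covW T ((i:ℤ)+(j:ℤ)-(n:ℤ)) ((i:ℤ)-(j:ℤ))) with ⟨e4, p4⟩ | ⟨e4, p4⟩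
  · have hbv : Bx n (asmF n T) i j = 1 := by
      rw [hbx]; unfold ent; rw [e1, e2, e3, e4]; norm_num
    have hr : Rp n (asmF n T) i j = 0 := by omega
    have hq : Qp n (asmF n T) j i = 0 := by omega
    refine ⟨?_, ?_, ?_, ?_⟩
    · rw [e1, ind_neg (show ¬ tN n (asmF n T) (sOf n T) i j by simp [tN, hbv, hr, hq])]
    · rw [e2, ind_neg (show ¬ tS n (asmF n T) (sOf n T) i j by simp [tS, hbv, hr, hq])]
    · rw [e3, ind_neg (show ¬ tE n (asmF n T) (sOf n T) i j by simp [tE, hbv, hr, hq])]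
    · rw [e4, ind_neg (show ¬ tW n (asmF n T) (sOf n T) i j by simp [tW, hbv, hr, hq])]
  · have hbv : Bx n (asmF n T) i j = 0 := by
      rw [hbx]; unfold ent; rw [e1, e2, e3, e4]; norm_num
    have hr : Rp n (asmF n T) i j = 1 := by omega
    have hq : Qp n (asmF n T) j i = 1 := by omega
    refine ⟨?_, ?_, ?_, ?_⟩
    · rw [e1, ind_neg (show ¬ tN n (asmF n T) (sOf n T) i j by simp [tN, hbv, hr, hq])]
    · rw [e2, ind_neg (show ¬ tS n (asmF n T) (sOf n T) i j by simp [tS, hbv, hr, hq])]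
    · rw [e3, ind_neg (show ¬ tE n (asmF n T) (sOf n T) i j by simp [tE, hbv, hr, hq])]
    · rw [e4, ind_pos (show tW n (asmF n T) (sOf n T) i j from Or.inr ⟨hbv, hr, hq⟩)]
  · have hbv : Bx n (asmF n T) i j = 0 := by
      rw [hbx]; unfold ent; rw [e1, e2, e3, e4]; norm_num
    have hr : Rp n (asmF n T) i j = 0 := by omega
    have hq : Qp n (asmF n T) j i = 0 := by omega
    refine ⟨?_, ?_, ?_, ?_⟩
    · rw [e1, ind_neg (show ¬ tN n (asmF n T) (sOf n T) i j by simp [tN, hbv, hr, hq])]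
    · rw [e2, ind_neg (show ¬ tS n (asmF n T) (sOf n T) i j by simp [tS, hbv, hr, hq])]
    · rw [e3, ind_pos (show tE n (asmF n T) (sOf n T) i j from Or.inr ⟨hbv, hr, hq⟩)]
    · rw [e4, ind_neg (show ¬ tW n (asmF n T) (sOf n T) i j by simp [tW, hbv, hr, hq])]
  · have hbv : Bx n (asmF n T) i j = -1 := by
      rw [hbx]; unfold ent; rw [e1, e2, e3, e4]; norm_num
    have hr : Rp n (asmF n T) i j = 1 := by omega
    have hq : Qp n (asmF n T) j i = 1 := by omega
    have hs : sOf n T i j = false := by unfold sOf; rw [if_neg p1]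
    refine ⟨?_, ?_, ?_, ?_⟩
    · rw [e1, ind_neg (show ¬ tN n (asmF n T) (sOf n T) i j by simp [tN, hbv, hr, hq, hs])]
    · rw [e2, ind_neg (show ¬ tS n (asmF n T) (sOf n T) i j by simp [tS, hbv, hr, hq, hs])]
    · rw [e3, ind_pos (show tE n (asmF n T) (sOf n T) i j from Or.inl ⟨hbv, hs⟩)]
    · rw [e4, ind_pos (show tW n (asmF n T) (sOf n T) i j from Or.inl ⟨hbv, hs⟩)]
  · have hbv : Bx n (asmF n T) i j = 0 := by
      rw [hbx]; unfold ent; rw [e1, e2, e3, e4]; norm_num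
    have hr : Rp n (asmF n T) i j = 0 := by omega
    have hq : Qp n (asmF n T) j i = 1 := by omega
    refine ⟨?_, ?_, ?_, ?_⟩
    · rw [e1, ind_neg (show ¬ tN n (asmF n T) (sOf n T) i j by simp [tN, hbv, hr, hq])]
    · rw [e2, ind_pos (show tS n (asmF n T) (sOf n T) i j from Or.inr ⟨hbv, hr, hq⟩)]
    · rw [e3, ind_neg (show ¬ tE n (asmF n T) (sOf n T) i j by simp [tE, hbv, hr, hq])]
    · rw [e4, ind_neg (show ¬ tW n (asmF n T) (sOf n T) i j by simp [tW, hbv, hr, hq])]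
  · exact absurd ⟨p2, p4⟩ cSW
  · exact absurd ⟨p2, p3⟩ cSE
  · exact absurd ⟨p2, p3⟩ cSE
  · have hbv : Bx n (asmF n T) i j = 0 := by
      rw [hbx]; unfold ent; rw [e1, e2, e3, e4]; norm_num
    have hr : Rp n (asmF n T) i j = 1 := by omega
    have hq : Qp n (asmF n T) j i = 0 := by omega
    refine ⟨?_, ?_, ?_, ?_⟩
    · rw [e1, ind_pos (show tN n (asmF n T) (sOf n T) i j from Or.inr ⟨hbv, hr, hq⟩)]
    · rw [e2, ind_neg (show ¬ tS n (asmF n T) (sOf n T) i j by simp [tS, hbv, hr, hq])]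
    · rw [e3, ind_neg (show ¬ tE n (asmF n T) (sOf n T) i j by simp [tE, hbv, hr, hq])]
    · rw [e4, ind_neg (show ¬ tW n (asmF n T) (sOf n T) i j by simp [tW, hbv, hr, hq])]
  · exact absurd ⟨p1, p4⟩ cNW
  · exact absurd ⟨p1, p3⟩ cNE
  · exact absurd ⟨p1, p3⟩ cNE
  · have hbv : Bx n (asmF n T) i j = -1 := by
      rw [hbx]; unfold ent; rw [e1, e2, e3, e4]; norm_num
    have hr : Rp n (asmF n T) i j = 1 := by omega
    have hq : Qp n (asmF n T) j i = 1 := by omega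
    have hs : sOf n T i j = true := by unfold sOf; rw [if_pos p1]
    refine ⟨?_, ?_, ?_, ?_⟩
    · rw [e1, ind_pos (show tN n (asmF n T) (sOf n T) i j from Or.inl ⟨hbv, hs⟩)]
    · rw [e2, ind_pos (show tS n (asmF n T) (sOf n T) i j from Or.inl ⟨hbv, hs⟩)]
    · rw [e3, ind_neg (show ¬ tE n (asmF n T) (sOf n T) i j by simp [tE, hbv, hr, hq, hs])]
    · rw [e4, ind_neg (show ¬ tW n (asmF n T) (sOf n T) i j by simp [tW, hbv, hr, hq, hs])]
  · exact absurd ⟨p1, p4⟩ cNW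
  · exact absurd ⟨p1, p3⟩ cNE
  · exact absurd ⟨p1, p3⟩ cNE

end

-- ===================== Part 7: round trips ================================

section
variable {n : ℕ} {T : Set Domino} {B : Matrix (Fin (n+1)) (Fin (n+1)) ℤ} {s : ℕ → ℕ → Bool}

/-- reading the ASM off the reconstructed tiling gives back the ASM -/
lemma asmF_Tmk (hB : IsASM B) : asmF n (Tmk n B s) = B := by
  funext i j
  have hi : (i:ℕ) ≤ n := by omega
  have hj : (j:ℕ) ≤ n := by omega
  show ent (Tmk n B s) _ _ = B i j
  unfold ent covN covS covE covW
  rw [ind_congr (memN hi hj), ind_congr (memS hi hj), ind_congr (memE hi hj),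
      ind_congr (memW hi hj)]
  have h3 := (tableSums (s := s) hB hi hj).2.2
  have hbf : Bx n B (i:ℕ) (j:ℕ) = B i j := Bx_fin i j
  omega

/-- reading the choice function off the reconstructed tiling -/
lemma sOf_Tmk (hB : IsASM B) {i j : ℕ} (hi : i ≤ n) (hj : j ≤ n)
    (hm : Bx n B i j = -1) : sOf n (Tmk n B s) i j = s i j := by
  unfold sOf
  have hmem : covN (Tmk n B s) ((i:ℤ)+(j:ℤ)-(n:ℤ)) ((i:ℤ)-(j:ℤ)) ↔ tN n B s i j := by
    unfold covN
    exact memN hi hj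
  cases hs : s i j
  · rw [if_neg]
    rw [hmem]
    rintro (⟨_, h⟩ | ⟨h, _⟩)
    · rw [hs] at h; exact Bool.noConfusion h
    · omega
  · rw [if_pos]
    rw [hmem]
    exact Or.inl ⟨hm, hs⟩

/-- the reconstruction only depends on the choices at the `-1` entries -/
lemma Tmk_congr {s' : ℕ → ℕ → Bool}
    (h : ∀ i j : ℕ, i ≤ n → j ≤ n → Bx n B i j = -1 → s i j = s' i j) :
    Tmk n B s = Tmk n B s' := by
  have ht : ∀ i j : ℕ, i ≤ n → j ≤ n →
      (tN n B s i j ↔ tN n B s' i j) ∧ (tS n B s i j ↔ tS n B s' i j) ∧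
      (tE n B s i j ↔ tE n B s' i j) ∧ (tW n B s i j ↔ tW n B s' i j) := by
    intro i j hi hj
    refine ⟨?_, ?_, ?_, ?_⟩ <;> simp only [tN, tS, tE, tW] <;> constructor <;>
      rintro (⟨hb, hs⟩ | hrest) <;>
      first
        | (left; rw [← h i j hi hj hb] at *; exact ⟨hb, hs⟩)
        | (left; rw [h i j hi hj hb] at *; exact ⟨hb, hs⟩)
        | (right; exact hrest)
  ext d
  constructor <;>
    rintro ⟨i, j, hi, hj, (⟨hd, htx⟩ | ⟨hd, htx⟩ | ⟨hd, htx⟩ | ⟨hd, htx⟩)⟩ <;>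
    refine ⟨i, j, hi, hj, ?_⟩
  · exact Or.inl ⟨hd, ((ht i j hi hj).1).mp htx⟩
  · exact Or.inr (Or.inl ⟨hd, ((ht i j hi hj).2.1).mp htx⟩)
  · exact Or.inr (Or.inr (Or.inl ⟨hd, ((ht i j hi hj).2.2.1).mp htx⟩))
  · exact Or.inr (Or.inr (Or.inr ⟨hd, ((ht i j hi hj).2.2.2).mp htx⟩))
  · exact Or.inl ⟨hd, ((ht i j hi hj).1).mpr htx⟩
  · exact Or.inr (Or.inl ⟨hd, ((ht i j hi hj).2.1).mpr htx⟩)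
  · exact Or.inr (Or.inr (Or.inl ⟨hd, ((ht i j hi hj).2.2.1).mpr htx⟩))
  · exact Or.inr (Or.inr (Or.inr ⟨hd, ((ht i j hi hj).2.2.2).mpr htx⟩))

end

-- ===================== Part 8: recovery of a tiling ========================

section
variable {n : ℕ} {T : Set Domino}

lemma tX_of_ind_match {P Q : Prop} (h : ind P = ind Q) (hp : P) : Q := by
  rcases ind_cases Q with ⟨e, p⟩ | ⟨e, p⟩
  · rw [ind_pos hp, e] at h; exact absurd h one_ne_zero
  · exact p

lemma Tmk_recover (hT : IsTiling n T) : T = Tmk n (asmF n T) (sOf n T) := by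
  ext d
  constructor
  · intro hd
    obtain ⟨⟨c1, c2⟩, o⟩ := d
    cases o
    · -- vertical domino, cells (c1,c2) and (c1,c2+1)
      have hcell1 : AztecCell n (c1, c2) := hT.1 _ hd _ (by rw [mem_cells_false]; left; rfl)
      have hcell2 : AztecCell n (c1, c2+1) := hT.1 _ hd _ (by rw [mem_cells_false]; right; rfl)
      rw [aztec_iff_s11] at hcell1 hcell2
      rcases Int.even_or_odd (c1+c2+(n:ℤ)) with ⟨r, hr⟩ | ⟨r, hr⟩
      · -- even : this is the W edge of the grid vertex with 2i = c1+c2+n+2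
        obtain ⟨i, hi2⟩ : ∃ i : ℕ, 2*(i:ℤ) = c1+c2+(n:ℤ)+2 := ⟨(r+1).toNat, by omega⟩
        obtain ⟨j, hj2⟩ : ∃ j : ℕ, 2*(j:ℤ) = c1-c2+(n:ℤ) := ⟨(r-c2).toNat, by omega⟩
        have hi : i ≤ n := by omega
        have hj : j ≤ n := by omega
        have hcov : covW T ((i:ℤ)+(j:ℤ)-(n:ℤ)) ((i:ℤ)-(j:ℤ)) := by
          unfold covW
          rw [show ((((i:ℤ)+(j:ℤ)-(n:ℤ)-1, (i:ℤ)-(j:ℤ)-1), false) : Domino)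
              = ((c1, c2), false) from by
            simp only [Prod.mk.injEq]; refine ⟨⟨?_, ?_⟩, trivial⟩ <;> omega]
          exact hd
        have htx := tX_of_ind_match (ind_match hT hi hj).2.2.2 hcov
        refine ⟨i, j, hi, hj, Or.inr (Or.inr (Or.inr ⟨?_, htx⟩))⟩
        simp only [Prod.mk.injEq]; refine ⟨⟨?_, ?_⟩, trivial⟩ <;> omega
      · -- odd : this is the E edge of the grid vertex with 2i = c1+c2+n+1
        obtain ⟨i, hi2⟩ : ∃ i : ℕ, 2*(i:ℤ) = c1+c2+(n:ℤ)+1 := ⟨(r+1).toNat, by omega⟩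
        obtain ⟨j, hj2⟩ : ∃ j : ℕ, 2*(j:ℤ) = c1-c2+(n:ℤ)-1 := ⟨(r-c2).toNat, by omega⟩
        have hi : i ≤ n := by omega
        have hj : j ≤ n := by omega
        have hcov : covE T ((i:ℤ)+(j:ℤ)-(n:ℤ)) ((i:ℤ)-(j:ℤ)) := by
          unfold covE
          rw [show ((((i:ℤ)+(j:ℤ)-(n:ℤ), (i:ℤ)-(j:ℤ)-1), false) : Domino)
              = ((c1, c2), false) from by
            simp only [Prod.mk.injEq]; refine ⟨⟨?_, ?_⟩, trivial⟩ <;> omega]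
          exact hd
        have htx := tX_of_ind_match (ind_match hT hi hj).2.2.1 hcov
        refine ⟨i, j, hi, hj, Or.inr (Or.inr (Or.inl ⟨?_, htx⟩))⟩
        simp only [Prod.mk.injEq]; refine ⟨⟨?_, ?_⟩, trivial⟩ <;> omega
    · -- horizontal domino, cells (c1,c2) and (c1+1,c2)
      have hcell1 : AztecCell n (c1, c2) := hT.1 _ hd _ (by rw [mem_cells_true]; left; rfl)
      have hcell2 : AztecCell n (c1+1, c2) := hT.1 _ hd _ (by rw [mem_cells_true]; right; rfl)
      rw [aztec_iff_s11] at hcell1 hcell2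
      rcases Int.even_or_odd (c1+c2+(n:ℤ)) with ⟨r, hr⟩ | ⟨r, hr⟩
      · -- even : this is the S edge of the grid vertex with 2i = c1+c2+n+2
        obtain ⟨i, hi2⟩ : ∃ i : ℕ, 2*(i:ℤ) = c1+c2+(n:ℤ)+2 := ⟨(r+1).toNat, by omega⟩
        obtain ⟨j, hj2⟩ : ∃ j : ℕ, 2*(j:ℤ) = c1-c2+(n:ℤ) := ⟨(r-c2).toNat, by omega⟩
        have hi : i ≤ n := by omega
        have hj : j ≤ n := by omega
        have hcov : covS T ((i:ℤ)+(j:ℤ)-(n:ℤ)) ((i:ℤ)-(j:ℤ)) := by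
          unfold covS
          rw [show ((((i:ℤ)+(j:ℤ)-(n:ℤ)-1, (i:ℤ)-(j:ℤ)-1), true) : Domino)
              = ((c1, c2), true) from by
            simp only [Prod.mk.injEq]; refine ⟨⟨?_, ?_⟩, trivial⟩ <;> omega]
          exact hd
        have htx := tX_of_ind_match (ind_match hT hi hj).2.1 hcov
        refine ⟨i, j, hi, hj, Or.inr (Or.inl ⟨?_, htx⟩)⟩
        simp only [Prod.mk.injEq]; refine ⟨⟨?_, ?_⟩, trivial⟩ <;> omega
      · -- odd : this is the N edge of the grid vertex with 2i = c1+c2+n+1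
        obtain ⟨i, hi2⟩ : ∃ i : ℕ, 2*(i:ℤ) = c1+c2+(n:ℤ)+1 := ⟨(r+1).toNat, by omega⟩
        obtain ⟨j, hj2⟩ : ∃ j : ℕ, 2*(j:ℤ) = c1-c2+(n:ℤ)+1 := ⟨(r-c2+1).toNat, by omega⟩
        have hi : i ≤ n := by omega
        have hj : j ≤ n := by omega
        have hcov : covN T ((i:ℤ)+(j:ℤ)-(n:ℤ)) ((i:ℤ)-(j:ℤ)) := by
          unfold covN
          rw [show ((((i:ℤ)+(j:ℤ)-(n:ℤ)-1, (i:ℤ)-(j:ℤ)), true) : Domino)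
              = ((c1, c2), true) from by
            simp only [Prod.mk.injEq]; refine ⟨⟨?_, ?_⟩, trivial⟩ <;> omega]
          exact hd
        have htx := tX_of_ind_match (ind_match hT hi hj).1 hcov
        refine ⟨i, j, hi, hj, Or.inl ⟨?_, htx⟩⟩
        simp only [Prod.mk.injEq]; refine ⟨⟨?_, ?_⟩, trivial⟩ <;> omega
  · rintro ⟨i, j, hi, hj, (⟨rfl, ht⟩ | ⟨rfl, ht⟩ | ⟨rfl, ht⟩ | ⟨rfl, ht⟩)⟩
    · exact tX_of_ind_match (ind_match hT hi hj).1.symm ht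
    · exact tX_of_ind_match (ind_match hT hi hj).2.1.symm ht
    · exact tX_of_ind_match (ind_match hT hi hj).2.2.1.symm ht
    · exact tX_of_ind_match (ind_match hT hi hj).2.2.2.symm ht

end

-- ===================== Part 9: counting ====================================

section
variable {n : ℕ}

lemma asm_finite (n : ℕ) : Finite {B : Matrix (Fin (n+1)) (Fin (n+1)) ℤ // IsASM B} := by
  have hf : ∀ B : {B : Matrix (Fin (n+1)) (Fin (n+1)) ℤ // IsASM B}, ∀ i j,
      (B.1 i j + 1).toNat < 3 := by
    intro B i j
    rcases B.2.1 i j with h | h | h <;> omega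
  exact Finite.of_injective
    (fun B => (fun i j => (⟨(B.1 i j + 1).toNat, hf B i j⟩ : Fin 3) :
      Fin (n+1) → Fin (n+1) → Fin 3))
    (by
      intro B1 B2 h
      apply Subtype.ext
      funext i j
      have h2 := congrArg Fin.val (congrFun (congrFun h i) j)
      simp only at h2
      rcases B1.2.1 i j with h3 | h3 | h3 <;> rcases B2.2.1 i j with h4 | h4 | h4 <;> omega)

/-- lift a choice function on the `-1` entries to a total one -/
def sLift (B : Matrix (Fin (n+1)) (Fin (n+1)) ℤ)
    (σ : {p : Fin (n+1) × Fin (n+1) // B p.1 p.2 = -1} → Bool) (i j : ℕ) : Bool :=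
  if h : i < n+1 ∧ j < n+1 then
    (if h2 : B ⟨i, h.1⟩ ⟨j, h.2⟩ = -1 then σ ⟨(⟨i, h.1⟩, ⟨j, h.2⟩), h2⟩ else false)
  else false

noncomputable def fiberEquiv {B : Matrix (Fin (n+1)) (Fin (n+1)) ℤ} (hB : IsASM B) :
    {T : Set Domino // IsTiling n T ∧ asmF n T = B} ≃
      ({p : Fin (n+1) × Fin (n+1) // B p.1 p.2 = -1} → Bool) where
  toFun T p := sOf n T.1 p.1.1.val p.1.2.val
  invFun σ := ⟨Tmk n B (sLift B σ), Tmk_isTiling hB, asmF_Tmk hB⟩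
  left_inv := by
    rintro ⟨T, hT, hA⟩
    apply Subtype.ext
    show Tmk n B _ = T
    have e1 := Tmk_recover hT
    rw [hA] at e1
    conv_rhs => rw [e1]
    apply Tmk_congr
    intro i j hi hj hm
    unfold sLift
    have hm' : B ⟨i, by omega⟩ ⟨j, by omega⟩ = -1 := by
      rw [← Bx_eq (B := B) hi hj]; exact hm
    rw [dif_pos ⟨by omega, by omega⟩, dif_pos hm']
  right_inv := by
    intro σ
    funext p
    show sOf n (Tmk n B (sLift B σ)) p.1.1.val p.1.2.val = σ p
    have hi : p.1.1.val ≤ n := by omega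
    have hj : p.1.2.val ≤ n := by omega
    have hm : Bx n B p.1.1.val p.1.2.val = -1 := by
      rw [Bx_eq hi hj]; exact p.2
    rw [sOf_Tmk hB hi hj hm]
    unfold sLift
    rw [dif_pos ⟨p.1.1.isLt, p.1.2.isLt⟩, dif_pos (show B _ _ = -1 from p.2)]

noncomputable def tilingEquiv (n : ℕ) : {T : Set Domino // IsTiling n T} ≃
    Σ B : {B : Matrix (Fin (n+1)) (Fin (n+1)) ℤ // IsASM B},
      {T : Set Domino // IsTiling n T ∧ asmF n T = B.1} where
  toFun T := ⟨⟨asmF n T.1, asmF_isASM T.2⟩, ⟨T.1, T.2, rfl⟩⟩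
  invFun p := ⟨p.2.1, p.2.2.1⟩
  left_inv T := rfl
  right_inv := by
    rintro ⟨⟨B, hB⟩, T, hT, hA⟩
    have hA' : asmF n T = B := hA
    subst hA'
    rfl

end

open Classical in
/-- The number of domino tilings of the Aztec diamond of order `n` equals
`Σ_B 2^{N₋(B)}`, the sum over all `(n+1)×(n+1)` alternating sign matrices `B` of
`2` to the number of `-1` entries of `B`. -/
theorem aztec_count_eq_sum_Nminus (n : ℕ) :
    Nat.card {T : Set Domino // IsTiling n T} =
      ∑ᶠ B : Matrix (Fin (n + 1)) (Fin (n + 1)) ℤ,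
        (if IsASM B then 2 ^ Nminus B else 0) := by
  haveI hfinA : Finite {B : Matrix (Fin (n+1)) (Fin (n+1)) ℤ // IsASM B} := asm_finite n
  haveI : Fintype {B : Matrix (Fin (n+1)) (Fin (n+1)) ℤ // IsASM B} := Fintype.ofFinite _
  haveI hFib : ∀ B : {B : Matrix (Fin (n+1)) (Fin (n+1)) ℤ // IsASM B},
      Fintype {T : Set Domino // IsTiling n T ∧ asmF n T = B.1} :=
    fun B => Fintype.ofEquiv _ (fiberEquiv B.2).symm
  rw [Nat.card_congr (tilingEquiv n), Nat.card_eq_fintype_card, Fintype.card_sigma]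
  have hfib : ∀ B : {B : Matrix (Fin (n+1)) (Fin (n+1)) ℤ // IsASM B},
      Fintype.card {T : Set Domino // IsTiling n T ∧ asmF n T = B.1} = 2 ^ Nminus B.1 := by
    intro B
    rw [← Nat.card_eq_fintype_card, Nat.card_congr (fiberEquiv B.2), Nat.card_fun]
    have h1 : Nat.card Bool = 2 := by
      rw [Nat.card_eq_fintype_card]; rfl
    have h2 : Nat.card {p : Fin (n+1) × Fin (n+1) // B.1 p.1 p.2 = -1} = Nminus B.1 := by
      rw [Nat.card_eq_fintype_card, Fintype.card_subtype]
      unfold Nminus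
      congr 1
    rw [h1, h2]
  rw [Finset.sum_congr rfl (fun B _ => hfib B)]
  -- now handle the finsum on the right
  set SF : Finset (Matrix (Fin (n+1)) (Fin (n+1)) ℤ) :=
    Finset.image Subtype.val
      (Finset.univ : Finset {B : Matrix (Fin (n+1)) (Fin (n+1)) ℤ // IsASM B}) with hSF
  have hmem : ∀ B, B ∈ SF ↔ IsASM B := by
    intro B
    rw [hSF, Finset.mem_image]
    constructor
    · rintro ⟨a, _, rfl⟩; exact a.2
    · intro h; exact ⟨⟨B, h⟩, Finset.mem_univ _, rfl⟩
  rw [finsum_eq_sum_of_support_subset _ (s := SF) (by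
    intro B hB
    rw [Function.mem_support] at hB
    rw [Finset.mem_coe, hmem]
    by_contra h
    rw [if_neg h] at hB
    exact hB rfl)]
  rw [Finset.sum_image (by intro x _ y _ h; exact Subtype.ext h)]
  exact (Finset.sum_congr rfl (fun B _ => by rw [if_pos B.2])).symm
end
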